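/- arXiv:2506.16171 — 11 statements merged into one kernel-verified Lean document; each statement's English description precedes it below -/
import Mathlib

section
/- Let D be a digraph on a finite vertex set V, let w : V → ℕ be a weight function, and let X ⊆ V be nonempty. Let D' be the digraph obtained from D by contracting X into a new vertex v_X, i.e. the digraph on vertex set (V ∖ X) ∪ {v_X} in which, for u, u' ∈ V ∖ X, (u,u') is an arc of D' iff it is an arc of D, (u, v_X) is an arc of D' iff (u,x) is an arc of D for some x ∈ X, and (v_X, u) is an arc of D' iff (x,u) is an arc of D for some x ∈ X. Define w' on V(D') by w'(v_X) = ∑_{x∈X} w(x) and w'(u) = w(u) for u ∈ V ∖ X. Then R(D',w') ≥ R(D,w). Moreover, if the induced subdigraph D[X] is strongly connected (every vertex of X is reachable from every other vertex of X using only arcs with both endpoints in X), then R(D',w') = R(D,w). -/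
open Finset

variable {V : Type*}

-- `kappa A u v = 1` if `v` is reachable from `u`, and `0` otherwise.
open Classical in
noncomputable def kappa (A : V → V → Prop) (u v : V) : ℕ :=
  if Relation.ReflTransGen A u v then 1 else 0

/-- `R(D, w) = 2 ∑_v C(w(v), 2) + ∑_{(u,v), u ≠ v} w(u) w(v) κ_D(u,v)`. -/
noncomputable def Rw [Fintype V] [DecidableEq V] (A : V → V → Prop) (w : V → ℕ) : ℕ :=
  2 * ∑ v, Nat.choose (w v) 2 +
    ∑ p ∈ Finset.univ.offDiag, w p.1 * w p.2 * kappa A p.1 p.2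

/-- The arc relation of the digraph obtained by contracting `X` into a new vertex
(the `Sum.inr` vertex). -/
def contractArcs (A : V → V → Prop) (X : Finset V) :
    ({v : V // v ∉ X} ⊕ Unit) → ({v : V // v ∉ X} ⊕ Unit) → Prop
  | Sum.inl u, Sum.inl u' => A u.1 u'.1
  | Sum.inl u, Sum.inr _ => ∃ x ∈ X, A u.1 x
  | Sum.inr _, Sum.inl u' => ∃ x ∈ X, A x u'.1
  | Sum.inr _, Sum.inr _ => False

/-- The contracted weight function: the new vertex gets the total weight of `X`. -/
def contractW (w : V → ℕ) (X : Finset V) : ({v : V // v ∉ X} ⊕ Unit) → ℕ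
  | Sum.inl u => w u.1
  | Sum.inr _ => ∑ x ∈ X, w x

/-!
Both sides are read as quadratic forms: adding `∑ w` to `R(D, w)` gives
`∑_{a,b} w(a) w(b) κ_D(a,b)`, the diagonal terms `w(v)²` absorbing `2 C(w(v),2) + w(v)`.
Since `w'` is the pushforward of `w` along the quotient map `π = contractMap X`, the form of
`(D', w')` is `∑_{a,b} w(a) w(b) κ_{D'}(π a, π b)`. Paths of `D` map to paths of `D'`, so
`κ_D(a,b) ≤ κ_{D'}(π a, π b)`; if the vertices of `X` are mutually reachable, a path of `D'`
lifts back to `D` by re-entering `X` anywhere and walking inside it, which gives equality.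
-/

open Relation

lemma two_mul_choose_two_add_self (m : ℕ) : 2 * m.choose 2 + m = m * m := by
  cases m with
  | zero => rfl
  | succ n =>
    rw [Nat.choose_two_right, Nat.two_mul_div_two_of_even (Nat.even_mul_pred_self _),
      Nat.succ_sub_one]
    ring

section Kappa

variable {W : Type*} {A : V → V → Prop} {B : W → W → Prop}

lemma kappa_self (a : V) : kappa A a a = 1 := if_pos .refl

lemma kappa_le_kappa {a b : V} {c d : W} (h : ReflTransGen A a b → ReflTransGen B c d) :
    kappa A a b ≤ kappa B c d := by
  unfold kappa
  split_ifs <;> simp_all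

lemma kappa_congr {a b : V} {c d : W} (h : ReflTransGen A a b ↔ ReflTransGen B c d) :
    kappa A a b = kappa B c d := by
  unfold kappa
  split_ifs <;> simp_all

lemma Rw_add_sum_eq [Fintype V] [DecidableEq V] (A : V → V → Prop) (w : V → ℕ) :
    Rw A w + ∑ v, w v = ∑ a, ∑ b, w a * w b * kappa A a b := by
  rw [← Fintype.sum_prod_type', ← univ_product_univ, ← diag_union_offDiag,
    sum_union (disjoint_diag_offDiag _), sum_diag]
  simp only [kappa_self, mul_one]
  have hdiag : 2 * ∑ v, (w v).choose 2 + ∑ v, w v = ∑ v, w v * w v := by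
    rw [mul_sum, ← sum_add_distrib]
    exact sum_congr rfl fun v _ => two_mul_choose_two_add_self (w v)
  unfold Rw
  omega

end Kappa

section Pushforward

variable {W R : Type*} [Fintype V] [Fintype W] [DecidableEq W] [CommSemiring R]
  {π : V → W} {w : V → R} {w' : W → R}

lemma sum_mul_eq_sum_mul_comp (hw' : ∀ β, w' β = ∑ a with π a = β, w a) (F : W → R) :
    ∑ β, w' β * F β = ∑ a, w a * F (π a) := by
  simp only [hw', sum_mul]
  rw [← sum_fiberwise univ π fun a => w a * F (π a)]
  exact sum_congr rfl fun β _ => sum_congr rfl fun a ha => by rw [(mem_filter.1 ha).2]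

lemma sum_sum_mul_mul_eq_comp (hw' : ∀ β, w' β = ∑ a with π a = β, w a) (K : W → W → R) :
    ∑ α, ∑ β, w' α * w' β * K α β = ∑ a, ∑ b, w a * w b * K (π a) (π b) :=
  calc ∑ α, ∑ β, w' α * w' β * K α β
      = ∑ α, w' α * ∑ β, w' β * K α β := by simp only [mul_sum, mul_assoc]
    _ = ∑ α, w' α * ∑ b, w b * K α (π b) := by simp only [sum_mul_eq_sum_mul_comp hw']
    _ = ∑ a, w a * ∑ b, w b * K (π a) (π b) := sum_mul_eq_sum_mul_comp hw' _
    _ = ∑ a, ∑ b, w a * w b * K (π a) (π b) := by simp only [mul_sum, mul_assoc]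

end Pushforward

section Contraction

variable [DecidableEq V] {A : V → V → Prop} {X : Finset V} {a b : V}

def contractMap (X : Finset V) (a : V) : {v : V // v ∉ X} ⊕ Unit :=
  if h : a ∈ X then Sum.inr () else Sum.inl ⟨a, h⟩

lemma contractMap_eq_inr_iff {t : Unit} : contractMap X a = Sum.inr t ↔ a ∈ X := by
  unfold contractMap
  split_ifs <;> simp_all

lemma contractMap_eq_inl_iff {u : {v : V // v ∉ X}} : contractMap X a = Sum.inl u ↔ a = u.1 := by
  unfold contractMap
  split_ifs with h
  · simp only [false_iff]
    exact fun hau => u.2 (hau ▸ h)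
  · simp only [Sum.inl.injEq, Subtype.ext_iff]

lemma reflTransGen_contractArcs_of_adj (h : A a b) :
    ReflTransGen (contractArcs A X) (contractMap X a) (contractMap X b) := by
  unfold contractMap
  by_cases ha : a ∈ X <;> by_cases hb : b ∈ X <;> simp only [ha, hb, dite_true, dite_false]
  · exact .refl
  · exact .single ⟨a, ha, h⟩
  · exact .single ⟨b, hb, h⟩
  · exact .single h

lemma Relation.ReflTransGen.contractArcs (h : ReflTransGen A a b) :
    ReflTransGen (contractArcs A X) (contractMap X a) (contractMap X b) :=
  ReflTransGen.lift' _ (fun _ _ => reflTransGen_contractArcs_of_adj) _ _ h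

variable (hX : ∀ x ∈ X, ∀ y ∈ X, ReflTransGen A x y)
include hX

lemma reflTransGen_of_contractMap_eq (h : contractMap X a = contractMap X b) :
    ReflTransGen A a b := by
  by_cases ha : a ∈ X
  · rw [contractMap_eq_inr_iff (t := ()) |>.2 ha, eq_comm, contractMap_eq_inr_iff] at h
    exact hX a ha b h
  · rw [contractMap, dif_neg ha, eq_comm, contractMap_eq_inl_iff] at h
    exact h ▸ .refl

lemma exists_reflTransGen_of_contractArcs {γ δ} (h : contractArcs A X γ δ) {d : V}
    (hd : contractMap X d = δ) : ∃ c, contractMap X c = γ ∧ ReflTransGen A c d := by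
  match γ, δ, h with
  | .inl u, .inl u', h =>
    exact ⟨u, contractMap_eq_inl_iff.2 rfl, contractMap_eq_inl_iff.1 hd ▸ .single h⟩
  | .inl u, .inr _, ⟨x, hx, hux⟩ =>
    exact ⟨u, contractMap_eq_inl_iff.2 rfl, .head hux (hX x hx d (contractMap_eq_inr_iff.1 hd))⟩
  | .inr _, .inl u', ⟨x, hx, hxu⟩ =>
    exact ⟨x, contractMap_eq_inr_iff.2 hx, contractMap_eq_inl_iff.1 hd ▸ .single hxu⟩

lemma reflTransGen_contractArcs_iff :
    ReflTransGen (contractArcs A X) (contractMap X a) (contractMap X b) ↔ ReflTransGen A a b := by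
  refine ⟨fun h => ?_, ReflTransGen.contractArcs⟩
  suffices ∀ β, ReflTransGen (contractArcs A X) (contractMap X a) β →
      ∀ b, contractMap X b = β → ReflTransGen A a b from this _ h b rfl
  intro β hβ
  induction hβ with
  | refl => exact fun b hb => reflTransGen_of_contractMap_eq hX hb.symm
  | tail _ hstep ih =>
    intro b hb
    obtain ⟨c, hc, hcb⟩ := exists_reflTransGen_of_contractArcs hX hstep hb
    exact (ih c hc).trans hcb

end Contraction

lemma contractW_eq_sum_fiber [Fintype V] [DecidableEq V] (w : V → ℕ) (X : Finset V)
    (β : {v : V // v ∉ X} ⊕ Unit) : contractW w X β = ∑ a with contractMap X a = β, w a := by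
  cases β with
  | inl u => simp [contractMap_eq_inl_iff, contractW, filter_eq']
  | inr t => simp [contractMap_eq_inr_iff, contractW]

lemma Rw_contract_add_sum [Fintype V] [DecidableEq V] (A : V → V → Prop) (w : V → ℕ)
    (X : Finset V) :
    Rw (contractArcs A X) (contractW w X) + ∑ v, w v =
      ∑ a, ∑ b, w a * w b * kappa (contractArcs A X) (contractMap X a) (contractMap X b) := by
  have hw := contractW_eq_sum_fiber w X
  have htotal : ∑ β, contractW w X β = ∑ v, w v := by
    simpa using sum_mul_eq_sum_mul_comp hw fun _ => 1
  rw [← htotal, Rw_add_sum_eq, sum_sum_mul_mul_eq_comp hw]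

theorem stmt0_general {V : Type*} [Fintype V] [DecidableEq V]
    (A : V → V → Prop) (w : V → ℕ)
    (X : Finset V) :
    Rw A w ≤ Rw (contractArcs A X) (contractW w X) ∧
      ((∀ x ∈ X, ∀ y ∈ X,
          Relation.ReflTransGen (fun a b => a ∈ X ∧ b ∈ X ∧ A a b) x y) →
        Rw (contractArcs A X) (contractW w X) = Rw A w) := by
  have hD := Rw_add_sum_eq A w
  have hD' := Rw_contract_add_sum A w X
  refine ⟨?_, fun hSC => ?_⟩
  · have : ∑ a, ∑ b, w a * w b * kappa A a b ≤
        ∑ a, ∑ b, w a * w b * kappa (contractArcs A X) (contractMap X a) (contractMap X b) :=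
      sum_le_sum fun a _ => sum_le_sum fun b _ =>
        Nat.mul_le_mul_left _ (kappa_le_kappa ReflTransGen.contractArcs)
    omega
  · have hX : ∀ x ∈ X, ∀ y ∈ X, ReflTransGen A x y := fun x hx y hy =>
      ReflTransGen.mono (fun _ _ h => h.2.2) _ _ (hSC x hx y hy)
    have : ∑ a, ∑ b, w a * w b * kappa (contractArcs A X) (contractMap X a) (contractMap X b) =
        ∑ a, ∑ b, w a * w b * kappa A a b :=
      sum_congr rfl fun a _ => sum_congr rfl fun b _ => by
        rw [kappa_congr (reflTransGen_contractArcs_iff hX)]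
    omega

theorem stmt0 {V : Type*} [Fintype V] [DecidableEq V]
    (A : V → V → Prop) (hA : ∀ v, ¬ A v v) (w : V → ℕ)
    (X : Finset V) (hX : X.Nonempty) :
    Rw A w ≤ Rw (contractArcs A X) (contractW w X) ∧
      ((∀ x ∈ X, ∀ y ∈ X,
          Relation.ReflTransGen (fun a b => a ∈ X ∧ b ∈ X ∧ A a b) x y) →
        Rw (contractArcs A X) (contractW w X) = Rw A w) :=
  stmt0_general A w X
end

section
/- Let X be a finite set of boolean variables and let 𝒞 be a finite multiset of clauses, where each clause consists of exactly two literals over two distinct variables of X (a literal is a variable x or its negation ¬x). Then there exists an assignment φ : X → {True, False} such that the number of clauses of 𝒞 satisfied by φ is at least (3/4)·|𝒞|, i.e. 4·#{C ∈ 𝒞 : φ satisfies C} ≥ 3·|𝒞|. -/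
open Finset

section Aux
variable {X : Type*} [Fintype X] [DecidableEq X]

private def Sset (x₁ x₂ : X) (a b : Bool) : Finset (X → Bool) :=
  univ.filter fun φ => φ x₁ = a ∧ φ x₂ = b

private lemma flip1 (x₁ x₂ : X) (h : x₁ ≠ x₂) (a b : Bool) :
    (Sset x₁ x₂ a b).card = (Sset x₁ x₂ (!a) b).card := by
  refine Finset.card_bij' (fun φ _ => Function.update φ x₁ (!(φ x₁)))
    (fun φ _ => Function.update φ x₁ (!(φ x₁))) ?_ ?_ ?_ ?_
  · intro φ hφ
    simp only [Sset, mem_filter, mem_univ, true_and] at hφ ⊢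
    rw [Function.update_self, Function.update_of_ne (Ne.symm h)]
    exact ⟨by rw [hφ.1], hφ.2⟩
  · intro φ hφ
    simp only [Sset, mem_filter, mem_univ, true_and] at hφ ⊢
    rw [Function.update_self, Function.update_of_ne (Ne.symm h)]
    exact ⟨by rw [hφ.1, Bool.not_not], hφ.2⟩
  · intro φ _
    funext y
    by_cases hy : y = x₁ <;> simp [hy]
  · intro φ _
    funext y
    by_cases hy : y = x₁ <;> simp [hy]

private lemma flip2 (x₁ x₂ : X) (h : x₁ ≠ x₂) (a b : Bool) :
    (Sset x₁ x₂ a b).card = (Sset x₁ x₂ a (!b)).card := by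
  refine Finset.card_bij' (fun φ _ => Function.update φ x₂ (!(φ x₂)))
    (fun φ _ => Function.update φ x₂ (!(φ x₂))) ?_ ?_ ?_ ?_
  · intro φ hφ
    simp only [Sset, mem_filter, mem_univ, true_and] at hφ ⊢
    rw [Function.update_self, Function.update_of_ne h]
    exact ⟨hφ.1, by rw [hφ.2]⟩
  · intro φ hφ
    simp only [Sset, mem_filter, mem_univ, true_and] at hφ ⊢
    rw [Function.update_self, Function.update_of_ne h]
    exact ⟨hφ.1, by rw [hφ.2, Bool.not_not]⟩
  · intro φ _
    funext y
    by_cases hy : y = x₂ <;> simp [hy]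
  · intro φ _
    funext y
    by_cases hy : y = x₂ <;> simp [hy]

private lemma Sset_card_const (x₁ x₂ : X) (h : x₁ ≠ x₂) (a b a' b' : Bool) :
    (Sset x₁ x₂ a b).card = (Sset x₁ x₂ a' b').card := by
  have key : ∀ a b : Bool, (Sset x₁ x₂ a b).card = (Sset x₁ x₂ true true).card := by
    intro a b
    cases a <;> cases b
    · rw [flip1 x₁ x₂ h, flip2 x₁ x₂ h]; simp
    · rw [flip1 x₁ x₂ h]; simp
    · rw [flip2 x₁ x₂ h]; simp
    · rfl
  rw [key a b, key a' b']

private lemma key_count (x₁ x₂ : X) (h : x₁ ≠ x₂) (b₁ b₂ : Bool) :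
    4 * (univ.filter fun φ : X → Bool => φ x₁ = b₁ ∨ φ x₂ = b₂).card
      = 3 * Fintype.card (X → Bool) := by
  have hcompl : (univ.filter fun φ : X → Bool => φ x₁ = b₁ ∨ φ x₂ = b₂).card
      + (Sset x₁ x₂ (!b₁) (!b₂)).card = Fintype.card (X → Bool) := by
    have : Sset x₁ x₂ (!b₁) (!b₂)
        = univ.filter fun φ : X → Bool => ¬(φ x₁ = b₁ ∨ φ x₂ = b₂) := by
      unfold Sset
      apply Finset.filter_congr
      intro φ _
      cases hb1 : φ x₁ <;> cases hb2 : φ x₂ <;> cases b₁ <;> cases b₂ <;> simp_all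
    rw [this, Finset.card_filter_add_card_filter_not, Finset.card_univ]
  -- partition into four pieces
  have hpart : Fintype.card (X → Bool)
      = (Sset x₁ x₂ b₁ b₂).card + (Sset x₁ x₂ b₁ (!b₂)).card
        + (Sset x₁ x₂ (!b₁) b₂).card + (Sset x₁ x₂ (!b₁) (!b₂)).card := by
    have h1 : ((univ : Finset (X → Bool)).filter fun φ => φ x₁ = b₁).card
        + ((univ : Finset (X → Bool)).filter fun φ => φ x₁ = !b₁).card
        = Fintype.card (X → Bool) := by
      have e : ((univ : Finset (X → Bool)).filter fun φ => φ x₁ = !b₁)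
          = (univ : Finset (X → Bool)).filter fun φ => ¬(φ x₁ = b₁) := by
        apply Finset.filter_congr
        intro φ _
        cases hb : φ x₁ <;> cases b₁ <;> simp_all
      rw [e, Finset.card_filter_add_card_filter_not, Finset.card_univ]
    have h2 : ∀ a : Bool, ((univ : Finset (X → Bool)).filter fun φ => φ x₁ = a).card
        = (Sset x₁ x₂ a b₂).card + (Sset x₁ x₂ a (!b₂)).card := by
      intro a
      have e1 : Sset x₁ x₂ a b₂
          = ((univ : Finset (X → Bool)).filter fun φ => φ x₁ = a).filter
              fun φ => φ x₂ = b₂ := by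
        unfold Sset
        rw [Finset.filter_filter]
      have e2 : Sset x₁ x₂ a (!b₂)
          = ((univ : Finset (X → Bool)).filter fun φ => φ x₁ = a).filter
              fun φ => ¬(φ x₂ = b₂) := by
        unfold Sset
        rw [Finset.filter_filter]
        apply Finset.filter_congr
        intro φ _
        cases hb : φ x₂ <;> cases b₂ <;> simp_all
      rw [e1, e2, Finset.card_filter_add_card_filter_not]
    rw [← h1, h2 b₁, h2 (!b₁)]
    ring
  have e1 : (Sset x₁ x₂ b₁ b₂).card = (Sset x₁ x₂ (!b₁) (!b₂)).card :=
    Sset_card_const x₁ x₂ h _ _ _ _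
  have e2 : (Sset x₁ x₂ b₁ (!b₂)).card = (Sset x₁ x₂ (!b₁) (!b₂)).card :=
    Sset_card_const x₁ x₂ h _ _ _ _
  have e3 : (Sset x₁ x₂ (!b₁) b₂).card = (Sset x₁ x₂ (!b₁) (!b₂)).card :=
    Sset_card_const x₁ x₂ h _ _ _ _
  linarith

private lemma sum_eq (C : Multiset ((X × Bool) × (X × Bool)))
    (hC : ∀ c ∈ C, c.1.1 ≠ c.2.1) :
    ∑ φ : X → Bool,
        4 * Multiset.card (C.filter fun c => φ c.1.1 = c.1.2 ∨ φ c.2.1 = c.2.2)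
      = 3 * Fintype.card (X → Bool) * Multiset.card C := by
  induction C using Multiset.induction with
  | empty => simp
  | cons c C ih =>
    have hc : c.1.1 ≠ c.2.1 := hC c (Multiset.mem_cons_self c C)
    have ih' := ih (fun d hd => hC d (Multiset.mem_cons_of_mem hd))
    have hstep : ∀ φ : X → Bool,
        Multiset.card ((c ::ₘ C).filter fun d => φ d.1.1 = d.1.2 ∨ φ d.2.1 = d.2.2)
        = (if φ c.1.1 = c.1.2 ∨ φ c.2.1 = c.2.2 then 1 else 0)
          + Multiset.card (C.filter fun d => φ d.1.1 = d.1.2 ∨ φ d.2.1 = d.2.2) := by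
      intro φ
      rw [Multiset.filter_cons, Multiset.card_add]
      congr 1
      split <;> simp
    calc ∑ φ : X → Bool,
          4 * Multiset.card ((c ::ₘ C).filter fun d => φ d.1.1 = d.1.2 ∨ φ d.2.1 = d.2.2)
        = ∑ φ : X → Bool, (4 * (if φ c.1.1 = c.1.2 ∨ φ c.2.1 = c.2.2 then 1 else 0)
            + 4 * Multiset.card (C.filter fun d => φ d.1.1 = d.1.2 ∨ φ d.2.1 = d.2.2)) := by
          apply Finset.sum_congr rfl
          intro φ _
          rw [hstep φ]
          ring
      _ = 4 * (univ.filter fun φ : X → Bool => φ c.1.1 = c.1.2 ∨ φ c.2.1 = c.2.2).card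
            + 3 * Fintype.card (X → Bool) * Multiset.card C := by
          rw [Finset.sum_add_distrib, ih', ← Finset.mul_sum, Finset.card_filter]
      _ = 3 * Fintype.card (X → Bool) * Multiset.card (c ::ₘ C) := by
          rw [key_count c.1.1 c.2.1 hc c.1.2 c.2.2, Multiset.card_cons]
          ring

end Aux

/-- 3BMax2Sat lower bound: for any collection of 2-clauses (each clause a pair of
literals over two distinct variables, a literal being a variable together with a
polarity), some assignment satisfies at least 3/4 of the clauses.
A clause `((x₁, b₁), (x₂, b₂))` is satisfied by `φ` iff `φ x₁ = b₁` or `φ x₂ = b₂`. -/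
theorem stmt1 (X : Type*) [Fintype X]
    (C : Multiset ((X × Bool) × (X × Bool)))
    (hC : ∀ c ∈ C, c.1.1 ≠ c.2.1) :
    ∃ φ : X → Bool,
      3 * Multiset.card C ≤
        4 * Multiset.card (C.filter fun c => φ c.1.1 = c.1.2 ∨ φ c.2.1 = c.2.2) := by
  classical
  have hsum := sum_eq C hC
  have hconst : ∑ φ : X → Bool, 3 * Multiset.card C
      = 3 * Fintype.card (X → Bool) * Multiset.card C := by
    rw [Finset.sum_const, Finset.card_univ, smul_eq_mul]
    ring
  have hne : (univ : Finset (X → Bool)).Nonempty := univ_nonempty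
  obtain ⟨φ, _, hφ⟩ := Finset.exists_le_of_sum_le hne (le_of_eq (hconst.trans hsum.symm))
  exact ⟨φ, hφ⟩
end

section
/- Let T be a finite tree (a nonempty connected acyclic simple graph) and let X ⊆ V(T). Then there exists a set F ⊆ E(T) with |F| ≤ 5·|X| that is dismembering for (T,X). -/
variable {V : Type*}

/-- The set of endpoints of edges of `F`. -/
def edgeVerts (F : Finset (Sym2 V)) : Set V := {v | ∃ e ∈ F, v ∈ e}

/-- `F` is dismembering for `(G, X)`: every connected component of `G` minus the
edges of `F` either contains at most one vertex of `X ∪ V(F)`, or contains no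
vertex of `X` and exactly two vertices of `V(F)`, each incident to exactly one
edge of `F`. -/
def IsDismembering [DecidableEq V] (G : SimpleGraph V) (X : Set V)
    (F : Finset (Sym2 V)) : Prop :=
  ∀ c : (G.deleteEdges (F : Set (Sym2 V))).ConnectedComponent,
    (c.supp ∩ (X ∪ edgeVerts F)).Subsingleton ∨
      (c.supp ∩ X = ∅ ∧
        ∃ a b : V, a ≠ b ∧ c.supp ∩ edgeVerts F = {a, b} ∧
          (F.filter fun e => a ∈ e).card = 1 ∧
          (F.filter fun e => b ∈ e).card = 1)

/-!
Induction on `X`, the tree staying fixed. Call the vertices of `X ∪ V(F)` marks, and a mark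
outside `X` lying on exactly one edge of `F` an end mark. Deleting one more edge `ab` of the
forest `T ∖ F` splits one component into the side of `a` and the side of `b`; the enlarged set is
still dismembering if on each side the marks other than its endpoint of `ab` consist of at most
one end mark. To add a vertex `x` to `X`: if the component of `x` has two end marks `α` and `β`,
two such cuts at the median of `x`, `α`, `β` (toward `α`, then toward `β`) leave `x` with a single
mark; one more cut makes that mark `x` itself or an end mark, and a final cut at `x` toward it
separates the two. Each vertex of `X` thus costs at most four edges.
-/

open SimpleGraph

namespace SimpleGraph

variable {G H : SimpleGraph V} {S : Set (Sym2 V)} {a b c x y z : V}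

theorem deleteEdges_insert (e : Sym2 V) (S : Set (Sym2 V)) :
    G.deleteEdges (insert e S) = (G.deleteEdges S).deleteEdges {e} := by
  rw [deleteEdges_deleteEdges, Set.union_singleton]

theorem IsAcyclic.not_reachable_deleteEdges_insert (hG : G.IsAcyclic)
    (h : (G.deleteEdges S).Adj a b) : ¬(G.deleteEdges (insert s(a, b) S)).Reachable a b := by
  rw [deleteEdges_insert]
  exact isAcyclic_iff_forall_adj_isBridge.mp (hG.anti (deleteEdges_le S)) h

theorem Reachable.deleteEdges_singleton_or (h : H.Reachable a y) (b : V) :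
    (H.deleteEdges {s(a, b)}).Reachable a y ∨ (H.deleteEdges {s(a, b)}).Reachable b y := by
  rw [reachable_eq_reflTransGen] at h
  induction h with
  | refl => exact Or.inl .rfl
  | @tail y z _ hyz ih =>
    by_cases he : s(y, z) = s(a, b)
    · rcases Sym2.eq_iff.mp he with ⟨-, rfl⟩ | ⟨-, rfl⟩
      exacts [Or.inr .rfl, Or.inl .rfl]
    · have hyz' : (H.deleteEdges {s(a, b)}).Adj y z := (deleteEdges_adj ..).mpr ⟨hyz, he⟩
      exact ih.imp (·.trans hyz'.reachable) (·.trans hyz'.reachable)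

theorem Reachable.deleteEdges_singleton_of_not_reachable (h : H.Reachable y z)
    (ha : ¬H.Reachable y a) (b : V) : (H.deleteEdges {s(a, b)}).Reachable y z := by
  rw [reachable_eq_reflTransGen] at h
  induction h with
  | refl => exact .rfl
  | @tail z w hyz hzw ih =>
    refine ih.trans (Adj.reachable ((deleteEdges_adj ..).mpr ⟨hzw, fun he => ?_⟩))
    have hyz' : H.Reachable y z := by rw [reachable_eq_reflTransGen]; exact hyz
    rcases Sym2.eq_iff.mp he with ⟨rfl, -⟩ | ⟨-, rfl⟩
    exacts [ha hyz', ha (hyz'.trans hzw.reachable)]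

theorem Reachable.exists_isPath_deleteEdges (h : (G.deleteEdges S).Reachable a b) :
    ∃ p : G.Walk a b, p.IsPath ∧ ∀ e ∈ p.edges, e ∉ S := by
  obtain ⟨p, hp⟩ := h.exists_isPath
  refine ⟨p.mapLe (deleteEdges_le S), hp.mapLe _, fun e he => ?_⟩
  rw [Walk.edges_mapLe_eq_edges] at he
  exact ((edgeSet_deleteEdges S ▸ p.edges_subset_edgeSet he : e ∈ G.edgeSet \ S)).2

theorem Walk.reachable_deleteEdges_insert_of_isPath_cons {h : G.Adj a b} {q : G.Walk b y}
    (hp : (Walk.cons h q).IsPath) (hq : ∀ e ∈ q.edges, e ∉ S) :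
    (G.deleteEdges (insert s(a, b) S)).Reachable b y := by
  refine ⟨q.toDeleteEdges _ fun e he hmem => ?_⟩
  rcases hmem with rfl | hS
  · exact ((Walk.cons_isPath_iff _ _).mp hp).2 (q.fst_mem_support_of_mem_edges he)
  · exact hq e he hS

theorem Reachable.exists_adj_deleteEdges_insert (h : (G.deleteEdges S).Reachable a y)
    (hay : a ≠ y) :
    ∃ b, (G.deleteEdges S).Adj a b ∧ (G.deleteEdges (insert s(a, b) S)).Reachable b y := by
  obtain ⟨p, hp, hpS⟩ := h.exists_isPath_deleteEdges
  cases p with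
  | nil => exact absurd rfl hay
  | cons hab q =>
    exact ⟨_, (deleteEdges_adj ..).mpr ⟨hab, hpS _ (by simp)⟩,
      Walk.reachable_deleteEdges_insert_of_isPath_cons hp fun e he => hpS e (by simp [he])⟩

theorem Walk.exists_mem_support_reachable_deleteEdges (p : G.Walk x a)
    (hp : ∀ e ∈ p.edges, e ∉ S) (q : G.Walk b c) (ha : a ∈ q.support) :
    ∃ m ∈ q.support, (G.deleteEdges (S ∪ {e | e ∈ q.edges})).Reachable x m := by
  induction p with
  | nil => exact ⟨_, ha, .rfl⟩
  | @cons x y a hxy p ih =>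
    by_cases hx : x ∈ q.support
    · exact ⟨x, hx, .rfl⟩
    obtain ⟨m, hm, hym⟩ := ih (fun e he => hp e (by simp [he])) ha
    refine ⟨m, hm, Adj.reachable ((deleteEdges_adj ..).mpr ⟨hxy, ?_⟩) |>.trans hym⟩
    rintro (hS | hq)
    · exact hp _ (by simp) hS
    · exact hx (q.fst_mem_support_of_mem_edges hq)

theorem exists_median (hxa : (G.deleteEdges S).Reachable x a)
    (hab : (G.deleteEdges S).Reachable a b) :
    ∃ m, ∃ (qa : G.Walk m a) (qb : G.Walk m b), qa.IsPath ∧ qb.IsPath ∧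
      (∀ e ∈ qa.edges, e ∉ S ∧ e ∉ qb.edges) ∧ (∀ e ∈ qb.edges, e ∉ S) ∧
      (G.deleteEdges (S ∪ {e | e ∈ qa.edges} ∪ {e | e ∈ qb.edges})).Reachable x m := by
  obtain ⟨p, hp, hpS⟩ := hab.exists_isPath_deleteEdges
  obtain ⟨w, -, hwS⟩ := hxa.exists_isPath_deleteEdges
  obtain ⟨m, hm, hxm⟩ := w.exists_mem_support_reachable_deleteEdges hwS p p.start_mem_support
  obtain ⟨p₁, p₂, rfl⟩ := Walk.mem_support_iff_exists_append.mp hm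
  have hnodup := hp.edges_nodup
  rw [Walk.edges_append] at hnodup
  refine ⟨m, p₁.reverse, p₂, hp.of_append_left.reverse, hp.of_append_right, fun e he => ?_,
    fun e he => hpS e (by simp [he]), ?_⟩
  · rw [Walk.edges_reverse, List.mem_reverse] at he
    exact ⟨hpS e (by simp [he]), List.disjoint_of_nodup_append hnodup he⟩
  · convert hxm using 2
    ext e
    simp [Walk.edges_append, or_assoc]

end SimpleGraph

namespace Dismembering

variable {G : SimpleGraph V} {X S : Set V} {F : Finset (Sym2 V)} {a b m s t v w x y : V}

def component (G : SimpleGraph V) (F : Finset (Sym2 V)) (x : V) : Set V :=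
  {y | (G.deleteEdges F).Reachable x y}

theorem component_eq (h : (G.deleteEdges F).Reachable x y) :
    component G F y = component G F x := by
  ext z
  exact ⟨h.trans, h.symm.trans⟩

variable [DecidableEq V]

def IsGoodPart (X : Set V) (F : Finset (Sym2 V)) (S : Set V) : Prop :=
  (S ∩ (X ∪ edgeVerts F)).Subsingleton ∨
    (S ∩ X = ∅ ∧ ∃ a b : V, a ≠ b ∧ S ∩ edgeVerts F = {a, b} ∧
      (F.filter fun e => a ∈ e).card = 1 ∧ (F.filter fun e => b ∈ e).card = 1)

def IsEndMark (X : Set V) (F : Finset (Sym2 V)) (v : V) : Prop :=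
  v ∉ X ∧ (F.filter fun e => v ∈ e).card = 1

theorem isDismembering_iff : IsDismembering G X F ↔ ∀ x, IsGoodPart X F (component G F x) := by
  have hsupp (x : V) : ((G.deleteEdges F).connectedComponentMk x).supp = component G F x := by
    ext y
    simp [component, ConnectedComponent.mem_supp_iff, ConnectedComponent.eq, reachable_comm]
  refine ⟨fun h x => hsupp x ▸ h _, fun h c => ?_⟩
  induction c using ConnectedComponent.ind with
  | h x => exact (hsupp x).symm ▸ h x

theorem mem_edgeVerts_insert {e : Sym2 V} :
    v ∈ edgeVerts (insert e F) ↔ v ∈ e ∨ v ∈ edgeVerts F := by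
  simp [edgeVerts]

theorem IsEndMark.mem_edgeVerts (h : IsEndMark X F v) : v ∈ edgeVerts F := by
  obtain ⟨e, he⟩ := Finset.card_pos.mp (h.2 ▸ Nat.one_pos)
  exact ⟨e, (Finset.mem_filter.mp he).1, (Finset.mem_filter.mp he).2⟩

theorem card_filter_insert_of_notMem {e : Sym2 V} (hv : v ∉ e) :
    ((insert e F).filter fun f => v ∈ f).card = (F.filter fun f => v ∈ f).card := by
  rw [Finset.filter_insert, if_neg hv]

theorem isEndMark_insert_of_notMem {e : Sym2 V} (hve : v ∈ e)
    (hv : v ∉ X ∪ edgeVerts F) : IsEndMark X (insert e F) v := by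
  refine ⟨fun h => hv (Or.inl h), ?_⟩
  rw [Finset.filter_insert, if_pos hve,
    Finset.filter_eq_empty_iff.mpr fun f hf hvf => hv (Or.inr ⟨f, hf, hvf⟩)]
  rfl

theorem IsGoodPart.congr {X' S' : Set V} {F' : Finset (Sym2 V)}
    (h : IsGoodPart X F S) (hX : S' ∩ X' = S ∩ X) (hV : S' ∩ edgeVerts F' = S ∩ edgeVerts F)
    (hdeg : ∀ v ∈ S ∩ edgeVerts F,
      (F'.filter fun e => v ∈ e).card = (F.filter fun e => v ∈ e).card) :
    IsGoodPart X' F' S' := by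
  rcases h with h | ⟨hX0, a, b, hab, hSab, ha, hb⟩
  · left
    rwa [Set.inter_union_distrib_left, hX, hV, ← Set.inter_union_distrib_left]
  · refine Or.inr ⟨hX.trans hX0, a, b, hab, hV.trans hSab, ?_, ?_⟩
    · rw [hdeg a (hSab ▸ Or.inl rfl), ha]
    · rw [hdeg b (hSab ▸ Or.inr rfl), hb]

theorem IsGoodPart.insert_edge {e : Sym2 V} (h : IsGoodPart X F S) (he : ∀ v ∈ e, v ∉ S) :
    IsGoodPart X (insert e F) S := by
  refine h.congr rfl ?_ fun v hv => card_filter_insert_of_notMem fun hve => he v hve hv.1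
  ext v
  simp only [Set.mem_inter_iff, mem_edgeVerts_insert, and_congr_right_iff]
  exact fun hv => or_iff_right fun hve => he v hve hv

theorem IsGoodPart.insert_vertex (h : IsGoodPart X F S) (hx : x ∉ S) :
    IsGoodPart (insert x X) F S :=
  h.congr (by rw [Set.inter_insert_of_notMem hx]) rfl fun _ _ => rfl

theorem isGoodPart_of_subset_pair (hS : S ∩ (X ∪ edgeVerts F) ⊆ {a, b}) (ha : a ∈ S)
    (hb : b ∈ S) (ha' : b = a ∨ IsEndMark X F a) (hb' : a = b ∨ IsEndMark X F b) :
    IsGoodPart X F S := by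
  by_cases hab : a = b
  · subst hab
    exact Or.inl (Set.subsingleton_singleton.anti (by simpa using hS))
  obtain ⟨haX, had⟩ := ha'.resolve_left (Ne.symm hab)
  obtain ⟨hbX, hbd⟩ := hb'.resolve_left hab
  refine Or.inr ⟨?_, a, b, hab, ?_, had, hbd⟩
  · refine Set.eq_empty_of_forall_notMem fun y hy => ?_
    rcases hS ⟨hy.1, Or.inl hy.2⟩ with rfl | rfl
    exacts [haX hy.2, hbX hy.2]
  · refine subset_antisymm (fun y hy => hS ⟨hy.1, Or.inr hy.2⟩) ?_
    rintro y (rfl | rfl)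
    exacts [⟨ha, (ha'.resolve_left (Ne.symm hab)).mem_edgeVerts⟩,
      ⟨hb, (hb'.resolve_left hab).mem_edgeVerts⟩]

theorem not_reachable_deleteEdges_coe_insert (hG : G.IsAcyclic)
    (hab : (G.deleteEdges F).Adj a b) : ¬(G.deleteEdges ↑(insert s(a, b) F)).Reachable a b := by
  rw [Finset.coe_insert]
  exact hG.not_reachable_deleteEdges_insert hab

theorem component_insert_marks_subset (hG : G.IsAcyclic) (hab : (G.deleteEdges F).Adj a b)
    (hmarks : component G F a ∩ (X ∪ edgeVerts F) ⊆ {s, t})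
    (ht : (G.deleteEdges ↑(insert s(a, b) F)).Reachable b t) :
    component G (insert s(a, b) F) a ∩ (X ∪ edgeVerts (insert s(a, b) F)) ⊆ {s, a} := by
  have hsep := not_reachable_deleteEdges_coe_insert hG hab
  rintro y ⟨hy : (G.deleteEdges _).Reachable a y, hyM⟩
  have hyM' : y ∈ s(a, b) ∨ y ∈ X ∪ edgeVerts F := by
    rw [Set.mem_union, mem_edgeVerts_insert] at hyM
    tauto
  rcases hyM' with hye | hyM
  · rcases Sym2.mem_iff.mp hye with rfl | rfl
    exacts [Or.inr rfl, absurd hy hsep]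
  · rcases hmarks ⟨hy.mono (deleteEdges_anti (by simp)), hyM⟩ with rfl | rfl
    exacts [Or.inl rfl, absurd (hy.trans ht.symm) hsep]

theorem card_filter_insert_of_reachable (hG : G.IsAcyclic) (hab : (G.deleteEdges F).Adj a b)
    (hs : (G.deleteEdges ↑(insert s(a, b) F)).Reachable a s) (hsa : s ≠ a) :
    ((insert s(a, b) F).filter fun e => s ∈ e).card = (F.filter fun e => s ∈ e).card := by
  have hsep := not_reachable_deleteEdges_coe_insert hG hab
  have hsb : s ≠ b := by
    rintro rfl
    exact hsep hs
  exact card_filter_insert_of_notMem (by simp [hsa, hsb])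

theorem isGoodPart_insert_side (hG : G.IsAcyclic) (hab : (G.deleteEdges F).Adj a b)
    (hmarks : component G F a ∩ (X ∪ edgeVerts F) ⊆ {s, t})
    (hs : (G.deleteEdges ↑(insert s(a, b) F)).Reachable a s) (hs' : s = a ∨ IsEndMark X F s)
    (ht : (G.deleteEdges ↑(insert s(a, b) F)).Reachable b t) :
    IsGoodPart X (insert s(a, b) F) (component G (insert s(a, b) F) a) := by
  have hsub := component_insert_marks_subset hG hab hmarks ht
  by_cases hsa : s = a
  · exact isGoodPart_of_subset_pair hsub hs .rfl (Or.inl hsa.symm) (Or.inl hsa)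
  obtain ⟨hsX, hsd⟩ := hs'.resolve_left hsa
  have hsep := not_reachable_deleteEdges_coe_insert hG hab
  have haM : a ∉ X ∪ edgeVerts F := by
    intro haM
    rcases hmarks ⟨.rfl, haM⟩ with h | h
    · exact hsa h.symm
    · subst h
      exact hsep ht.symm
  exact isGoodPart_of_subset_pair hsub hs .rfl
    (Or.inr ⟨hsX, (card_filter_insert_of_reachable hG hab hs hsa).trans hsd⟩)
    (Or.inr (isEndMark_insert_of_notMem (Sym2.mem_mk_left a b) haM))

theorem isDismembering_insert (hG : G.IsAcyclic) (hab : (G.deleteEdges F).Adj a b)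
    (hgood : ∀ y, ¬(G.deleteEdges F).Reachable a y → IsGoodPart X F (component G F y))
    (hmarks : component G F a ∩ (X ∪ edgeVerts F) ⊆ {s, t})
    (hs : (G.deleteEdges ↑(insert s(a, b) F)).Reachable a s) (hs' : s = a ∨ IsEndMark X F s)
    (ht : (G.deleteEdges ↑(insert s(a, b) F)).Reachable b t) (ht' : t = b ∨ IsEndMark X F t) :
    IsDismembering G X (insert s(a, b) F) := by
  have hH' : G.deleteEdges ↑(insert s(a, b) F) = (G.deleteEdges F).deleteEdges {s(a, b)} := by
    simp only [Finset.coe_insert, deleteEdges_insert]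
  rw [isDismembering_iff]
  intro y
  by_cases hy : (G.deleteEdges F).Reachable a y
  · rcases hH' ▸ hy.deleteEdges_singleton_or b with h | h
    · rw [component_eq h]
      exact isGoodPart_insert_side hG hab hmarks hs hs' ht
    · have hswap : insert s(b, a) F = insert s(a, b) F := by rw [Sym2.eq_swap]
      rw [component_eq h, ← hswap]
      refine isGoodPart_insert_side hG hab.symm ?_ (hswap ▸ ht) ht' (hswap ▸ hs)
      rw [component_eq hab.reachable, Set.pair_comm]
      exact hmarks
  · have heq : component G (insert s(a, b) F) y = component G F y := by
      ext z
      refine ⟨fun h => Reachable.mono (deleteEdges_anti (by simp)) h, fun h => ?_⟩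
      change (G.deleteEdges _).Reachable y z
      rw [hH']
      exact Reachable.deleteEdges_singleton_of_not_reachable h (fun h' => hy h'.symm) b
    rw [heq]
    refine (hgood y hy).insert_edge fun v hv (hvy : (G.deleteEdges F).Reachable y v) => ?_
    rcases Sym2.mem_iff.mp hv with rfl | rfl
    exacts [hy hvy.symm, hy (hab.reachable.trans hvy.symm)]

theorem isDismembering_of_isGoodPart
    (hgood : ∀ y, ¬(G.deleteEdges F).Reachable m y → IsGoodPart X F (component G F y))
    (hm : IsGoodPart X F (component G F m)) : IsDismembering G X F := by
  rw [isDismembering_iff]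
  intro y
  by_cases hy : (G.deleteEdges F).Reachable m y
  · exact component_eq hy ▸ hm
  · exact hgood y hy

/-- Cuts the first edge of `q`: `t` ends up on the far side, `s` stays with `m`. -/
theorem exists_cut_toward (hG : G.IsAcyclic)
    (hgood : ∀ y, ¬(G.deleteEdges F).Reachable m y → IsGoodPart X F (component G F y))
    (q : G.Walk m t) (hq : q.IsPath) (hqF : ∀ e ∈ q.edges, e ∉ F)
    (hmarks : component G F m ∩ (X ∪ edgeVerts F) ⊆ {s, t})
    (hs : s = m ∨ IsEndMark X F s) (ht : t = s ∨ IsEndMark X F t)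
    (hms : (G.deleteEdges (↑F ∪ {e | e ∈ q.edges})).Reachable m s) :
    ∃ F' : Finset (Sym2 V), (F' : Set (Sym2 V)) ⊆ ↑F ∪ {e | e ∈ q.edges} ∧
      F'.card ≤ F.card + 1 ∧ IsDismembering G X F' ∧
      component G F' m ∩ (X ∪ edgeVerts F') ⊆ {m, s} ∧ (s = m ∨ IsEndMark X F' s) := by
  have hms' := hms.mono (deleteEdges_anti Set.subset_union_left)
  cases q with
  | nil =>
    refine ⟨F, Set.subset_union_left, by omega, isDismembering_of_isGoodPart hgood ?_,
      Set.pair_comm s m ▸ hmarks, hs⟩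
    exact isGoodPart_of_subset_pair hmarks hms' .rfl (hs.imp_left Eq.symm)
      (ht.imp_left Eq.symm)
  | @cons _ n _ hmn q =>
    have hadj : (G.deleteEdges F).Adj m n := (deleteEdges_adj ..).mpr ⟨hmn, hqF _ (by simp)⟩
    have hsub :
        (↑(insert s(m, n) F) : Set (Sym2 V)) ⊆ ↑F ∪ {e | e ∈ (q.cons hmn).edges} := by
      intro e he
      rcases Finset.mem_insert.mp he with rfl | he
      exacts [Or.inr (by simp), Or.inl he]
    have hs₁ : (G.deleteEdges ↑(insert s(m, n) F)).Reachable m s :=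
      hms.mono (deleteEdges_anti hsub)
    have ht₁ : (G.deleteEdges ↑(insert s(m, n) F)).Reachable n t := by
      rw [Finset.coe_insert]
      exact Walk.reachable_deleteEdges_insert_of_isPath_cons hq fun e he => hqF e (by simp [he])
    have hsep := not_reachable_deleteEdges_coe_insert hG hadj
    have ht' : IsEndMark X F t := ht.resolve_left fun hts => hsep (hs₁.trans (hts ▸ ht₁).symm)
    refine ⟨insert s(m, n) F, hsub, Finset.card_insert_le _ _,
      isDismembering_insert hG hadj hgood hmarks hs₁ hs ht₁ (Or.inr ht'),
      Set.pair_comm s m ▸ component_insert_marks_subset hG hadj hmarks ht₁, ?_⟩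
    by_cases hsm : s = m
    · exact Or.inl hsm
    obtain ⟨hsX, hsd⟩ := hs.resolve_left hsm
    exact Or.inr ⟨hsX, (card_filter_insert_of_reachable hG hadj hs₁ hsm).trans hsd⟩

theorem exists_component_marks_subset_singleton (hG : G.IsAcyclic)
    (hFE : (F : Set (Sym2 V)) ⊆ G.edgeSet) (hdis : IsDismembering G X F) (x : V) :
    ∃ F' : Finset (Sym2 V), (F' : Set (Sym2 V)) ⊆ G.edgeSet ∧ F'.card ≤ F.card + 2 ∧
      IsDismembering G X F' ∧ ∃ w, component G F' x ∩ (X ∪ edgeVerts F') ⊆ {w} := by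
  have hgood := isDismembering_iff.mp hdis
  rcases hgood x with h | ⟨hX0, α, β, -, hαβ, hα, hβ⟩
  · rcases h.eq_empty_or_singleton with h | ⟨w, h⟩
    · exact ⟨F, hFE, by omega, hdis, x, h ▸ Set.empty_subset _⟩
    · exact ⟨F, hFE, by omega, hdis, w, h.subset⟩
  have hαC : α ∈ component G F x ∩ edgeVerts F := hαβ ▸ Or.inl rfl
  have hβC : β ∈ component G F x ∩ edgeVerts F := hαβ ▸ Or.inr rfl
  have hxα : (G.deleteEdges F).Reachable x α := hαC.1
  have hxβ : (G.deleteEdges F).Reachable x β := hβC.1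
  have hnotX {y : V} (hy : (G.deleteEdges F).Reachable x y) : y ∉ X := fun hyX =>
    (Set.eq_empty_iff_forall_notMem.mp hX0) y ⟨hy, hyX⟩
  obtain ⟨m, qa, qb, hqa, hqb, hqa', hqb', hxm⟩ := exists_median hxα (hxα.symm.trans hxβ)
  have hxmF : (G.deleteEdges F).Reachable x m :=
    hxm.mono (deleteEdges_anti (Set.subset_union_left.trans Set.subset_union_left))
  have hmarks : component G F m ∩ (X ∪ edgeVerts F) ⊆ {β, α} := by
    rw [component_eq hxmF, Set.pair_comm, ← hαβ]
    rintro y ⟨hy, hyX | hyV⟩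
    exacts [absurd hyX (hnotX hy), ⟨hy, hyV⟩]
  obtain ⟨F₁, hF₁, hc₁, hdis₁, hmarks₁, hβ₁⟩ := exists_cut_toward hG (fun y _ => hgood y)
    qa hqa (fun e he => (hqa' e he).1) hmarks (Or.inr ⟨hnotX hxβ, hβ⟩)
    (Or.inr ⟨hnotX hxα, hα⟩)
    ⟨qb.toDeleteEdges _ fun e he hmem => hmem.elim (hqb' e he) fun h => (hqa' e h).2 he⟩
  have hF₁qb : ∀ e ∈ qb.edges, e ∉ F₁ := fun e he hF =>
    (hF₁ hF).elim (hqb' e he) fun h => (hqa' e h).2 he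
  obtain ⟨F₂, hF₂, hc₂, hdis₂, hmarks₂, -⟩ := exists_cut_toward hG
    (fun y _ => isDismembering_iff.mp hdis₁ y) qb hqb hF₁qb hmarks₁ (Or.inl rfl) hβ₁ .rfl
  have hF₂sub : (F₂ : Set (Sym2 V)) ⊆ ↑F ∪ {e | e ∈ qa.edges} ∪ {e | e ∈ qb.edges} :=
    hF₂.trans (Set.union_subset_union_left _ hF₁)
  refine ⟨F₂, hF₂sub.trans ?_, by omega, hdis₂, m, ?_⟩
  · exact Set.union_subset (Set.union_subset hFE fun e he => qa.edges_subset_edgeSet he)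
      fun e he => qb.edges_subset_edgeSet he
  · rw [← component_eq (hxm.mono (deleteEdges_anti hF₂sub))]
    simpa using hmarks₂

theorem exists_component_marks_subset_endMark (hG : G.IsAcyclic)
    (hFE : (F : Set (Sym2 V)) ⊆ G.edgeSet) (hdis : IsDismembering G X F)
    (hw : component G F x ∩ (X ∪ edgeVerts F) ⊆ {w}) :
    ∃ F' : Finset (Sym2 V), (F' : Set (Sym2 V)) ⊆ G.edgeSet ∧ F'.card ≤ F.card + 1 ∧
      IsDismembering G X F' ∧
      ∃ t, component G F' x ∩ (X ∪ edgeVerts F') ⊆ {t} ∧ (t = x ∨ IsEndMark X F' t) := by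
  by_cases hwC : w ∈ component G F x ∩ (X ∪ edgeVerts F)
  swap
  · refine ⟨F, hFE, by omega, hdis, x, fun y hy => ?_, Or.inl rfl⟩
    obtain rfl : y = w := hw hy
    exact absurd hy hwC
  by_cases hgw : w = x ∨ IsEndMark X F w
  · exact ⟨F, hFE, by omega, hdis, w, hw, hgw⟩
  have hxw : (G.deleteEdges F).Reachable x w := hwC.1
  obtain ⟨n, hwn, hnx⟩ := hxw.symm.exists_adj_deleteEdges_insert fun h => hgw (Or.inl h)
  rw [Sym2.eq_swap, ← Finset.coe_insert] at hnx
  have hxn : (G.deleteEdges F).Reachable x n := hxw.trans hwn.reachable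
  have hmarks : component G F n ∩ (X ∪ edgeVerts F) ⊆ {n, w} := by
    rw [component_eq hxn]
    exact hw.trans (Set.subset_insert n _)
  have hnM : n ∉ X ∪ edgeVerts F := fun h => hwn.ne (hw ⟨hxn, h⟩).symm
  -- the neighbour `n` of `w` toward `x` becomes the only mark on the side of `x`
  refine ⟨insert s(n, w) F, ?_, Finset.card_insert_le _ _,
    isDismembering_insert hG hwn.symm (fun y _ => isDismembering_iff.mp hdis y) hmarks .rfl
      (Or.inl rfl) .rfl (Or.inl rfl),
    n, ?_, Or.inr (isEndMark_insert_of_notMem (Sym2.mem_mk_left n w) hnM)⟩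
  · rw [Finset.coe_insert]
    exact Set.insert_subset ((deleteEdges_adj ..).mp hwn.symm).1 hFE
  · rw [component_eq hnx]
    simpa using component_insert_marks_subset hG hwn.symm hmarks .rfl

theorem exists_isDismembering_insert_of_endMark (hG : G.IsAcyclic)
    (hFE : (F : Set (Sym2 V)) ⊆ G.edgeSet) (hdis : IsDismembering G X F)
    (ht : component G F x ∩ (X ∪ edgeVerts F) ⊆ {t}) (ht' : t = x ∨ IsEndMark X F t) :
    ∃ F' : Finset (Sym2 V), (F' : Set (Sym2 V)) ⊆ G.edgeSet ∧ F'.card ≤ F.card + 1 ∧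
      IsDismembering G (insert x X) F' := by
  have hins : component G F x ∩ (insert x X ∪ edgeVerts F) ⊆
      insert x (component G F x ∩ (X ∪ edgeVerts F)) := by
    rintro y ⟨hy, (rfl | hyX) | hyV⟩
    exacts [Or.inl rfl, Or.inr ⟨hy, Or.inl hyX⟩, Or.inr ⟨hy, Or.inr hyV⟩]
  obtain ⟨t₀, hxt₀, hmarks, ht₀⟩ : ∃ t₀, (G.deleteEdges F).Reachable x t₀ ∧
      component G F x ∩ (insert x X ∪ edgeVerts F) ⊆ {x, t₀} ∧
      (t₀ = x ∨ IsEndMark (insert x X) F t₀) := by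
    by_cases hxt : (G.deleteEdges F).Reachable x t
    · refine ⟨t, hxt, hins.trans (Set.insert_subset_insert ht), ?_⟩
      by_cases htx : t = x
      · exact Or.inl htx
      obtain ⟨htX, htd⟩ := ht'.resolve_left htx
      exact Or.inr ⟨by simp [htx, htX], htd⟩
    · refine ⟨x, .rfl, fun y hy => ?_, Or.inl rfl⟩
      rcases hins hy with h | h
      · exact Or.inl h
      · obtain rfl : y = t := ht h
        exact absurd h.1 hxt
  obtain ⟨q, hq, hqF⟩ := hxt₀.exists_isPath_deleteEdges
  have hgood (y : V) (hy : ¬(G.deleteEdges F).Reachable x y) :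
      IsGoodPart (insert x X) F (component G F y) :=
    (isDismembering_iff.mp hdis y).insert_vertex fun h => hy (Reachable.symm h)
  obtain ⟨F', hF', hc, hdis', -⟩ :=
    exists_cut_toward hG hgood q hq hqF hmarks (Or.inl rfl) ht₀ .rfl
  exact ⟨F', hF'.trans (Set.union_subset hFE fun e he => q.edges_subset_edgeSet he), hc, hdis'⟩

theorem exists_isDismembering_insert (hG : G.IsAcyclic)
    (hFE : (F : Set (Sym2 V)) ⊆ G.edgeSet) (hdis : IsDismembering G X F) (x : V) :
    ∃ F' : Finset (Sym2 V), (F' : Set (Sym2 V)) ⊆ G.edgeSet ∧ F'.card ≤ F.card + 4 ∧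
      IsDismembering G (insert x X) F' := by
  obtain ⟨F₁, hF₁, hc₁, hdis₁, w, hw⟩ :=
    exists_component_marks_subset_singleton hG hFE hdis x
  obtain ⟨F₂, hF₂, hc₂, hdis₂, t, ht, ht'⟩ :=
    exists_component_marks_subset_endMark hG hF₁ hdis₁ hw
  obtain ⟨F₃, hF₃, hc₃, hdis₃⟩ :=
    exists_isDismembering_insert_of_endMark hG hF₂ hdis₂ ht ht'
  exact ⟨F₃, hF₃, by omega, hdis₃⟩

end Dismembering

theorem stmt3_general {V : Type*} [DecidableEq V] (T : SimpleGraph V)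
    (hT : T.IsTree) (X : Finset V) :
    ∃ F : Finset (Sym2 V), (F : Set (Sym2 V)) ⊆ T.edgeSet ∧
      F.card ≤ 5 * X.card ∧ IsDismembering T (↑X) F := by
  induction X using Finset.induction_on with
  | empty => exact ⟨∅, by simp, by simp, fun _ => Or.inl (by simp [edgeVerts])⟩
  | insert x X hx ih =>
    obtain ⟨F, hFE, hcard, hdis⟩ := ih
    obtain ⟨F', hF'E, hcard', hdis'⟩ :=
      Dismembering.exists_isDismembering_insert hT.isAcyclic hFE hdis x
    refine ⟨F', hF'E, ?_, by rwa [Finset.coe_insert]⟩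
    rw [Finset.card_insert_of_notMem hx]
    omega

/-- For every finite tree `T` and vertex set `X`, there is a dismembering set `F`
for `(T, X)` with `|F| ≤ 5 |X|`. -/
theorem stmt3 {V : Type*} [Fintype V] [DecidableEq V] (T : SimpleGraph V)
    (hT : T.IsTree) (X : Finset V) :
    ∃ F : Finset (Sym2 V), (F : Set (Sym2 V)) ⊆ T.edgeSet ∧
      F.card ≤ 5 * X.card ∧ IsDismembering T (↑X) F :=
  stmt3_general T hT X
end

section
/- Let G be a finite simple graph and let F₀ ⊆ E(G) be an edge set such that every connected component of G ∖ F₀ is a tree (i.e. G ∖ F₀ is a forest). Then there exists a set F ⊆ E(G) ∖ F₀ with |F| ≤ 10·|F₀| that is dismembering for (G ∖ F₀, V(F₀)), where V(F₀) denotes the set of endpoints of edges in F₀. -/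
variable {V : Type*}

/-!
Induction on `X`, adding at most four edges to `F` per new vertex; as `|V(F₀)| ≤ 2 |F₀|`, this
gives `|F| ≤ 8 |F₀|`. Call the vertices of `X ∪ V(F)` marks; in the forest `H ∖ F` a component
holds at most one mark, or exactly two, both outside `X` and ends of a single edge of `F`.

To add `x`: if its component holds at most one mark `s ≠ x`, cut the first and the last edge of
the path from `x` to `s`. Then `x` and `s` are each the only mark of their piece, and the piece in
between holds just the two new ends of cut edges. If it holds two marks `a` and `b`, let `m` be
the vertex where the path from `x` first meets the path from `a` to `b`, and cut the two edges of
that path at `m`. This adds `m` to `X` at the cost of two edges: the piece of `m` has no other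
mark, and each arm holds one old mark and one new end. The path from `x` to `m` survives, so `x`
is now in the first case with `s = m`.

Since every edge of a forest is a bridge, a cut edge separates its two sides, which is all that
is needed to see which marks share a piece.
-/

open Finset

namespace SimpleGraph

variable {G : SimpleGraph V} {u v w m a b y y' : V}

namespace Walk

lemma not_nil_of_mem_support_of_ne {p : G.Walk u v} (hy : y ∈ p.support) (hyu : y ≠ u) :
    ¬p.Nil := fun h => hyu (by simpa [nil_iff_support_eq.1 h] using hy)

lemma snd_mem_support (p : G.Walk u v) : p.snd ∈ p.support := p.getVert_mem_support 1

lemma penultimate_mem_support (p : G.Walk u v) : p.penultimate ∈ p.support :=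
  p.getVert_mem_support _

lemma IsPath.eq_of_mem_support_takeUntil_of_mem_support_dropUntil [DecidableEq V]
    {p : G.Walk u v} (hp : p.IsPath) (hw : w ∈ p.support) (hy : y ∈ (p.takeUntil w hw).support)
    (hy' : y ∈ (p.dropUntil w hw).support) : y = w := by
  by_contra hyw
  rw [← p.take_spec hw] at hp
  exact hp.ne_of_mem_support_of_append hyw hy hy' rfl

lemma IsPath.start_notMem_support_dropUntil [DecidableEq V] {p : G.Walk u v} (hp : p.IsPath)
    (hw : w ∈ p.support) (hwu : w ≠ u) : u ∉ (p.dropUntil w hw).support := fun hu =>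
  hwu (hp.eq_of_mem_support_takeUntil_of_mem_support_dropUntil hw (start_mem_support _) hu).symm

lemma IsPath.reachable_deleteEdges_mk_start_snd [DecidableEq V] {p : G.Walk u v}
    (hp : p.IsPath) (hy : y ∈ p.support) (hyu : y ≠ u) :
    (G.deleteEdges {s(u, p.snd)}).Reachable y v :=
  reachable_deleteEdges_iff_exists_walk.2 ⟨p.dropUntil y hy, fun he =>
    hp.start_notMem_support_dropUntil hy hyu (fst_mem_support_of_mem_edges _ he)⟩

theorem exists_isPath_forall_mem_support_eq {S : Set V} (p : G.Walk u v) (hv : v ∈ S) :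
    ∃ m ∈ S, ∃ q : G.Walk u m, q.IsPath ∧ ∀ z ∈ q.support, z ∈ S → z = m := by
  classical
  suffices ∃ m ∈ S, ∃ q : G.Walk u m, ∀ z ∈ q.support, z ∈ S → z = m by
    obtain ⟨m, hm, q, hq⟩ := this
    exact ⟨m, hm, q.bypass, q.bypass_isPath,
      fun z hz => hq z (q.support_bypass_subset_support hz)⟩
  induction p with
  | nil => exact ⟨_, hv, nil, by simp⟩
  | @cons u _ _ h p ih =>
    by_cases hu : u ∈ S
    · exact ⟨u, hu, nil, by simp⟩
    · obtain ⟨m, hm, q, hq⟩ := ih hv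
      refine ⟨m, hm, cons h q, fun z hz hzS => ?_⟩
      rw [support_cons, List.mem_cons] at hz
      exact hz.elim (fun hzu => absurd (hzu ▸ hzS) hu) (hq z · hzS)

def startEdges (p : G.Walk u v) : Finset (Sym2 V) := if p.Nil then ∅ else {s(u, p.snd)}

variable {p : G.Walk u v}

lemma mem_startEdges_iff {e : Sym2 V} : e ∈ p.startEdges ↔ ¬p.Nil ∧ e = s(u, p.snd) := by
  unfold startEdges; split_ifs <;> simp [*]

lemma startEdges_of_not_nil (hp : ¬p.Nil) : p.startEdges = {s(u, p.snd)} := if_neg hp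

lemma eq_or_eq_snd_of_mem_startEdges {e : Sym2 V} (he : e ∈ p.startEdges) (hy : y ∈ e) :
    y = u ∨ y = p.snd := by
  rwa [(mem_startEdges_iff.1 he).2, Sym2.mem_iff] at hy

lemma card_startEdges_le (p : G.Walk u v) : #p.startEdges ≤ 1 := by
  unfold startEdges; split_ifs <;> simp

lemma coe_startEdges_subset_edgeSet (p : G.Walk u v) :
    (p.startEdges : Set (Sym2 V)) ⊆ G.edgeSet := fun e he => by
  obtain ⟨hp, rfl⟩ := mem_startEdges_iff.1 he
  exact p.adj_snd hp

variable {P : G.Walk m a} {Q : G.Walk m b}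

lemma notMem_edgeVerts_startEdges_union [DecidableEq V]
    (hdisj : ∀ z ∈ P.support, z ∈ Q.support → z = m) (hy : y ∈ P.support) (hym : y ≠ m)
    (hys : y ≠ P.snd) : y ∉ edgeVerts (P.startEdges ∪ Q.startEdges) := by
  rintro ⟨e, he, hye⟩
  rcases mem_union.1 he with he | he
  · exact (eq_or_eq_snd_of_mem_startEdges he hye).elim hym hys
  · rcases eq_or_eq_snd_of_mem_startEdges he hye with rfl | rfl
    · exact hym rfl
    · exact hym (hdisj _ hy Q.snd_mem_support)

lemma card_filter_snd_mem_startEdges_union [DecidableEq V]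
    (hdisj : ∀ z ∈ P.support, z ∈ Q.support → z = m) (hP : ¬P.Nil) :
    #{e ∈ P.startEdges ∪ Q.startEdges | P.snd ∈ e} = 1 := by
  have hsm : P.snd ≠ m := (P.adj_snd hP).ne.symm
  have hQ : ∀ e ∈ Q.startEdges, P.snd ∉ e := fun e he hse =>
    (eq_or_eq_snd_of_mem_startEdges he hse).elim hsm
      fun h => hsm (hdisj _ P.snd_mem_support (h ▸ Q.snd_mem_support))
  rw [filter_union, filter_false_of_mem hQ, union_empty, startEdges_of_not_nil hP,
    filter_singleton, if_pos (Sym2.mem_mk_right _ _), card_singleton]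

lemma reachable_deleteEdges_startEdges_union [DecidableEq V] (R : G.Walk y m)
    (hR : ∀ z ∈ R.support, z ∈ P.support ∨ z ∈ Q.support → z = m) :
    (G.deleteEdges ↑(P.startEdges ∪ Q.startEdges)).Reachable y m := by
  refine ⟨R.toDeleteEdges _ fun e heR he => ?_⟩
  rcases mem_union.1 (mem_coe.1 he) with he | he
  · obtain ⟨hnil, rfl⟩ := mem_startEdges_iff.1 he
    exact (P.adj_snd hnil).ne.symm
      (hR _ (R.snd_mem_support_of_mem_edges heR) (Or.inl P.snd_mem_support))
  · obtain ⟨hnil, rfl⟩ := mem_startEdges_iff.1 he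
    exact (Q.adj_snd hnil).ne.symm
      (hR _ (R.snd_mem_support_of_mem_edges heR) (Or.inr Q.snd_mem_support))

end Walk

lemma IsAcyclic.not_reachable_deleteEdges (hG : G.IsAcyclic) {D : Set (Sym2 V)}
    (hvw : G.Adj v w) (hD : s(v, w) ∈ D) (hy : (G.deleteEdges {s(v, w)}).Reachable y v)
    (hy' : (G.deleteEdges {s(v, w)}).Reachable y' w) : ¬(G.deleteEdges D).Reachable y y' :=
  fun h => isBridge_iff.1 (isAcyclic_iff_forall_adj_isBridge.1 hG hvw)
    (hy.symm.trans ((h.mono (deleteEdges_anti (Set.singleton_subset_iff.2 hD))).trans hy'))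

variable [DecidableEq V]

lemma card_startEdges_union_le {u' v' : V} (P : G.Walk u v) (Q : G.Walk u' v') :
    #(P.startEdges ∪ Q.startEdges) ≤ 2 :=
  (card_union_le _ _).trans (add_le_add P.card_startEdges_le Q.card_startEdges_le)

lemma coe_startEdges_union_subset_edgeSet {u' v' : V} (P : G.Walk u v) (Q : G.Walk u' v') :
    ((P.startEdges ∪ Q.startEdges : Finset (Sym2 V)) : Set (Sym2 V)) ⊆ G.edgeSet := by
  rw [coe_union]
  exact Set.union_subset P.coe_startEdges_subset_edgeSet Q.coe_startEdges_subset_edgeSet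

lemma deleteEdges_coe_union (H : SimpleGraph V) (F D : Finset (Sym2 V)) :
    H.deleteEdges ↑(F ∪ D) = (H.deleteEdges F).deleteEdges D := by
  rw [deleteEdges_deleteEdges, coe_union]

lemma IsAcyclic.not_reachable_deleteEdges_of_isPath (hG : G.IsAcyclic) {D : Set (Sym2 V)}
    {p : G.Walk u v} (hp : p.IsPath) (hD : s(u, p.snd) ∈ D) (hy : y ∈ p.support) (hyu : y ≠ u)
    (hy' : (G.deleteEdges {s(u, p.snd)}).Reachable y' u) : ¬(G.deleteEdges D).Reachable y' y := by
  have hnil := p.not_nil_of_mem_support_of_ne hy hyu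
  exact hG.not_reachable_deleteEdges (p.adj_snd hnil) hD hy'
    ((hp.reachable_deleteEdges_mk_start_snd hy hyu).trans
      (hp.reachable_deleteEdges_mk_start_snd p.snd_mem_support (p.adj_snd hnil).ne.symm).symm)

lemma IsAcyclic.eq_start_of_reachable_deleteEdges (hG : G.IsAcyclic) {D : Set (Sym2 V)}
    {p : G.Walk u v} (hp : p.IsPath) (hD : s(u, p.snd) ∈ D) (hy : y ∈ p.support)
    (h : (G.deleteEdges D).Reachable u y) : y = u := by
  by_contra hyu
  exact hG.not_reachable_deleteEdges_of_isPath hp hD hy hyu (Reachable.refl u) h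

lemma IsAcyclic.not_reachable_deleteEdges_of_fork (hG : G.IsAcyclic) {D : Set (Sym2 V)}
    {P : G.Walk m a} {Q : G.Walk m b} (hP : P.IsPath)
    (hdisj : ∀ z ∈ P.support, z ∈ Q.support → z = m) (hD : s(m, P.snd) ∈ D)
    (hy : y ∈ P.support) (hym : y ≠ m) (hy' : y' ∈ Q.support) :
    ¬(G.deleteEdges D).Reachable y' y := by
  have hnil := P.not_nil_of_mem_support_of_ne hy hym
  refine hG.not_reachable_deleteEdges_of_isPath hP hD hy hym
    (reachable_deleteEdges_iff_exists_walk.2 ⟨(Q.takeUntil y' hy').reverse, fun he => ?_⟩)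
  rw [Walk.edges_reverse, List.mem_reverse] at he
  exact (P.adj_snd hnil).ne.symm (hdisj _ P.snd_mem_support
    (Q.support_takeUntil_subset_support hy' (Walk.snd_mem_support_of_mem_edges _ he)))

end SimpleGraph

open SimpleGraph Walk

variable [DecidableEq V] {H : SimpleGraph V} {X X' Y : Set V} {F D : Finset (Sym2 V)}
  {x p s t m a b y y' : V}

lemma card_filter_mem_union_of_notMem_edgeVerts (h : p ∉ edgeVerts D) :
    #{e ∈ F ∪ D | p ∈ e} = #{e ∈ F | p ∈ e} := by
  rw [filter_union, filter_false_of_mem fun e he hp => h ⟨e, he, hp⟩, union_empty]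

lemma card_filter_mem_union_of_notMem_edgeVerts_left (h : p ∉ edgeVerts F) :
    #{e ∈ F ∪ D | p ∈ e} = #{e ∈ D | p ∈ e} := by
  rw [union_comm, card_filter_mem_union_of_notMem_edgeVerts h]

def IsDismemberingAt (H : SimpleGraph V) (X : Set V) (F : Finset (Sym2 V)) (p : V) : Prop :=
  ∀ q ∈ X ∪ edgeVerts F, ∀ r ∈ X ∪ edgeVerts F,
    (H.deleteEdges F).Reachable p q → (H.deleteEdges F).Reachable p r → p ≠ q →
      (p ∉ X ∧ #{e ∈ F | p ∈ e} = 1) ∧ (r = p ∨ r = q)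

theorem IsDismembering.isDismemberingAt (h : IsDismembering H X F)
    (hp : p ∈ X ∪ edgeVerts F) : IsDismemberingAt H X F p := by
  intro q hq r hr hpq hpr hne
  have mem : ∀ {z}, (H.deleteEdges F).Reachable p z →
      z ∈ ((H.deleteEdges F).connectedComponentMk p).supp :=
    fun hz => (ConnectedComponent.mem_supp_iff _ _).2 (ConnectedComponent.eq.2 hz.symm)
  rcases h ((H.deleteEdges F).connectedComponentMk p) with hs | ⟨hX, a, b, -, hab, ha, hb⟩
  · exact absurd (hs ⟨mem (Reachable.refl p), hp⟩ ⟨mem hpq, hq⟩) hne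
  have pair : ∀ {z}, (H.deleteEdges F).Reachable p z → z ∈ X ∪ edgeVerts F →
      z ∉ X ∧ (z = a ∨ z = b) := by
    intro z hz hzM
    have hzX : z ∉ X := fun hzX => Set.eq_empty_iff_forall_notMem.1 hX z ⟨mem hz, hzX⟩
    have : z ∈ ({a, b} : Set V) := hab ▸ ⟨mem hz, hzM.resolve_left hzX⟩
    exact ⟨hzX, this⟩
  obtain ⟨hpX, hpab⟩ := pair (Reachable.refl p) hp
  have hqab := (pair hpq hq).2
  have hrab := (pair hpr hr).2
  exact ⟨⟨hpX, by rcases hpab with rfl | rfl <;> assumption⟩, by grind⟩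

theorem isDismembering_of_forall_isDismemberingAt
    (h : ∀ p ∈ X ∪ edgeVerts F, IsDismemberingAt H X F p) : IsDismembering H X F := by
  intro c
  by_cases hs : (c.supp ∩ (X ∪ edgeVerts F)).Subsingleton
  · exact Or.inl hs
  obtain ⟨p, ⟨hpc, hp⟩, q, ⟨hqc, hq⟩, hne⟩ := Set.not_subsingleton_iff.1 hs
  have reach : ∀ {z z'}, z ∈ c.supp → z' ∈ c.supp → (H.deleteEdges F).Reachable z z' :=
    fun hz hz' => ConnectedComponent.exact (((ConnectedComponent.mem_supp_iff _ _).1 hz).trans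
      ((ConnectedComponent.mem_supp_iff _ _).1 hz').symm)
  have good : ∀ z ∈ c.supp, z ∈ X ∪ edgeVerts F → z ∉ X ∧ #{e ∈ F | z ∈ e} = 1 := by
    intro z hz hzM
    by_cases hzp : z = p
    · subst hzp
      exact (h z hp q hq q hq (reach hz hqc) (reach hz hqc) hne).1
    · exact (h z hzM p hp p hp (reach hz hpc) (reach hz hpc) hzp).1
  refine Or.inr ⟨Set.eq_empty_of_forall_notMem fun z ⟨hz, hzX⟩ => (good z hz (Or.inl hzX)).1 hzX,
    p, q, hne, ?_, (good p hpc hp).2, (good q hqc hq).2⟩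
  ext z
  refine ⟨fun ⟨hz, hzF⟩ => (h p hp q hq z (Or.inr hzF) (reach hpc hqc) (reach hpc hz) hne).2, ?_⟩
  rintro (rfl | rfl)
  · exact ⟨hpc, hp.resolve_left (good z hpc hp).1⟩
  · exact ⟨hqc, hq.resolve_left (good z hqc hq).1⟩

theorem IsDismembering.anti (h : IsDismembering H Y F) (hXY : X ⊆ Y) : IsDismembering H X F :=
  fun c => (h c).imp (fun hs => hs.anti (by gcongr)) fun ⟨hY, hab⟩ =>
    ⟨Set.subset_eq_empty (by gcongr) hY, hab⟩

theorem IsDismembering.union_of_isDismemberingAt (hF : IsDismembering H X F)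
    (hX' : ∀ y ∈ X', y ∈ X ∨ (H.deleteEdges F).Reachable x y)
    (hD : ∀ e ∈ D, ∀ y ∈ e, (H.deleteEdges F).Reachable x y)
    (hloc : ∀ p ∈ X' ∪ edgeVerts (F ∪ D), (H.deleteEdges F).Reachable x p →
      IsDismemberingAt H X' (F ∪ D) p) :
    IsDismembering H X' (F ∪ D) := by
  refine isDismembering_of_forall_isDismemberingAt fun p hp => ?_
  by_cases hxp : (H.deleteEdges F).Reachable x p
  · exact hloc p hp hxp
  have hle : H.deleteEdges ↑(F ∪ D) ≤ H.deleteEdges F := deleteEdges_anti (by simp)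
  have old : ∀ y ∈ X' ∪ edgeVerts (F ∪ D), (H.deleteEdges ↑(F ∪ D)).Reachable p y →
      y ∈ X ∪ edgeVerts F ∧ (y ∈ X' → y ∈ X) ∧ #{e ∈ F ∪ D | y ∈ e} = #{e ∈ F | y ∈ e} := by
    intro y hy hpy
    have hxy : ¬(H.deleteEdges F).Reachable x y := fun h => hxp (h.trans (hpy.mono hle).symm)
    have hyX : y ∈ X' → y ∈ X := fun h => (hX' y h).resolve_right hxy
    have hyD : y ∉ edgeVerts D := fun ⟨e, he, hye⟩ => hxy (hD e he y hye)
    refine ⟨?_, hyX, card_filter_mem_union_of_notMem_edgeVerts hyD⟩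
    rcases hy with hy | ⟨e, he, hye⟩
    · exact Or.inl (hyX hy)
    · exact Or.inr ⟨e, (mem_union.1 he).resolve_right fun he => hyD ⟨e, he, hye⟩, hye⟩
  intro q hq r hr hpq hpr hne
  obtain ⟨hpM, hpX, hpdeg⟩ := old p hp (Reachable.refl p)
  have := hF.isDismemberingAt hpM q (old q hq hpq).1 r (old r hr hpr).1 (hpq.mono hle)
    (hpr.mono hle) hne
  exact ⟨⟨fun h => this.1.1 (hpX h), hpdeg.trans this.1.2⟩, this.2⟩

lemma eq_or_eq_of_mem_marks_insert_insert {u w : V}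
    (hmarks : ∀ v ∈ X ∪ edgeVerts F, (H.deleteEdges F).Reachable s v → v = s ∨ v = t)
    (hy : y ∈ insert s (insert t X) ∪ edgeVerts (F ∪ {s(s, u), s(t, w)}))
    (hsy : (H.deleteEdges F).Reachable s y) : y = s ∨ y = t ∨ y = u ∨ y = w := by
  rcases hy with (rfl | rfl | hy) | ⟨e, he, hye⟩
  · exact Or.inl rfl
  · exact Or.inr (Or.inl rfl)
  · exact (hmarks y (Or.inl hy) hsy).imp id Or.inl
  rcases mem_union.1 he with he | he
  · exact (hmarks y (Or.inr ⟨e, he, hye⟩) hsy).imp id Or.inl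
  simp only [mem_insert, mem_singleton] at he
  rcases he with rfl | rfl <;> simp only [Sym2.mem_iff] at hye <;> tauto

lemma ne_and_ne_of_reachable_of_isPath (hG : (H.deleteEdges F).IsAcyclic)
    {P : (H.deleteEdges F).Walk s t} (hP : P.IsPath)
    (hmarks : ∀ v ∈ X ∪ edgeVerts F, (H.deleteEdges F).Reachable s v → v = s ∨ v = t)
    (hy : y ∈ insert s (insert t X) ∪ edgeVerts (F ∪ {s(s, P.snd), s(t, P.penultimate)}))
    (hy' : y' ∈ insert s (insert t X) ∪ edgeVerts (F ∪ {s(s, P.snd), s(t, P.penultimate)}))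
    (hsy : (H.deleteEdges F).Reachable s y)
    (hyy' : (H.deleteEdges ↑(F ∪ {s(s, P.snd), s(t, P.penultimate)})).Reachable y y')
    (hne : y ≠ y') : y ≠ s ∧ y ≠ t ∧ (y = P.snd ∨ y = P.penultimate) := by
  have hy'P : y' ∈ P.support := by
    rcases eq_or_eq_of_mem_marks_insert_insert hmarks hy'
      (hsy.trans (hyy'.mono (deleteEdges_anti (coe_subset.2 subset_union_left)))) with
      rfl | rfl | rfl | rfl
    exacts [P.start_mem_support, P.end_mem_support, P.snd_mem_support,
      P.penultimate_mem_support]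
  rw [deleteEdges_coe_union] at hyy'
  have hs : y ≠ s := by
    rintro rfl
    exact hne (hG.eq_start_of_reachable_deleteEdges hP (by simp) hy'P hyy').symm
  have ht : y ≠ t := by
    rintro rfl
    exact hne (hG.eq_start_of_reachable_deleteEdges hP.reverse (by simp [snd_reverse])
      (by simpa using hy'P) hyy').symm
  exact ⟨hs, ht, ((eq_or_eq_of_mem_marks_insert_insert hmarks hy hsy).resolve_left hs)
    |>.resolve_left ht⟩

theorem isDismemberingAt_insert_insert_union (hG : (H.deleteEdges F).IsAcyclic)
    {P : (H.deleteEdges F).Walk s t} (hP : P.IsPath)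
    (hmarks : ∀ v ∈ X ∪ edgeVerts F, (H.deleteEdges F).Reachable s v → v = s ∨ v = t)
    (hp : p ∈ insert s (insert t X) ∪ edgeVerts (F ∪ {s(s, P.snd), s(t, P.penultimate)}))
    (hsp : (H.deleteEdges F).Reachable s p) :
    IsDismemberingAt H (insert s (insert t X)) (F ∪ {s(s, P.snd), s(t, P.penultimate)}) p := by
  have hle : H.deleteEdges ↑(F ∪ {s(s, P.snd), s(t, P.penultimate)}) ≤ H.deleteEdges F :=
    deleteEdges_anti (coe_subset.2 subset_union_left)
  intro q hq r hr hpq hpr hne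
  -- the ends of `P` are cut off from the rest of `P`, so only `P.snd` and `P.penultimate` can
  -- share a piece
  obtain ⟨hps, hpt, hpuw⟩ := ne_and_ne_of_reachable_of_isPath hG hP hmarks hp hq hsp hpq hne
  have hquw := (ne_and_ne_of_reachable_of_isPath hG hP hmarks hq hp (hsp.trans (hpq.mono hle))
    hpq.symm hne.symm).2.2
  refine ⟨⟨?_, ?_⟩, ?_⟩
  · simp only [Set.mem_insert_iff, hps, hpt, false_or]
    exact fun h => (hmarks p (Or.inl h) hsp).elim hps hpt
  · rw [card_filter_mem_union_of_notMem_edgeVerts_left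
      fun h => (hmarks p (Or.inr h) hsp).elim hps hpt]
    have huw : P.snd ≠ P.penultimate := by grind
    rcases hpuw with rfl | rfl
    · simp [filter_insert, filter_singleton, hps, hpt, huw]
    · simp [filter_insert, filter_singleton, hps, hpt, huw.symm]
  · by_cases hrp : r = p
    · exact Or.inl hrp
    have := (ne_and_ne_of_reachable_of_isPath hG hP hmarks hr hp (hsp.trans (hpr.mono hle))
      hpr.symm hrp).2.2
    grind

theorem IsDismembering.insert_insert_union_startEdges (hG : (H.deleteEdges F).IsAcyclic)
    (hF : IsDismembering H X F) {P : (H.deleteEdges F).Walk s t} (hP : P.IsPath) (hst : s ≠ t)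
    (hmarks : ∀ v ∈ X ∪ edgeVerts F, (H.deleteEdges F).Reachable s v → v = s ∨ v = t) :
    IsDismembering H (insert s (insert t X)) (F ∪ (P.startEdges ∪ P.reverse.startEdges)) := by
  have hnil : ¬P.Nil := not_nil_of_ne hst
  rw [startEdges_of_not_nil hnil, startEdges_of_not_nil (nil_reverse.not.2 hnil), snd_reverse]
  refine hF.union_of_isDismemberingAt (x := s) ?_ ?_
    fun p hp hsp => isDismemberingAt_insert_insert_union hG hP hmarks hp hsp
  · rintro y (rfl | rfl | hy)
    · exact Or.inr (Reachable.refl _)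
    · exact Or.inr ⟨P⟩
    · exact Or.inl hy
  · intro e he y hye
    have hyP : y ∈ P.support := by
      simp only [mem_union, mem_singleton] at he
      rcases he with rfl | rfl <;> rcases Sym2.mem_iff.1 hye with rfl | rfl
      exacts [P.start_mem_support, P.snd_mem_support, P.end_mem_support,
        P.penultimate_mem_support]
    exact ⟨P.takeUntil y hyP⟩

variable {Pa : (H.deleteEdges F).Walk m a} {Pb : (H.deleteEdges F).Walk m b}

lemma eq_or_mem_fork_of_mem_marks
    (hmarks : ∀ v ∈ X ∪ edgeVerts F, (H.deleteEdges F).Reachable m v → v = a ∨ v = b)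
    (hy : y ∈ insert m X ∪ edgeVerts (F ∪ (Pa.startEdges ∪ Pb.startEdges)))
    (hmy : (H.deleteEdges F).Reachable m y) :
    y = m ∨ (y ∈ Pa.support ∧ (y = a ∨ y = Pa.snd)) ∨
      (y ∈ Pb.support ∧ (y = b ∨ y = Pb.snd)) := by
  have old : y ∈ X ∪ edgeVerts F → y = m ∨ (y ∈ Pa.support ∧ (y = a ∨ y = Pa.snd)) ∨
      (y ∈ Pb.support ∧ (y = b ∨ y = Pb.snd)) := fun h => by
    rcases hmarks y h hmy with rfl | rfl
    · exact Or.inr (Or.inl ⟨Pa.end_mem_support, Or.inl rfl⟩)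
    · exact Or.inr (Or.inr ⟨Pb.end_mem_support, Or.inl rfl⟩)
  rcases hy with (rfl | hy) | ⟨e, he, hye⟩
  · exact Or.inl rfl
  · exact old (Or.inl hy)
  rcases mem_union.1 he with he | he
  · exact old (Or.inr ⟨e, he, hye⟩)
  rcases mem_union.1 he with he | he
  · exact (eq_or_eq_snd_of_mem_startEdges he hye).imp id
      fun (h : y = Pa.snd) => Or.inl ⟨h ▸ Pa.snd_mem_support, Or.inr h⟩
  · exact (eq_or_eq_snd_of_mem_startEdges he hye).imp id
      fun (h : y = Pb.snd) => Or.inr ⟨h ▸ Pb.snd_mem_support, Or.inr h⟩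

lemma eq_or_eq_snd_of_reachable_of_mem_fork (hG : (H.deleteEdges F).IsAcyclic)
    (hPa : Pa.IsPath) (hdisj : ∀ z ∈ Pa.support, z ∈ Pb.support → z = m)
    (hmarks : ∀ v ∈ X ∪ edgeVerts F, (H.deleteEdges F).Reachable m v → v = a ∨ v = b)
    (hp : p ∈ Pa.support) (hpm : p ≠ m)
    (hy : y ∈ insert m X ∪ edgeVerts (F ∪ (Pa.startEdges ∪ Pb.startEdges)))
    (hpy : (H.deleteEdges ↑(F ∪ (Pa.startEdges ∪ Pb.startEdges))).Reachable p y) :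
    y = a ∨ y = Pa.snd := by
  have hmy : (H.deleteEdges F).Reachable m y :=
    Reachable.trans ⟨Pa.takeUntil p hp⟩ (hpy.mono (deleteEdges_anti (by simp)))
  have cut : y ∉ Pb.support := fun hy' => by
    rw [deleteEdges_coe_union] at hpy
    refine hG.not_reachable_deleteEdges_of_fork hPa hdisj ?_ hp hpm hy' hpy.symm
    simp [startEdges_of_not_nil (Pa.not_nil_of_mem_support_of_ne hp hpm)]
  rcases eq_or_mem_fork_of_mem_marks hmarks hy hmy with rfl | ⟨-, hy⟩ | ⟨hy, -⟩
  · exact absurd Pb.start_mem_support cut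
  · exact hy
  · exact absurd hy cut

theorem isDismemberingAt_of_mem_fork (hG : (H.deleteEdges F).IsAcyclic) (hPa : Pa.IsPath)
    (hdisj : ∀ z ∈ Pa.support, z ∈ Pb.support → z = m)
    (hmarks : ∀ v ∈ X ∪ edgeVerts F, (H.deleteEdges F).Reachable m v → v = a ∨ v = b)
    (ha : a ∉ X ∧ #{e ∈ F | a ∈ e} = 1) (hb : b ∉ X)
    (hpM : p ∈ insert m X ∪ edgeVerts (F ∪ (Pa.startEdges ∪ Pb.startEdges)))
    (hp : p ∈ Pa.support) (hpm : p ≠ m) :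
    IsDismemberingAt H (insert m X) (F ∪ (Pa.startEdges ∪ Pb.startEdges)) p := by
  intro q hq r hr hpq hpr hne
  have hpa := eq_or_eq_snd_of_reachable_of_mem_fork hG hPa hdisj hmarks hp hpm hpM
    (Reachable.refl p)
  have hqa := eq_or_eq_snd_of_reachable_of_mem_fork hG hPa hdisj hmarks hp hpm hq hpq
  have hra := eq_or_eq_snd_of_reachable_of_mem_fork hG hPa hdisj hmarks hp hpm hr hpr
  have has : a ≠ Pa.snd := fun h => hne (by grind)
  have hmp : (H.deleteEdges F).Reachable m p := ⟨Pa.takeUntil p hp⟩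
  refine ⟨⟨?_, ?_⟩, by grind⟩
  · rintro (h | hpX)
    · exact hpm h
    · rcases hmarks p (Or.inl hpX) hmp with rfl | rfl
      · exact ha.1 hpX
      · exact hb hpX
  · rcases hpa with rfl | rfl
    · rw [card_filter_mem_union_of_notMem_edgeVerts
        (notMem_edgeVerts_startEdges_union hdisj hp hpm has)]
      exact ha.2
    · have hpF : Pa.snd ∉ edgeVerts F := fun h => by
        rcases hmarks _ (Or.inr h) hmp with h | h
        · exact has h.symm
        · exact hpm (hdisj _ hp (h ▸ Pb.end_mem_support))
      rw [card_filter_mem_union_of_notMem_edgeVerts_left hpF]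
      exact card_filter_snd_mem_startEdges_union hdisj (Pa.not_nil_of_mem_support_of_ne hp hpm)

theorem IsDismembering.insert_union_startEdges_union (hG : (H.deleteEdges F).IsAcyclic)
    (hF : IsDismembering H X F) (hPa : Pa.IsPath) (hPb : Pb.IsPath)
    (hdisj : ∀ z ∈ Pa.support, z ∈ Pb.support → z = m)
    (hmarks : ∀ v ∈ X ∪ edgeVerts F, (H.deleteEdges F).Reachable m v → v = a ∨ v = b)
    (ha : a ∉ X ∧ #{e ∈ F | a ∈ e} = 1) (hb : b ∉ X ∧ #{e ∈ F | b ∈ e} = 1) :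
    IsDismembering H (insert m X) (F ∪ (Pa.startEdges ∪ Pb.startEdges)) := by
  have hdisj' : ∀ z ∈ Pb.support, z ∈ Pa.support → z = m := fun z hzb hza => hdisj z hza hzb
  refine hF.union_of_isDismemberingAt (x := m) ?_ ?_ fun p hp hmp => ?_
  · rintro y (rfl | hy)
    · exact Or.inr (Reachable.refl _)
    · exact Or.inl hy
  · intro e he y hye
    rcases mem_union.1 he with he | he <;>
      rcases eq_or_eq_snd_of_mem_startEdges he hye with rfl | rfl
    exacts [Reachable.refl _, ⟨Pa.takeUntil _ Pa.snd_mem_support⟩, Reachable.refl _,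
      ⟨Pb.takeUntil _ Pb.snd_mem_support⟩]
  by_cases hpm : p = m
  · subst hpm
    intro q hq r hr hpq hpr hne
    rw [deleteEdges_coe_union] at hpq
    exfalso
    rcases eq_or_mem_fork_of_mem_marks hmarks hq (hpq.mono (deleteEdges_le _)) with
      rfl | ⟨hqa, -⟩ | ⟨hqb, -⟩
    · exact hne rfl
    · exact hG.not_reachable_deleteEdges_of_fork hPa hdisj
        (by simp [startEdges_of_not_nil (not_nil_of_mem_support_of_ne hqa (Ne.symm hne))])
        hqa (Ne.symm hne) Pb.start_mem_support hpq
    · exact hG.not_reachable_deleteEdges_of_fork hPb hdisj'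
        (by simp [startEdges_of_not_nil (not_nil_of_mem_support_of_ne hqb (Ne.symm hne))])
        hqb (Ne.symm hne) Pa.start_mem_support hpq
  rcases eq_or_mem_fork_of_mem_marks hmarks hp hmp with h | ⟨hpa, -⟩ | ⟨hpb, -⟩
  · exact absurd h hpm
  · exact isDismemberingAt_of_mem_fork hG hPa hdisj hmarks ha hb.1 hp hpa hpm
  · rw [union_comm Pa.startEdges] at hp ⊢
    exact isDismemberingAt_of_mem_fork hG hPb hdisj' (fun v hv hmv => (hmarks v hv hmv).symm)
      hb ha.1 hp hpb hpm

theorem IsDismembering.exists_insert_of_subsingleton (hG : (H.deleteEdges F).IsAcyclic)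
    (hF : IsDismembering H X F)
    (hx : {v ∈ X ∪ edgeVerts F | (H.deleteEdges F).Reachable x v}.Subsingleton) :
    ∃ D : Finset (Sym2 V), (D : Set (Sym2 V)) ⊆ (H.deleteEdges F).edgeSet ∧ #D ≤ 2 ∧
      IsDismembering H (insert x X) (F ∪ D) := by
  by_cases hs : ∃ s ∈ X ∪ edgeVerts F, (H.deleteEdges F).Reachable x s ∧ x ≠ s
  · obtain ⟨s, hs, ⟨P⟩, hxs⟩ := hs
    refine ⟨P.bypass.startEdges ∪ P.bypass.reverse.startEdges,
      coe_startEdges_union_subset_edgeSet _ _, card_startEdges_union_le _ _, ?_⟩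
    refine (hF.insert_insert_union_startEdges hG P.bypass_isPath hxs fun v hv hxv => ?_).anti
      (Set.insert_subset_insert (Set.subset_insert _ _))
    exact Or.inr (hx ⟨hv, hxv⟩ ⟨hs, ⟨P⟩⟩)
  push Not at hs
  refine ⟨∅, by simp, by simp, hF.union_of_isDismemberingAt (x := x) ?_ (by simp) ?_⟩
  · rintro y (rfl | hy)
    · exact Or.inr (Reachable.refl _)
    · exact Or.inl hy
  have hmark : ∀ y ∈ insert x X ∪ edgeVerts (F ∪ ∅), (H.deleteEdges F).Reachable x y → y = x := by
    rw [union_empty]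
    rintro y ((rfl | hy) | hy) hxy
    · rfl
    · exact (hs y (Or.inl hy) hxy).symm
    · exact (hs y (Or.inr hy) hxy).symm
  intro p hp hxp q hq r hr hpq hpr hne
  rw [union_empty] at hpq
  exact absurd ((hmark p hp hxp).trans (hmark q hq (hxp.trans hpq)).symm) hne

theorem IsDismembering.subsingleton_of_reachable (hF : IsDismembering H X F) (hm : m ∈ X)
    (hxm : (H.deleteEdges F).Reachable x m) :
    {v ∈ X ∪ edgeVerts F | (H.deleteEdges F).Reachable x v}.Subsingleton := by
  have hmark : ∀ v ∈ X ∪ edgeVerts F, (H.deleteEdges F).Reachable x v → v = m :=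
    fun v hv hxv => by_contra fun hvm => (hF.isDismemberingAt (Or.inl hm) v hv v hv
      (hxm.symm.trans hxv) (hxm.symm.trans hxv) (Ne.symm hvm)).1.1 hm
  exact fun v ⟨hv, hxv⟩ w ⟨hw, hxw⟩ => (hmark v hv hxv).trans (hmark w hw hxw).symm

theorem IsDismembering.exists_insert_union_reachable_of_ne (hG : (H.deleteEdges F).IsAcyclic)
    (hF : IsDismembering H X F) (ha : a ∈ X ∪ edgeVerts F) (hb : b ∈ X ∪ edgeVerts F)
    (hxa : (H.deleteEdges F).Reachable x a) (hxb : (H.deleteEdges F).Reachable x b)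
    (hab : a ≠ b) :
    ∃ m, ∃ D : Finset (Sym2 V), (D : Set (Sym2 V)) ⊆ (H.deleteEdges F).edgeSet ∧ #D ≤ 2 ∧
      IsDismembering H (insert m X) (F ∪ D) ∧ (H.deleteEdges ↑(F ∪ D)).Reachable x m := by
  have hmarks : ∀ v ∈ X ∪ edgeVerts F, (H.deleteEdges F).Reachable x v → v = a ∨ v = b :=
    fun v hv hxv => (hF.isDismemberingAt ha b hb v hv (hxa.symm.trans hxb)
      (hxa.symm.trans hxv) hab).2
  obtain ⟨P, hP⟩ : ∃ P : (H.deleteEdges F).Walk a b, P.IsPath :=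
    ⟨_, (hxa.symm.trans hxb).some.bypass_isPath⟩
  -- `m` is where a path from `x` first meets `P`
  obtain ⟨m, hm, R, -, hRP⟩ := hxa.some.exists_isPath_forall_mem_support_eq
    (S := {z | z ∈ P.support}) P.start_mem_support
  set Pa := (P.takeUntil m hm).reverse
  set Pb := P.dropUntil m hm
  have hdisj : ∀ z ∈ Pa.support, z ∈ Pb.support → z = m := fun z hza hzb =>
    hP.eq_of_mem_support_takeUntil_of_mem_support_dropUntil hm (by simpa [Pa] using hza) hzb
  refine ⟨m, Pa.startEdges ∪ Pb.startEdges, coe_startEdges_union_subset_edgeSet _ _,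
    card_startEdges_union_le _ _, hF.insert_union_startEdges_union hG (hP.takeUntil hm).reverse
    (hP.dropUntil hm) hdisj (fun v hv hmv => hmarks v hv (Reachable.trans ⟨R⟩ hmv))
    (hF.isDismemberingAt ha b hb b hb (hxa.symm.trans hxb) (hxa.symm.trans hxb) hab).1
    (hF.isDismemberingAt hb a ha a ha (hxb.symm.trans hxa) (hxb.symm.trans hxa) hab.symm).1, ?_⟩
  rw [deleteEdges_coe_union]
  refine reachable_deleteEdges_startEdges_union R fun z hz hzP => hRP z hz ?_
  rcases hzP with hzP | hzP
  · exact P.support_takeUntil_subset_support hm (by simpa [Pa] using hzP)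
  · exact P.support_dropUntil_subset_support hm hzP

theorem IsDismembering.exists_insert_of_ne (hG : (H.deleteEdges F).IsAcyclic)
    (hF : IsDismembering H X F) (ha : a ∈ X ∪ edgeVerts F) (hb : b ∈ X ∪ edgeVerts F)
    (hxa : (H.deleteEdges F).Reachable x a) (hxb : (H.deleteEdges F).Reachable x b)
    (hab : a ≠ b) :
    ∃ D : Finset (Sym2 V), (D : Set (Sym2 V)) ⊆ (H.deleteEdges F).edgeSet ∧ #D ≤ 4 ∧
      IsDismembering H (insert x X) (F ∪ D) := by
  obtain ⟨m, D₁, hD₁, hD₁card, hF₁, hxm⟩ :=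
    hF.exists_insert_union_reachable_of_ne hG ha hb hxa hxb hab
  obtain ⟨D₂, hD₂, hD₂card, hF₂⟩ := hF₁.exists_insert_of_subsingleton
    (hG.anti (deleteEdges_anti (coe_subset.2 subset_union_left)))
    (hF₁.subsingleton_of_reachable (Set.mem_insert _ _) hxm)
  refine ⟨D₁ ∪ D₂, ?_, ?_, ?_⟩
  · rw [coe_union]
    refine Set.union_subset hD₁ (hD₂.trans ?_)
    rw [deleteEdges_coe_union]
    exact edgeSet_mono (deleteEdges_le _)
  · have := card_union_le D₁ D₂
    omega
  · rw [← union_assoc]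
    exact hF₂.anti (Set.insert_subset_insert (Set.subset_insert _ _))

theorem IsDismembering.exists_insert (hG : (H.deleteEdges F).IsAcyclic)
    (hF : IsDismembering H X F) (x : V) :
    ∃ D : Finset (Sym2 V), (D : Set (Sym2 V)) ⊆ (H.deleteEdges F).edgeSet ∧ #D ≤ 4 ∧
      IsDismembering H (insert x X) (F ∪ D) := by
  by_cases hx : {v ∈ X ∪ edgeVerts F | (H.deleteEdges F).Reachable x v}.Subsingleton
  · obtain ⟨D, hD, hcard, hFD⟩ := hF.exists_insert_of_subsingleton hG hx
    exact ⟨D, hD, hcard.trans (by norm_num), hFD⟩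
  · obtain ⟨a, ⟨ha, hxa⟩, b, ⟨hb, hxb⟩, hab⟩ := Set.not_subsingleton_iff.1 hx
    exact hF.exists_insert_of_ne hG ha hb hxa hxb hab

theorem SimpleGraph.IsAcyclic.exists_isDismembering (hH : H.IsAcyclic) (X : Finset V) :
    ∃ F : Finset (Sym2 V), (F : Set (Sym2 V)) ⊆ H.edgeSet ∧ #F ≤ 4 * #X ∧
      IsDismembering H X F := by
  induction X using Finset.induction_on with
  | empty => exact ⟨∅, by simp, by simp, fun c => Or.inl (by simp [edgeVerts])⟩
  | @insert x X hx ih =>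
    obtain ⟨F, hFH, hcard, hF⟩ := ih
    obtain ⟨D, hD, hDcard, hFD⟩ := hF.exists_insert (hH.anti (deleteEdges_le _)) x
    refine ⟨F ∪ D, ?_, ?_, by rwa [coe_insert]⟩
    · rw [coe_union]
      exact Set.union_subset hFH (hD.trans (edgeSet_mono (deleteEdges_le _)))
    · have := card_union_le F D
      rw [card_insert_of_notMem hx]
      omega

theorem card_biUnion_toFinset_le (F : Finset (Sym2 V)) : #(F.biUnion Sym2.toFinset) ≤ 2 * #F := by
  rw [mul_comm]
  refine card_biUnion_le_card_mul _ _ _ fun e _ => ?_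
  rw [Sym2.card_toFinset]
  split_ifs <;> norm_num

theorem coe_biUnion_toFinset (F : Finset (Sym2 V)) :
    (F.biUnion Sym2.toFinset : Set V) = edgeVerts F := by
  ext v
  simp [edgeVerts]

theorem stmt4_general {V : Type*} [DecidableEq V] (G : SimpleGraph V)
    (F₀ : Finset (Sym2 V))
    (hforest : (G.deleteEdges (F₀ : Set (Sym2 V))).IsAcyclic) :
    ∃ F : Finset (Sym2 V),
      (F : Set (Sym2 V)) ⊆ G.edgeSet ∧ (∀ e ∈ F, e ∉ F₀) ∧
      F.card ≤ 10 * F₀.card ∧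
      IsDismembering (G.deleteEdges (F₀ : Set (Sym2 V))) (edgeVerts F₀) F := by
  obtain ⟨F, hFsub, hcard, hF⟩ := hforest.exists_isDismembering (F₀.biUnion Sym2.toFinset)
  rw [SimpleGraph.edgeSet_deleteEdges] at hFsub
  have := card_biUnion_toFinset_le F₀
  refine ⟨F, fun e he => (hFsub he).1, fun e he he₀ => (hFsub he).2 he₀, by omega, ?_⟩
  rwa [coe_biUnion_toFinset] at hF

/-- If deleting the edge set `F₀` from `G` leaves a forest, then there is a set
`F ⊆ E(G) ∖ F₀` with `|F| ≤ 10 |F₀|` that is dismembering for `(G ∖ F₀, V(F₀))`. -/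
theorem stmt4 {V : Type*} [Fintype V] [DecidableEq V] (G : SimpleGraph V)
    (F₀ : Finset (Sym2 V)) (hF₀ : (F₀ : Set (Sym2 V)) ⊆ G.edgeSet)
    (hforest : (G.deleteEdges (F₀ : Set (Sym2 V))).IsAcyclic) :
    ∃ F : Finset (Sym2 V),
      (F : Set (Sym2 V)) ⊆ G.edgeSet ∧ (∀ e ∈ F, e ∉ F₀) ∧
      F.card ≤ 10 * F₀.card ∧
      IsDismembering (G.deleteEdges (F₀ : Set (Sym2 V))) (edgeVerts F₀) F :=
  stmt4_general G F₀ hforest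
end

section
/- Let T be a finite tree (a nonempty connected acyclic simple graph) and let w : V(T) → ℕ be a weight function. For a vertex v of T, let m(v) denote the maximum of w(K) := ∑_{u ∈ K} w(u) over the connected components K of T − v (with m(v) = 0 if T − v is empty). If v is a centroid of (T,w), i.e. v minimizes m over all vertices of T, then every connected component K of T − v satisfies 2·w(K) ≤ w(T), where w(T) = ∑_{u ∈ V(T)} w(u). -/
variable {V : Type*}

/-- The total weight of (the support of) a connected component. -/
noncomputable def suppWeight {α : Type*} (G : SimpleGraph α) (w : α → ℕ)
    (c : G.ConnectedComponent) : ℕ :=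
  ∑ᶠ u ∈ c.supp, w u

/-- `maxCompWeight T w v` is the maximum weight of a connected component of `T − v`
(and `0` if `T − v` has no component). -/
noncomputable def maxCompWeight (T : SimpleGraph V) (w : V → ℕ) (v : V) : ℕ :=
  sSup {n | ∃ c : (T.induce {u | u ≠ v}).ConnectedComponent,
    n = suppWeight (T.induce {u | u ≠ v}) (fun u => w u.1) c}

/-!
Let `x` be a centroid and suppose some component `c` of `T − x` is heavy, `2 w(c) > w(T)`.
Let `u` be the neighbour of `x` in `c`; it is unique since `T` is acyclic. In `T − u` the
component of `x` is disjoint from `c`, hence lighter than `c`, and every other component lies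
strictly inside `c`. As `m(u) ≥ m(x) ≥ w(c)`, a heaviest component `D` of `T − u` is of the second
kind, so `m(u) = w(D) ≤ w(c) ≤ m(x)`: `u` is again a centroid, with a heavy component `D`
smaller than `c`. Induction on `|c|` rules this out.
-/

open Finset

namespace SimpleGraph

local notation:70 G:70 " -ᵥ " x:71 => SimpleGraph.induce (Set.ofPred fun u => u ≠ x) G

section compFinset

variable {G : SimpleGraph V} {s : Set V} [Fintype V]

open Classical in
noncomputable def compFinset (c : (G.induce s).ConnectedComponent) : Finset V :=
  {a | ∃ h : a ∈ s, (G.induce s).connectedComponentMk ⟨a, h⟩ = c}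

theorem mem_compFinset {c : (G.induce s).ConnectedComponent} {a : V} :
    a ∈ compFinset c ↔ ∃ h : a ∈ s, (G.induce s).connectedComponentMk ⟨a, h⟩ = c := by
  simp [compFinset]

theorem coe_compFinset (c : (G.induce s).ConnectedComponent) :
    (compFinset c : Set V) = Subtype.val '' c.supp := by
  ext a
  simp [mem_compFinset]

theorem suppWeight_induce_eq_sum (w : V → ℕ) (c : (G.induce s).ConnectedComponent) :
    suppWeight (G.induce s) (fun u => w u.1) c = ∑ a ∈ compFinset c, w a := by
  rw [suppWeight, ← finsum_mem_image (f := w) Subtype.val_injective.injOn, ← coe_compFinset,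
    finsum_mem_coe_finset]

theorem mem_compFinset_of_adj {c : (G.induce s).ConnectedComponent} {a b : V} (ha : a ∈ s)
    (hb : b ∈ compFinset c) (hab : G.Adj a b) : a ∈ compFinset c := by
  obtain ⟨_, rfl⟩ := mem_compFinset.1 hb
  exact mem_compFinset.2 ⟨ha, ConnectedComponent.connectedComponentMk_eq_of_adj hab⟩

end compFinset

theorem Walk.notMem_support_map_induce {G : SimpleGraph V} {s : Set V} {a b : s}
    (p : (G.induce s).Walk a b) {y : V} (hy : y ∉ s) :
    y ∉ (p.map (Embedding.induce s).toHom).support := by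
  simp only [Walk.support_map, List.mem_map, not_exists, not_and]
  rintro z - rfl
  exact hy z.2

section deleteVertex

variable {G : SimpleGraph V} [Fintype V] {x u : V} {c : (G -ᵥ x).ConnectedComponent}

theorem exists_adj_mem_compFinset (hG : G.Connected) (c : (G -ᵥ x).ConnectedComponent) :
    ∃ y ∈ compFinset c, G.Adj x y := by
  obtain ⟨⟨b, hbx⟩, rfl⟩ := c.exists_rep
  obtain ⟨p, hp⟩ := hG.preconnected.exists_isPath x b
  cases p with
  | nil => exact absurd rfl hbx
  | cons hxy q =>
    have hxq : ∀ z ∈ q.support, z ≠ x := fun z hz hzx =>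
      ((Walk.cons_isPath_iff hxy q).1 hp).2 (hzx ▸ hz)
    exact ⟨_, mem_compFinset.2 ⟨hxy.ne', ConnectedComponent.sound ⟨q.induce _ hxq⟩⟩, hxy⟩

theorem eq_of_adj_of_mem_compFinset (hG : G.IsAcyclic) {y y' : V} (hy : y ∈ compFinset c)
    (hy' : y' ∈ compFinset c) (hxy : G.Adj x y) (hxy' : G.Adj x y') : y = y' := by
  classical
  obtain ⟨_, hcy⟩ := mem_compFinset.1 hy
  obtain ⟨_, rfl⟩ := mem_compFinset.1 hy'
  obtain ⟨q⟩ := ConnectedComponent.exact hcy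
  let q' : G.Path y y' := (q.map (Embedding.induce _).toHom).toPath
  have hxq' : x ∉ (q' : G.Walk y y').support := fun hx =>
    q.notMem_support_map_induce (not_not_intro rfl) (Walk.support_toPath_subset_support _ hx)
  have hp := (Walk.cons_isPath_iff hxy _).2 ⟨q'.2, hxq'⟩
  simpa using (hG.eq_snd_of_adj_start hp hxy' (by simp)).symm

theorem disjoint_compFinset_connectedComponentMk (hG : G.IsAcyclic) (hu : u ∈ compFinset c)
    (hxu : G.Adj x u) :
    Disjoint (compFinset ((G -ᵥ u).connectedComponentMk ⟨x, hxu.ne⟩)) (compFinset c) := by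
  rw [Finset.disjoint_left]
  intro a hacx hac
  -- a walk from `x` to `a` avoiding `u` must enter `c` along an edge, and the only edge into `c`
  -- from outside is `x u`
  obtain ⟨hau, hmk⟩ := mem_compFinset.1 hacx
  obtain ⟨p⟩ := ConnectedComponent.exact hmk.symm
  let p' : G.Walk x a := p.map (Embedding.induce _).toHom
  obtain ⟨d, hd, hd₁, hd₂⟩ := p'.exists_boundary_dart (compFinset c : Set V)ᶜ
    (fun hx => (mem_compFinset.1 hx).1 rfl) (fun ha => ha hac)
  rw [Set.notMem_compl_iff, mem_coe] at hd₂
  have hdu : d.snd ≠ u := by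
    intro h
    have hd₃ := p'.dart_snd_mem_support_of_mem_darts hd
    rw [h] at hd₃
    exact p.notMem_support_map_induce (not_not_intro rfl) hd₃
  by_cases hdx : d.fst = x
  · exact hdu (eq_of_adj_of_mem_compFinset hG hd₂ hu (hdx ▸ d.adj) hxu)
  · exact hd₁ (mem_compFinset_of_adj hdx hd₂ d.adj)

theorem compFinset_ssubset_of_ne (hG : G.Connected) (hu : u ∈ compFinset c) (hxu : x ≠ u)
    {D : (G -ᵥ u).ConnectedComponent} (hD : D ≠ (G -ᵥ u).connectedComponentMk ⟨x, hxu⟩) :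
    compFinset D ⊂ compFinset c := by
  classical
  have hsub : compFinset D ⊆ compFinset c := by
    intro a ha
    obtain ⟨hau, rfl⟩ := mem_compFinset.1 ha
    by_contra hac
    have hax : a ≠ x := by rintro rfl; exact hD rfl
    obtain ⟨P, hP⟩ := hG.preconnected.exists_isPath a x
    -- either `P` reaches `u` before `x`, joining `a` to `u` in `G − x`, or it joins `a` to `x`
    -- in `G − u`
    by_cases huP : u ∈ P.support
    · have hxP := Walk.endpoint_notMem_support_takeUntil hP huP hxu
      obtain ⟨_, hcu⟩ := mem_compFinset.1 hu
      refine hac (mem_compFinset.2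
        ⟨hax, (ConnectedComponent.sound ⟨(P.takeUntil u huP).induce _ ?_⟩).trans hcu⟩)
      exact fun z hz hzx => hxP (hzx ▸ hz)
    · exact hD (ConnectedComponent.sound ⟨P.induce _ fun z hz (hzu : z = u) => huP (hzu ▸ hz)⟩)
  exact (ssubset_iff_of_subset hsub).2 ⟨u, hu, fun huD => (mem_compFinset.1 huD).1 rfl⟩

end deleteVertex

section centroid

variable [Fintype V] (T : SimpleGraph V) (w : V → ℕ)

def IsCentroid (x : V) : Prop :=
  ∀ y, maxCompWeight T w x ≤ maxCompWeight T w y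

theorem bddAbove_compWeights (x : V) :
    BddAbove
      {n | ∃ c : (T -ᵥ x).ConnectedComponent, n = suppWeight (T -ᵥ x) (fun u => w u.1) c} := by
  refine ⟨∑ a, w a, ?_⟩
  rintro n ⟨c, rfl⟩
  rw [suppWeight_induce_eq_sum]
  exact sum_le_sum_of_subset (subset_univ _)

theorem sum_compFinset_le_maxCompWeight {x : V} (c : (T -ᵥ x).ConnectedComponent) :
    ∑ a ∈ compFinset c, w a ≤ maxCompWeight T w x :=
  suppWeight_induce_eq_sum w c ▸ le_csSup (bddAbove_compWeights T w x) ⟨c, rfl⟩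

theorem exists_sum_compFinset_eq_maxCompWeight {x y : V} (hyx : y ≠ x) :
    ∃ c : (T -ᵥ x).ConnectedComponent, ∑ a ∈ compFinset c, w a = maxCompWeight T w x := by
  obtain ⟨c, hc⟩ := Nat.sSup_mem
    (by exact ⟨_, (T -ᵥ x).connectedComponentMk ⟨y, hyx⟩, rfl⟩) (bddAbove_compWeights T w x)
  exact ⟨c, by rw [← suppWeight_induce_eq_sum, ← hc]; rfl⟩

variable {T w}

theorem IsCentroid.two_mul_sum_compFinset_le (hT : T.IsTree) {x : V} (hx : IsCentroid T w x)
    (c : (T -ᵥ x).ConnectedComponent) : 2 * ∑ a ∈ compFinset c, w a ≤ ∑ a, w a := by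
  induction hn : #(compFinset c) using Nat.strong_induction_on generalizing x c with
  | _ n ih =>
  classical
  by_contra! hheavy
  obtain ⟨u, hu, hxu⟩ := exists_adj_mem_compFinset hT.connected c
  set cx := (T -ᵥ u).connectedComponentMk ⟨x, hxu.ne⟩
  obtain ⟨D, hD⟩ := exists_sum_compFinset_eq_maxCompWeight T w hxu.ne
  have hcD : ∑ a ∈ compFinset c, w a ≤ ∑ a ∈ compFinset D, w a :=
    (sum_compFinset_le_maxCompWeight T w c).trans (hD ▸ hx u)
  have hcx : ∑ a ∈ compFinset cx, w a + ∑ a ∈ compFinset c, w a ≤ ∑ a, w a := by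
    rw [← sum_union (disjoint_compFinset_connectedComponentMk hT.isAcyclic hu hxu)]
    exact sum_le_sum_of_subset (subset_univ _)
  have hDcx : D ≠ cx := by rintro rfl; omega
  have hDc := compFinset_ssubset_of_ne hT.connected hu hxu.ne hDcx
  have hu_centroid : IsCentroid T w u := fun y =>
    calc maxCompWeight T w u = ∑ a ∈ compFinset D, w a := hD.symm
      _ ≤ ∑ a ∈ compFinset c, w a := sum_le_sum_of_subset hDc.subset
      _ ≤ maxCompWeight T w x := sum_compFinset_le_maxCompWeight T w c
      _ ≤ maxCompWeight T w y := hx y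
  have hD_light := ih _ (hn ▸ card_lt_card hDc) hu_centroid D rfl
  omega

end centroid

end SimpleGraph

/-- If `v` is a centroid of the weighted tree `(T, w)`, then every connected
component `K` of `T − v` satisfies `2 w(K) ≤ w(T)`. -/
theorem stmt6 {V : Type*} [Fintype V] (T : SimpleGraph V) (hT : T.IsTree)
    (w : V → ℕ) (v : V) (hv : ∀ u : V, maxCompWeight T w v ≤ maxCompWeight T w u) :
    ∀ c : (T.induce {u | u ≠ v}).ConnectedComponent,
      2 * suppWeight (T.induce {u | u ≠ v}) (fun u => w u.1) c ≤ ∑ u, w u := by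
  intro c
  rw [SimpleGraph.suppWeight_induce_eq_sum]
  exact SimpleGraph.IsCentroid.two_mul_sum_compFinset_le hT hv c
end

section
/- Let S be a finite multiset of natural numbers such that 3·s ≤ 2·(∑ S) holds for every s ∈ S, where ∑ S denotes the sum of the elements of S (with multiplicity). Then there exists a partition of S into two multisets S₁ and S₂ (i.e. S₁ + S₂ = S) such that 3·(∑ S₁) ≥ ∑ S and 3·(∑ S₂) ≥ ∑ S. -/
/-- If every element `s` of a finite multiset `S` of naturals satisfies
`3 s ≤ 2 ∑ S`, then `S` can be partitioned into `S₁` and `S₂` with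
`3 ∑ S₁ ≥ ∑ S` and `3 ∑ S₂ ≥ ∑ S`. -/
theorem stmt7 (S : Multiset ℕ) (h : ∀ s ∈ S, 3 * s ≤ 2 * S.sum) :
    ∃ S₁ S₂ : Multiset ℕ, S₁ + S₂ = S ∧ S.sum ≤ 3 * S₁.sum ∧ S.sum ≤ 3 * S₂.sum := by
  classical
  set T := S.sum with hT
  have hex : ∃ n, ∃ M : Multiset ℕ, M ≤ S ∧ T ≤ 3 * M.sum ∧ M.sum = n :=
    ⟨T, S, le_refl _, by omega, rfl⟩
  obtain ⟨M, hMS, hM3, hMn⟩ := Nat.find_spec hex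
  have hmin : ∀ M' : Multiset ℕ, M' ≤ S → T ≤ 3 * M'.sum → M.sum ≤ M'.sum := by
    intro M' h1 h2
    rw [hMn]
    exact Nat.find_min' hex ⟨M', h1, h2, rfl⟩
  have key : 3 * M.sum ≤ 2 * T := by
    by_cases hM0 : ∀ a ∈ M, a = 0
    · have : M.sum = 0 := Multiset.sum_eq_zero hM0
      omega
    · push_neg at hM0
      obtain ⟨a, haM, ha0⟩ := hM0
      have hsum : (M.erase a).sum + a = M.sum := by
        rw [add_comm, ← Multiset.sum_cons, Multiset.cons_erase haM]
      have herase : ¬ (T ≤ 3 * (M.erase a).sum) := by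
        intro hc
        have := hmin (M.erase a) ((Multiset.erase_le a M).trans hMS) hc
        omega
      have haS : a ∈ S := Multiset.mem_of_le hMS haM
      have ha2 := h a haS
      by_cases h3a : T < 3 * a
      · have hsingle := hmin {a} (Multiset.singleton_le.mpr haS)
          (by simp; omega)
        have hle : a ≤ M.sum := Multiset.le_sum_of_mem haM
        simp at hsingle
        omega
      · omega
  refine ⟨M, S - M, add_tsub_cancel_of_le hMS, ?_, ?_⟩
  · omega
  · have : M.sum + (S - M).sum = T := by
      rw [← Multiset.sum_add, add_tsub_cancel_of_le hMS]
    omega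
end

section
/- Let ε > 0 be a real number, let X be a finite set, and let ω be a positive integer. Then there exists a finite set 𝒞 of mappings c : X → {0,1,…,ω} with |𝒞| ≤ (⌊|X|/ε⌋ + 1)^{|X|} such that for every mapping c' : X → {0,1,…,ω} there exists some c ∈ 𝒞 with ∑_{x∈X} |c(x) − c'(x)| ≤ ε·ω. -/
open Finset

/-! Round every coordinate of `c'` down to a multiple of a step `s` with
`|X| (s - 1) ≤ ε ω ≤ |X| s` (essentially `s = ⌈ε ω / |X|⌉`). Each coordinate moves by at most
`s - 1`, so the total error is at most `ε ω`, and each coordinate of a rounded map takes one of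
`ω / s + 1 ≤ ⌊|X| / ε⌋ + 1` values. -/

section MultiplesGrid

variable (X : Type*) [Fintype X] [DecidableEq X]

def multiplesGrid (ω s : ℕ) : Finset (X → ℕ) :=
  (Fintype.piFinset fun _ : X => range (ω / s + 1)).image fun f x => s * f x

variable {X}

theorem le_of_mem_multiplesGrid {ω s : ℕ} {c : X → ℕ} (hc : c ∈ multiplesGrid X ω s) (x : X) :
    c x ≤ ω := by
  obtain ⟨f, hf, rfl⟩ := mem_image.mp hc
  have hfx : f x ≤ ω / s := Nat.lt_succ_iff.mp (mem_range.mp (Fintype.mem_piFinset.mp hf x))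
  calc s * f x ≤ s * (ω / s) := Nat.mul_le_mul_left s hfx
    _ ≤ ω := Nat.mul_div_le ω s

theorem card_multiplesGrid_le (ω s : ℕ) :
    (multiplesGrid X ω s).card ≤ (ω / s + 1) ^ Fintype.card X := by
  calc (multiplesGrid X ω s).card
      ≤ (Fintype.piFinset fun _ : X => range (ω / s + 1)).card := card_image_le
    _ = (ω / s + 1) ^ Fintype.card X := by simp [Fintype.card_piFinset]

theorem mul_div_mem_multiplesGrid {ω : ℕ} (s : ℕ) {c : X → ℕ} (hc : ∀ x, c x ≤ ω) :
    (fun x => s * (c x / s)) ∈ multiplesGrid X ω s :=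
  mem_image.mpr ⟨fun x => c x / s, Fintype.mem_piFinset.mpr fun x =>
    mem_range.mpr (Nat.lt_succ_of_le (Nat.div_le_div_right (hc x))), rfl⟩

end MultiplesGrid

theorem abs_mul_div_sub_le (a : ℕ) {s : ℕ} (hs : 0 < s) :
    |((s * (a / s) : ℕ) : ℝ) - a| ≤ s - 1 := by
  have hdecomp : (a : ℝ) = (s * (a / s) : ℕ) + (a % s : ℕ) := by
    exact_mod_cast (Nat.div_add_mod a s).symm
  have hmod : ((a % s : ℕ) : ℝ) ≤ s - 1 := by
    rw [le_sub_iff_add_le]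
    exact_mod_cast Nat.mod_lt a hs
  rwa [hdecomp, sub_add_cancel_left, abs_neg, Nat.abs_cast]

theorem sum_abs_mul_div_sub_le {X : Type*} [Fintype X] (c : X → ℕ) {s : ℕ} (hs : 0 < s) :
    ∑ x, |((s * (c x / s) : ℕ) : ℝ) - c x| ≤ Fintype.card X * ((s : ℝ) - 1) := by
  calc ∑ x, |((s * (c x / s) : ℕ) : ℝ) - c x| ≤ ∑ _x : X, ((s : ℝ) - 1) :=
        sum_le_sum fun x _ => abs_mul_div_sub_le (c x) hs
    _ = Fintype.card X * ((s : ℝ) - 1) := by rw [sum_const, card_univ, nsmul_eq_mul]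

theorem exists_step_le_floor {ε : ℝ} (hε : 0 < ε) (n ω : ℕ) :
    ∃ s : ℕ, 0 < s ∧ (n : ℝ) * (s - 1) ≤ ε * ω ∧ ω / s ≤ ⌊(n : ℝ) / ε⌋₊ := by
  rcases n.eq_zero_or_pos with rfl | hn
  · refine ⟨ω + 1, ω.succ_pos, by simp; positivity, ?_⟩
    rw [Nat.div_eq_of_lt ω.lt_succ_self]
    exact Nat.zero_le _
  · have hn' : (0 : ℝ) < n := by exact_mod_cast hn
    set t := ε * ω / n
    have ht : 0 ≤ t := by positivity
    refine ⟨max 1 ⌈t⌉₊, by positivity, ?_, ?_⟩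
    · have hs : ((max 1 ⌈t⌉₊ : ℕ) : ℝ) ≤ t + 1 := by
        rw [Nat.cast_max, Nat.cast_one]
        exact max_le (by linarith) (Nat.ceil_lt_add_one ht).le
      calc (n : ℝ) * ((max 1 ⌈t⌉₊ : ℕ) - 1) ≤ n * t := by gcongr; linarith
        _ = ε * ω := mul_div_cancel₀ _ hn'.ne'
    · have hs : t ≤ ((max 1 ⌈t⌉₊ : ℕ) : ℝ) :=
        (Nat.le_ceil t).trans (by exact_mod_cast le_max_right 1 ⌈t⌉₊)
      have hs0 : (0 : ℝ) < (max 1 ⌈t⌉₊ : ℕ) := by positivity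
      refine Nat.le_floor ((Nat.cast_div_le).trans ?_)
      rw [div_le_div_iff₀ hs0 hε]
      calc (ω : ℝ) * ε = n * t := by rw [mul_div_cancel₀ _ hn'.ne', mul_comm]
        _ ≤ n * (max 1 ⌈t⌉₊ : ℕ) := by gcongr

theorem stmt9_general {X : Type*} [Fintype X] [DecidableEq X] (ε : ℝ) (hε : 0 < ε)
    (ω : ℕ) :
    ∃ 𝒞 : Finset (X → ℕ),
      (∀ c ∈ 𝒞, ∀ x, c x ≤ ω) ∧
      𝒞.card ≤ (Nat.floor ((Fintype.card X : ℝ) / ε) + 1) ^ Fintype.card X ∧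
      ∀ c' : X → ℕ, (∀ x, c' x ≤ ω) →
        ∃ c ∈ 𝒞, (∑ x, |(c x : ℝ) - (c' x : ℝ)|) ≤ ε * ω := by
  obtain ⟨s, hs, herror, hvalues⟩ := exists_step_le_floor hε (Fintype.card X) ω
  refine ⟨multiplesGrid X ω s, fun c hc => le_of_mem_multiplesGrid hc, ?_, ?_⟩
  · exact (card_multiplesGrid_le ω s).trans (Nat.pow_le_pow_left (by omega) _)
  · intro c' hc'
    exact ⟨_, mul_div_mem_multiplesGrid s hc', (sum_abs_mul_div_sub_le c' hs).trans herror⟩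

/-- For every `ε > 0`, finite set `X` and positive integer `ω`, there is a set `𝒞`
of at most `(⌊|X|/ε⌋ + 1)^{|X|}` mappings `c : X → {0, …, ω}` such that every mapping
`c' : X → {0, …, ω}` satisfies `∑_x |c(x) − c'(x)| ≤ ε ω` for some `c ∈ 𝒞`. -/
theorem stmt9 {X : Type*} [Fintype X] [DecidableEq X] (ε : ℝ) (hε : 0 < ε)
    (ω : ℕ) (hω : 0 < ω) :
    ∃ 𝒞 : Finset (X → ℕ),
      (∀ c ∈ 𝒞, ∀ x, c x ≤ ω) ∧
      𝒞.card ≤ (Nat.floor ((Fintype.card X : ℝ) / ε) + 1) ^ Fintype.card X ∧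
      ∀ c' : X → ℕ, (∀ x, c' x ≤ ω) →
        ∃ c ∈ 𝒞, (∑ x, |(c x : ℝ) - (c' x : ℝ)|) ≤ ε * ω :=
  stmt9_general ε hε ω
end

section
/- Let T be a finite tree (a nonempty connected acyclic simple graph) and let w : V(T) → ℕ be a weight function with ∑_{v∈V(T)} w(v) ≥ 2. Then there exists an orientation D of T such that 49·R(D,w) ≥ (∑_{v∈V(T)} w(v))². -/
open Finset

variable {V : Type*}

/-- `D` is an orientation of the simple graph `G`: its arcs are exactly one of the
two directions of each edge of `G`, and nothing else. -/
def IsGraphOrientation (G : SimpleGraph V) (D : V → V → Prop) : Prop :=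
  (∀ u v, D u v → G.Adj u v) ∧ (∀ u v, G.Adj u v → (D u v ↔ ¬ D v u))

/-!
Let `W = ∑ w` and let `c` minimise `∑ᵤ w u · d(c, u)`. Comparing `c` with a neighbour `x` shows
that the branch of the tree at `c` through `x` has weight at most `W / 2`. Split the branches into
two groups of weights `a ≥ b` with `a - b ≤ W / 2`, orient the first group towards `c` and the
second away from `c`. Then every vertex of the first group reaches `c` and `c` reaches every
vertex of the second group, so `R + m ≥ (m + a)(m + b)` for `m = w c`. This gives `W² ≤ 49 R`
both when `7m ≥ W` and when `a + b > 6W / 7` (then `4ab = (a + b)² - (a - b)²` is large).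
-/

namespace SimpleGraph

variable {G : SimpleGraph V}

lemma Reachable.exists_adj_dist_lt {u v : V} (h : G.Reachable u v) (hne : u ≠ v) :
    ∃ x, G.Adj u x ∧ G.dist x v < G.dist u v := by
  obtain ⟨p, hp⟩ := h.exists_walk_length_eq_dist
  cases p with
  | nil => exact absurd rfl hne
  | cons hadj q =>
    refine ⟨_, hadj, ?_⟩
    have := G.dist_le q
    simp only [Walk.length_cons] at hp
    omega

lemma IsTree.eq_of_adj_of_dist_lt (hT : G.IsTree) {u v x y : V} (hx : G.Adj u x) (hy : G.Adj u y)
    (hxv : G.dist x v < G.dist u v) (hyv : G.dist y v < G.dist u v) : x = y := by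
  classical
  have extend : ∀ {z}, G.Adj u z → G.dist z v < G.dist u v →
      ∃ p : G.Walk u v, p.IsPath ∧ p.snd = z := by
    intro z hz hzv
    obtain ⟨q, hq, hql⟩ := (hT.connected z v).exists_path_of_dist
    have hu : u ∉ q.support := fun hmem => by
      have := G.dist_le (q.dropUntil u hmem)
      have := q.length_dropUntil_le_length hmem
      omega
    exact ⟨.cons hz q, hq.cons hu, Walk.snd_cons q hz⟩
  obtain ⟨p, hp, rfl⟩ := extend hx hxv
  obtain ⟨p', hp', rfl⟩ := extend hy hyv
  have := (hT.isAcyclic.subsingleton_path u v).elim ⟨p, hp⟩ ⟨p', hp'⟩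
  rw [Subtype.mk.inj this]

open Classical in
noncomputable def stepToward (G : SimpleGraph V) (c u : V) : V :=
  if h : ∃ x, G.Adj c x ∧ G.dist x u < G.dist c u then h.choose else c

lemma Reachable.stepToward_spec {c u : V} (h : G.Reachable c u) (hne : c ≠ u) :
    G.Adj c (G.stepToward c u) ∧ G.dist (G.stepToward c u) u < G.dist c u := by
  have hex := h.exists_adj_dist_lt hne
  rw [stepToward, dif_pos hex]
  exact hex.choose_spec

lemma IsTree.stepToward_eq_iff (hT : G.IsTree) {c u x : V} (hne : c ≠ u) (hx : G.Adj c x) :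
    G.stepToward c u = x ↔ G.dist x u < G.dist c u := by
  obtain ⟨hadj, hlt⟩ := (hT.connected c u).stepToward_spec hne
  exact ⟨fun h => h ▸ hlt, fun h => hT.eq_of_adj_of_dist_lt hadj hx hlt h⟩

lemma IsTree.stepToward_eq_of_adj (hT : G.IsTree) {c u p : V} (hp : c ≠ p) (hup : G.Adj u p)
    (hlt : G.dist c p < G.dist c u) : G.stepToward c u = G.stepToward c p := by
  obtain ⟨hadj, hxp⟩ := (hT.connected c p).stepToward_spec hp
  have hcu := hT.dist_eq_dist_add_one_of_adj c hup
  have hxu := hT.dist_eq_dist_add_one_of_adj (G.stepToward c p) hup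
  rw [dist_comm (u := G.stepToward c p), dist_comm (u := G.stepToward c p)] at hxu
  refine (hT.stepToward_eq_iff ?_ hadj).2 ?_
  · rintro rfl
    simp at hlt
  · rw [dist_comm] at hxp ⊢
    omega

lemma IsTree.two_mul_sum_dist_lt_le [Fintype V] (hT : G.IsTree) (w : V → ℕ) {c x : V}
    (hc : ∑ u, w u * G.dist c u ≤ ∑ u, w u * G.dist x u) (hx : G.Adj c x) :
    2 * ∑ u with G.dist x u < G.dist c u, w u ≤ ∑ u, w u := by
  have hpoint : ∀ u, w u * G.dist x u + 2 * (if G.dist x u < G.dist c u then w u else 0) =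
      w u * G.dist c u + w u := by
    intro u
    rcases hT.dist_eq_dist_add_one_of_adj u hx with h | h <;>
      rw [dist_comm (u := u), dist_comm (u := u)] at h <;>
      split_ifs <;> first | omega | (rw [h]; ring)
  have hsum := Finset.sum_congr rfl fun u (_ : u ∈ univ) => hpoint u
  rw [sum_add_distrib, sum_add_distrib, ← mul_sum, ← sum_filter] at hsum
  omega

lemma IsTree.two_mul_sum_stepToward_le [Fintype V] [DecidableEq V] (hT : G.IsTree) (w : V → ℕ)
    {c u : V} (hc : ∀ y, ∑ v, w v * G.dist c v ≤ ∑ v, w v * G.dist y v) (hcu : c ≠ u) :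
    2 * ∑ v ∈ univ.erase c with G.stepToward c v = G.stepToward c u, w v ≤ ∑ v, w v := by
  obtain ⟨hadj, -⟩ := (hT.connected c u).stepToward_spec hcu
  convert hT.two_mul_sum_dist_lt_le w (hc _) hadj using 3
  ext v
  simp only [mem_filter, mem_erase, mem_univ, and_true, true_and]
  refine ⟨fun ⟨hvc, hv⟩ => (hT.stepToward_eq_iff (Ne.symm hvc) hadj).1 hv, fun hv => ?_⟩
  have hcv : c ≠ v := by rintro rfl; simp at hv
  exact ⟨hcv.symm, (hT.stepToward_eq_iff hcv hadj).2 hv⟩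

def orientAround (G : SimpleGraph V) (c : V) (S : Set V) : V → V → Prop := fun u v =>
  G.Adj u v ∧ (G.dist c v < G.dist c u ∧ u ∈ S ∨ G.dist c u < G.dist c v ∧ v ∉ S)

lemma IsTree.isGraphOrientation_orientAround (hT : G.IsTree) (c : V) (S : Set V) :
    IsGraphOrientation G (G.orientAround c S) := by
  refine ⟨fun u v h => h.1, fun u v huv => ?_⟩
  have := hT.dist_ne_of_adj c huv
  simp only [orientAround, huv, huv.symm, true_and]
  by_cases u ∈ S <;> by_cases v ∈ S <;> simp [*] <;> omega

lemma orientAround_compl (c : V) (S : Set V) :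
    G.orientAround c Sᶜ = Function.swap (G.orientAround c S) := by
  ext u v
  simp only [orientAround, Function.swap, Set.mem_compl_iff, not_not, G.adj_comm u v]
  tauto

def IsUnionOfBranches (G : SimpleGraph V) (c : V) (S : Set V) : Prop :=
  ∀ ⦃u p⦄, G.Adj u p → G.dist c p < G.dist c u → c ≠ p → (p ∈ S ↔ u ∈ S)

lemma IsTree.isUnionOfBranches_filter_stepToward [Fintype V] [DecidableEq V] (hT : G.IsTree)
    (c : V) (A : Finset V) :
    G.IsUnionOfBranches c ((univ.erase c).filter (G.stepToward c · ∈ A) : Finset V) := by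
  intro u p hup hlt hcp
  have hcu : c ≠ u := by rintro rfl; simp at hlt
  simp [hT.stepToward_eq_of_adj hcp hup hlt, hcp.symm, hcu.symm]

variable {c : V} {S : Set V}

lemma reflTransGen_orientAround_of_mem (hG : G.Connected) (hS : G.IsUnionOfBranches c S)
    {u : V} (hu : u ∈ S) : Relation.ReflTransGen (G.orientAround c S) u c := by
  induction hn : G.dist c u using Nat.strong_induction_on generalizing u with
  | _ n ih =>
    subst hn
    by_cases hcu : c = u
    · exact hcu ▸ .refl
    obtain ⟨p, hup, hpc⟩ := (hG.preconnected u c).exists_adj_dist_lt (Ne.symm hcu)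
    rw [dist_comm, dist_comm (u := u)] at hpc
    have hstep : G.orientAround c S u p := ⟨hup, .inl ⟨hpc, hu⟩⟩
    by_cases hcp : c = p
    · exact .single (hcp ▸ hstep)
    · exact .head hstep (ih _ hpc ((hS hup hpc hcp).2 hu) rfl)

lemma reflTransGen_orientAround_of_notMem (hG : G.Connected) (hS : G.IsUnionOfBranches c S)
    {v : V} (hv : v ∉ S) : Relation.ReflTransGen (G.orientAround c S) c v := by
  rw [← Relation.reflTransGen_swap, ← orientAround_compl]
  exact reflTransGen_orientAround_of_mem hG (fun u p hup hlt hcp => (hS hup hlt hcp).not) hv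

lemma reflTransGen_orientAround_of_mem_insert (hG : G.Connected) (hS : G.IsUnionOfBranches c S)
    {u v : V} (hu : u ∈ insert c S) (hv : v ∉ S) :
    Relation.ReflTransGen (G.orientAround c S) u v := by
  refine .trans ?_ (reflTransGen_orientAround_of_notMem hG hS hv)
  rcases hu with rfl | hu
  · exact .refl
  · exact reflTransGen_orientAround_of_mem hG hS hu

end SimpleGraph

lemma Finset.exists_subset_sum_balanced {ι : Type*} [DecidableEq ι] (t : Finset ι) (s : ι → ℕ)
    (M : ℕ) (hs : ∀ i ∈ t, s i ≤ M) :
    ∃ A ⊆ t, ∑ i ∈ t, s i ≤ 2 * ∑ i ∈ A, s i ∧ 2 * ∑ i ∈ A, s i ≤ ∑ i ∈ t, s i + M := by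
  induction t using Finset.induction_on with
  | empty => exact ⟨∅, by simp⟩
  | insert j t hj ih =>
    obtain ⟨A, hAt, hlow, hhigh⟩ := ih fun i hi => hs i (mem_insert_of_mem hi)
    have hsj := hs j (mem_insert_self j t)
    rw [sum_insert hj]
    by_cases hkeep : s j + ∑ i ∈ t, s i ≤ 2 * ∑ i ∈ A, s i
    · exact ⟨A, hAt.trans (subset_insert j t), hkeep, by omega⟩
    · -- swap the two sides and put `j` on the old lighter one
      have hsplit := sum_sdiff hAt (f := s)
      refine ⟨insert j (t \ A), insert_subset_insert j sdiff_subset, ?_⟩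
      rw [sum_insert fun h => hj (mem_sdiff.1 h).1]
      omega

lemma Finset.exists_sum_filter_balanced {α ι : Type*} [DecidableEq ι] (s : Finset α) (f : α → ι)
    (w : α → ℕ) (M : ℕ) (hM : ∀ u ∈ s, ∑ v ∈ s with f v = f u, w v ≤ M) :
    ∃ A : Finset ι, ∑ u ∈ s, w u ≤ 2 * ∑ u ∈ s with f u ∈ A, w u ∧
      2 * ∑ u ∈ s with f u ∈ A, w u ≤ ∑ u ∈ s, w u + M := by
  obtain ⟨A, hA, hbal⟩ := (s.image f).exists_subset_sum_balanced
    (fun i => ∑ u ∈ s with f u = i, w u) M (by simpa using hM)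
  refine ⟨A, ?_⟩
  rwa [sum_fiberwise_eq_sum_filter, sum_fiberwise_eq_sum_filter,
    filter_true_of_mem fun u hu => mem_image_of_mem f hu] at hbal

lemma Nat.mul_self_eq_two_mul_choose_two_add (n : ℕ) : n * n = 2 * n.choose 2 + n := by
  induction n with
  | zero => rfl
  | succ n ih => rw [Nat.choose_succ_succ, Nat.choose_one_right]; linarith

lemma sum_mul_sum_le_Rw_add [Fintype V] [DecidableEq V] (A : V → V → Prop) (w : V → ℕ)
    (X Y : Finset V) (hXY : ∀ x ∈ X, ∀ y ∈ Y, Relation.ReflTransGen A x y) :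
    (∑ x ∈ X, w x) * ∑ y ∈ Y, w y ≤ Rw A w + ∑ v ∈ X ∩ Y, w v := by
  have hdiag : ∑ p ∈ X ×ˢ Y with p.1 = p.2, w p.1 * w p.2 = ∑ v ∈ X ∩ Y, w v * w v := by
    refine sum_nbij' Prod.fst (fun v => (v, v)) ?_ ?_ ?_ ?_ ?_ <;> aesop
  have hoff : ∑ p ∈ X ×ˢ Y with ¬p.1 = p.2, w p.1 * w p.2 ≤
      ∑ p ∈ univ.offDiag, w p.1 * w p.2 * kappa A p.1 p.2 := by
    calc _ = ∑ p ∈ X ×ˢ Y with ¬p.1 = p.2, w p.1 * w p.2 * kappa A p.1 p.2 := by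
          refine sum_congr rfl fun p hp => ?_
          rw [mem_filter, mem_product] at hp
          simp [kappa, hXY _ hp.1.1 _ hp.1.2]
      _ ≤ _ := sum_le_sum_of_subset fun p hp => by simp_all
  have hsq : ∑ v ∈ X ∩ Y, w v * w v ≤ 2 * ∑ v, (w v).choose 2 + ∑ v ∈ X ∩ Y, w v := by
    simp only [Nat.mul_self_eq_two_mul_choose_two_add, sum_add_distrib, ← mul_sum]
    gcongr
    exact subset_univ _
  rw [sum_mul_sum, ← sum_product', ← sum_filter_add_sum_filter_not _ fun p => p.1 = p.2, Rw]
  omega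

lemma sq_le_of_balanced {m a b R : ℕ} (h2 : 2 ≤ m + a + b) (hba : b ≤ a) (hab : a ≤ 3 * b + m)
    (hR : (m + a) * (m + b) ≤ R + m) : (m + a + b) ^ 2 ≤ 49 * R := by
  rcases le_or_gt (m + a + b) (7 * m) with hm | hm <;> nlinarith

/-- Every finite tree with total weight at least 2 has an orientation `D` with
`49 R(D, w) ≥ (∑_v w(v))²`. -/
theorem stmt10 {V : Type*} [Fintype V] [DecidableEq V] (T : SimpleGraph V)
    (hT : T.IsTree) (w : V → ℕ) (hw : 2 ≤ ∑ v, w v) :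
    ∃ D : V → V → Prop, IsGraphOrientation T D ∧ (∑ v, w v) ^ 2 ≤ 49 * Rw D w := by
  have : Nonempty V := hT.connected.nonempty
  obtain ⟨c, hc⟩ := Finite.exists_min fun y => ∑ u, w u * T.dist y u
  have hbranch : ∀ u ∈ univ.erase c,
      ∑ v ∈ univ.erase c with T.stepToward c v = T.stepToward c u, w v ≤ (∑ v, w v) / 2 := by
    intro u hu
    have := hT.two_mul_sum_stepToward_le w hc (ne_of_mem_erase hu).symm
    omega
  obtain ⟨A, hlow, hhigh⟩ := (univ.erase c).exists_sum_filter_balanced (T.stepToward c) w _ hbranch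
  set S := (univ.erase c).filter (T.stepToward c · ∈ A)
  have hS := hT.isUnionOfBranches_filter_stepToward c A
  refine ⟨T.orientAround c S, hT.isGraphOrientation_orientAround c S, ?_⟩
  have hcS : c ∉ S := by simp [S]
  have hR := sum_mul_sum_le_Rw_add _ w (insert c S) Sᶜ fun x hx y hy =>
    SimpleGraph.reflTransGen_orientAround_of_mem_insert hT.connected hS
      (by rwa [← coe_insert, mem_coe]) (by rwa [mem_coe, ← mem_compl])
  rw [insert_inter_of_mem (mem_compl.2 hcS), inter_compl, insert_empty, sum_singleton,
    sum_insert hcS] at hR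
  have hSc := sum_compl_add_sum S w
  have hW := add_sum_erase univ w (mem_univ c)
  have hsplit := sum_filter_add_sum_filter_not (univ.erase c) (T.stepToward c · ∈ A) w
  set W := ∑ v, w v
  set a := ∑ x ∈ S, w x
  set b := ∑ x ∈ univ.erase c with T.stepToward c x ∉ A, w x
  rw [show ∑ y ∈ Sᶜ, w y = w c + b by omega] at hR
  rw [show W = w c + a + b by omega] at hw hhigh ⊢
  exact sq_le_of_balanced hw (by omega) (by omega) hR
end

section
/- Let G = (V, E, A) be a mixed graph on a finite vertex set V whose underlying graph UG(G) is connected and whose undirected edge set E forms a forest (in particular this holds whenever G is an acyclic mixed graph with connected underlying graph), let k = |A| ≥ 1, and let w : V → ℕ be a weight function. Suppose G admits an orientation D₁ with R(D₁,w) ≥ 1. Then there exists an orientation D of G with 196·k²·R(D,w) ≥ (∑_{v∈V} w(v))². -/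
open Finset

variable {V : Type*}

/-- A mixed graph: a set of undirected edges (unordered pairs of distinct vertices)
together with a set of arcs (ordered pairs of distinct vertices). -/
structure MixedGraph (V : Type*) where
  edges : Finset (Sym2 V)
  arcs : Finset (V × V)
  edges_not_diag : ∀ e ∈ edges, ¬ e.IsDiag
  arcs_ne : ∀ a ∈ arcs, a.1 ≠ a.2

namespace MixedGraph

/-- The simple graph formed by the undirected edges of `G`. -/
def edgeGraph (G : MixedGraph V) : SimpleGraph V where
  Adj u v := s(u, v) ∈ G.edges
  symm := by
    constructor
    intro u v h
    rwa [Sym2.eq_swap] at h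
  loopless := by
    constructor
    intro v h
    exact G.edges_not_diag _ h (Sym2.mk_isDiag_iff.mpr rfl)

/-- The underlying graph of `G`: edges plus (forgotten) arcs. -/
def UG (G : MixedGraph V) : SimpleGraph V where
  Adj u v := s(u, v) ∈ G.edges ∨ (u, v) ∈ G.arcs ∨ (v, u) ∈ G.arcs
  symm := by
    constructor
    intro u v h
    rcases h with h | h | h
    · left; rwa [Sym2.eq_swap] at h
    · right; right; exact h
    · right; left; exact h
  loopless := by
    constructor
    intro v h
    rcases h with h | h | h
    · exact G.edges_not_diag _ h (Sym2.mk_isDiag_iff.mpr rfl)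
    · exact G.arcs_ne _ h rfl
    · exact G.arcs_ne _ h rfl

/-- The arc relation of the orientation of `G` determined by the choice `o` of
directions for the undirected edges: all arcs of `G` together with the arcs of `o`. -/
def dig (G : MixedGraph V) (o : V → V → Prop) : V → V → Prop :=
  fun u v => (u, v) ∈ G.arcs ∨ o u v

/-- The set of vertices incident to an arc of `G`. -/
def arcVerts (G : MixedGraph V) : Set V := {v | ∃ a ∈ G.arcs, a.1 = v ∨ a.2 = v}

/-- `G` is dismembered: every undirected component of `G` contains at most one vertex
incident to an arc, or contains exactly two vertices incident to arcs, each of them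
incident to exactly one arc. -/
def Dismembered [DecidableEq V] (G : MixedGraph V) : Prop :=
  ∀ c : G.edgeGraph.ConnectedComponent,
    (c.supp ∩ G.arcVerts).Subsingleton ∨
      ∃ a b : V, a ≠ b ∧ c.supp ∩ G.arcVerts = {a, b} ∧
        (G.arcs.filter fun p => p.1 = a ∨ p.2 = a).card = 1 ∧
        (G.arcs.filter fun p => p.1 = b ∨ p.2 = b).card = 1

/-- The edges of the undirected component `c` of `G`. -/
def compEdges (G : MixedGraph V) (c : G.edgeGraph.ConnectedComponent) :
    Set (Sym2 V) := {e | e ∈ G.edges ∧ ∀ v ∈ e, v ∈ c.supp}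

end MixedGraph

/-- `o` chooses exactly one direction for each edge in `E'`, and relates nothing else.
Orientations of a mixed graph `G` correspond to choices `o` with
`OrientsEdges ↑G.edges o`, the orientation being the digraph `G.dig o`. -/
def OrientsEdges (E' : Set (Sym2 V)) (o : V → V → Prop) : Prop :=
  (∀ u v, o u v → s(u, v) ∈ E') ∧ (∀ u v, s(u, v) ∈ E' → (o u v ↔ ¬ o v u))

/-- The orientation of the undirected component `c` inherited from the
edge-orientation `o`. -/
def inheritO (G : MixedGraph V) (c : G.edgeGraph.ConnectedComponent)
    (o : V → V → Prop) : V → V → Prop :=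
  fun u v => o u v ∧ u ∈ c.supp ∧ v ∈ c.supp

/-- The edge-orientation obtained from `o` by reorienting the edges of the
undirected component `c` according to `oT` (this is `D⟨T'⟩`). -/
def replaceO (G : MixedGraph V) (c : G.edgeGraph.ConnectedComponent)
    (o oT : V → V → Prop) : V → V → Prop :=
  fun u v => (o u v ∧ (u ∉ c.supp ∨ v ∉ c.supp)) ∨ oT u v

/-- `𝒯` is an optimal replacement set for `((G, w), T)` where `T` is the undirected
component `c`. -/
def IsOptReplacementSet [Fintype V] [DecidableEq V] (G : MixedGraph V) (w : V → ℕ)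
    (c : G.edgeGraph.ConnectedComponent) (𝒯 : Set (V → V → Prop)) : Prop :=
  (∀ oT ∈ 𝒯, OrientsEdges (G.compEdges c) oT) ∧
    ∀ o, OrientsEdges (G.edges : Set (Sym2 V)) o →
      ∃ oT ∈ 𝒯, Rw (G.dig o) w ≤ Rw (G.dig (replaceO G c o oT)) w

/-- `𝒯` is a `δ`-optimal replacement set for `((G, w), T)` where `T` is the
undirected component `c`. -/
def IsApproxReplacementSet [Fintype V] [DecidableEq V] (G : MixedGraph V) (w : V → ℕ)
    (c : G.edgeGraph.ConnectedComponent) (δ : ℝ) (𝒯 : Set (V → V → Prop)) : Prop :=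
  (∀ oT ∈ 𝒯, OrientsEdges (G.compEdges c) oT) ∧
    ∀ o, OrientsEdges (G.edges : Set (Sym2 V)) o →
      ∃ oT ∈ 𝒯, (Rw (G.dig o) w : ℝ) - δ * (∑ v, (w v : ℝ)) ^ 2
        ≤ (Rw (G.dig (replaceO G c o oT)) w : ℝ)

/-!
If the total weight `W` is at most `14k`, the given orientation of value at least `1` already
works. Otherwise: the `k` arcs join the components of the forest of undirected edges into a
connected graph, so there are at most `k + 1 ≤ 2k` of them and one component carries weight
`M ≥ W / (2k)`. In it take a weighted centroid `r`, a vertex minimising `∑ₓ w(x) d(x, r)`: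
every branch at `r` then weighs at most `M / 2`, so the branches can be grouped into two sides
`A` and `B` with `4 (w(r) + w(A)) ≥ M` and `4 (w(r) + w(B)) ≥ M`. Orienting the edges of `A`
towards `r` and those of `B` away from `r`, every vertex of `A ∪ {r}` reaches every vertex of
`B ∪ {r}`, so `R + w(r) ≥ (w(r) + w(A)) (w(r) + w(B))`, which gives `49 R ≥ M²` and hence
`196 k² R ≥ 4 k² M² ≥ W²`.
-/

open SimpleGraph Relation

theorem Nat.two_mul_choose_two_add_self (n : ℕ) : 2 * n.choose 2 + n = n * n := by
  induction n with
  | zero => rfl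
  | succ n ih =>
    rw [Nat.choose_succ_succ, Nat.choose_one_right]
    nlinarith [ih]

theorem sq_add_le_of_le_four_mul {M X Y c : ℕ} (hM : 6 ≤ M) (hX : M ≤ 4 * X) (hY : M ≤ 4 * Y)
    (hc : c ≤ X) : M ^ 2 + 49 * c ≤ 49 * (X * Y) := by
  nlinarith [Nat.mul_le_mul hX (Nat.sub_le_sub_right hY 4)]

namespace Finset

variable {ι : Type*}

theorem exists_subset_two_mul_sum_between (s : Finset ι) (f : ι → ℕ) {m : ℕ}
    (hm : ∀ i ∈ s, f i ≤ m) :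
    ∃ t ⊆ s, ∑ i ∈ s, f i ≤ 2 * ∑ i ∈ t, f i ∧
      2 * ∑ i ∈ t, f i ≤ ∑ i ∈ s, f i + 2 * m := by
  classical
  obtain ⟨t, hts, hmin⟩ := exists_minimal_le_of_wellFoundedLT
    (fun t : Finset ι => ∑ i ∈ s, f i ≤ 2 * ∑ i ∈ t, f i) s (by omega)
  refine ⟨t, hts, hmin.prop, ?_⟩
  obtain rfl | ⟨i, hi⟩ := t.eq_empty_or_nonempty
  · have := hmin.prop
    simp only [sum_empty, mul_zero] at this ⊢
    omega
  · have herase := hmin.not_prop_of_lt (erase_ssubset hi)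
    have hsum := add_sum_erase t f hi
    have hfi := hm i (hts hi)
    simp only [not_le] at herase
    omega

theorem exists_subset_le_four_mul_add_sum [DecidableEq ι] (s : Finset ι) (f : ι → ℕ) (c : ℕ)
    (h : ∀ i ∈ s, 2 * f i ≤ ∑ j ∈ s, f j + c) :
    ∃ t ⊆ s, ∑ j ∈ s, f j + c ≤ 4 * (c + ∑ j ∈ t, f j) ∧
      ∑ j ∈ s, f j + c ≤ 4 * (c + ∑ j ∈ s \ t, f j) := by
  by_cases hbig : ∃ i ∈ s, ∑ j ∈ s, f j < 4 * f i
  · obtain ⟨i, hi, hlt⟩ := hbig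
    have hsplit := sum_sdiff (f := f) (singleton_subset_iff.mpr hi)
    have hi2 := h i hi
    refine ⟨{i}, singleton_subset_iff.mpr hi, ?_⟩
    rw [sum_singleton] at hsplit ⊢
    omega
  · push Not at hbig
    obtain ⟨t, hts, ht, ht'⟩ := exists_subset_two_mul_sum_between s f
      (m := (∑ j ∈ s, f j) / 4)
      fun i hi => (Nat.le_div_iff_mul_le (by norm_num)).mpr (by linarith [hbig i hi])
    have hsplit := sum_sdiff (f := f) hts
    refine ⟨t, hts, ?_⟩
    omega

end Finset

theorem reflTransGen_of_descent {α : Type*} {D : α → α → Prop} {P : α → Prop} {r : α}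
    (h : α → ℕ) (hstep : ∀ v, P v → v ≠ r → ∃ z, D v z ∧ h z < h v ∧ (z = r ∨ P z)) {v : α}
    (hv : P v) : ReflTransGen D v r := by
  induction v using (measure h).wf.induction with
  | _ v ih =>
    by_cases hvr : v = r
    · exact hvr ▸ .refl
    obtain ⟨z, hvz, hz, rfl | hz'⟩ := hstep v hv hvr
    · exact .single hvz
    · exact .head hvz (ih z hz hz')

theorem mul_le_Rw_add_of_reflTransGen [Fintype V] [DecidableEq V] {D : V → V → Prop}
    (w : V → ℕ) {r : V} {A B : Finset V} (hrA : r ∉ A) (hrB : r ∉ B) (hAB : Disjoint A B)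
    (hA : ∀ v ∈ A, ReflTransGen D v r) (hB : ∀ v ∈ B, ReflTransGen D r v) :
    (w r + ∑ v ∈ A, w v) * (w r + ∑ v ∈ B, w v) ≤ Rw D w + w r := by
  set P := (insert r A ×ˢ insert r B).erase (r, r)
  have hmemP : ∀ p ∈ P, p.1 ≠ p.2 ∧ ReflTransGen D p.1 p.2 := by
    rintro ⟨x, y⟩ hp
    simp only [P, Finset.mem_erase, Finset.mem_product, Finset.mem_insert, ne_eq,
      Prod.mk.injEq] at hp
    dsimp only
    obtain ⟨hne, rfl | hx, rfl | hy⟩ := hp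
    · exact absurd ⟨rfl, rfl⟩ hne
    · exact ⟨fun h => hrB (h ▸ hy), hB y hy⟩
    · exact ⟨fun h => hrA (h ▸ hx), hA x hx⟩
    · exact ⟨fun h => Finset.disjoint_left.mp hAB hx (h ▸ hy), (hA x hx).trans (hB y hy)⟩
  have hprod : ∑ p ∈ P, w p.1 * w p.2 + w r * w r =
      (w r + ∑ v ∈ A, w v) * (w r + ∑ v ∈ B, w v) := by
    rw [Finset.sum_erase_add _ _ (by simp), Finset.sum_product, ← Finset.sum_mul_sum,
      Finset.sum_insert hrA, Finset.sum_insert hrB]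
  have hoff : ∑ p ∈ P, w p.1 * w p.2 ≤
      ∑ p ∈ Finset.univ.offDiag, w p.1 * w p.2 * kappa D p.1 p.2 :=
    calc ∑ p ∈ P, w p.1 * w p.2 = ∑ p ∈ P, w p.1 * w p.2 * kappa D p.1 p.2 :=
          Finset.sum_congr rfl fun p hp => by simp [kappa, (hmemP p hp).2]
      _ ≤ _ := Finset.sum_le_sum_of_subset fun p hp => by simpa using (hmemP p hp).1
  have hdiag : (w r).choose 2 ≤ ∑ v, (w v).choose 2 :=
    Finset.single_le_sum (f := fun v => (w v).choose 2) (fun _ _ => Nat.zero_le _)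
      (Finset.mem_univ r)
  have := Nat.two_mul_choose_two_add_self (w r)
  unfold Rw
  omega

namespace SimpleGraph

variable {T : SimpleGraph V} {r u v x : V}

theorem Reachable.exists_adj_dist_add_one (h : T.Reachable v r) (hne : v ≠ r) :
    ∃ z, T.Adj v z ∧ T.dist z r + 1 = T.dist v r := by
  obtain ⟨p, hp⟩ := h.exists_walk_length_eq_dist
  cases p with
  | nil => exact absurd rfl hne
  | cons hadj q =>
    refine ⟨_, hadj, ?_⟩
    have hq := dist_le q
    have htri := hadj.reachable.dist_triangle_left r
    rw [dist_eq_one_iff_adj.mpr hadj] at htri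
    rw [Walk.length_cons] at hp
    omega

theorem eq_of_reachable_deleteIncidenceSet (h : (T.deleteIncidenceSet r).Reachable r u) :
    u = r := by
  obtain ⟨p⟩ := h
  cases p with
  | nil => rfl
  | cons hadj _ => exact absurd rfl (deleteIncidenceSet_adj.mp hadj).2.1

theorem Reachable.reachable_deleteIncidenceSet_of_dist_lt (h : T.Reachable x u)
    (hlt : T.dist x u < T.dist x r) : (T.deleteIncidenceSet r).Reachable x u := by
  classical
  obtain ⟨p, hp⟩ := h.exists_walk_length_eq_dist
  by_cases hr : r ∈ p.support
  · have := (dist_le (p.takeUntil r hr)).trans (p.length_takeUntil_le_length hr)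
    omega
  · exact ⟨p.toDeleteEdges _ fun e he hinc => hr (p.mem_support_of_mem_edges he hinc.2)⟩

theorem Reachable.exists_adj_reachable_deleteIncidenceSet (h : T.Reachable x r) (hne : x ≠ r) :
    ∃ u, T.Adj r u ∧ (T.deleteIncidenceSet r).Reachable x u ∧ T.dist x u + 1 = T.dist x r := by
  obtain ⟨u, hru, hu⟩ := h.symm.exists_adj_dist_add_one hne.symm
  rw [dist_comm (u := u), dist_comm (u := r)] at hu
  exact ⟨u, hru, (h.trans hru.reachable).reachable_deleteIncidenceSet_of_dist_lt (by omega), hu⟩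

theorem IsAcyclic.eq_of_adj_of_reachable_deleteIncidenceSet (hT : T.IsAcyclic)
    (hu : T.Adj r u) (hv : T.Adj r v) (h : (T.deleteIncidenceSet r).Reachable v u) : v = u := by
  by_contra hne
  refine isBridge_iff.mp (isAcyclic_iff_forall_adj_isBridge.mp hT hu) ?_
  have hle : T.deleteIncidenceSet r ≤ T.deleteEdges {s(r, u)} :=
    deleteEdges_anti (by simpa [incidenceSet] using hu)
  have hrv : (T.deleteEdges {s(r, u)}).Adj r v := by
    simp [hv, hne, hu.ne]
  exact hrv.reachable.trans (h.mono hle)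

theorem IsAcyclic.dist_add_one_of_reachable_deleteIncidenceSet (hT : T.IsAcyclic)
    (hu : T.Adj r u) (h : (T.deleteIncidenceSet r).Reachable x u) :
    T.dist x u + 1 = T.dist x r := by
  have hxr : x ≠ r := by
    rintro rfl
    exact hu.ne (eq_of_reachable_deleteIncidenceSet h).symm
  obtain ⟨u', hu', hxu', hd⟩ := ((h.mono (deleteIncidenceSet_le _ _)).trans
    hu.symm.reachable).exists_adj_reachable_deleteIncidenceSet hxr
  rwa [← hT.eq_of_adj_of_reachable_deleteIncidenceSet hu hu' (hxu'.symm.trans h)]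

open Classical in
noncomputable def ConnectedComponent.weight [Fintype V] (c : T.ConnectedComponent)
    (w : V → ℕ) : ℕ :=
  ∑ x with x ∈ c.supp, w x

theorem exists_sum_le_card_mul_weight [Fintype V] [Nonempty V] (T : SimpleGraph V)
    (w : V → ℕ) :
    ∃ c : T.ConnectedComponent, ∑ v, w v ≤ Nat.card T.ConnectedComponent * c.weight w := by
  classical
  obtain ⟨c, -, hc⟩ := Finset.exists_max_image Finset.univ
    (fun c : T.ConnectedComponent => c.weight w) Finset.univ_nonempty
  refine ⟨c, ?_⟩
  calc ∑ v, w v = ∑ c' : T.ConnectedComponent, c'.weight w := by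
        simp only [ConnectedComponent.weight, ConnectedComponent.mem_supp_iff]
        exact (Finset.sum_fiberwise _ _ _).symm
    _ ≤ ∑ _c' : T.ConnectedComponent, c.weight w :=
        Finset.sum_le_sum fun c' _ => hc c' (Finset.mem_univ _)
    _ = _ := by simp [Nat.card_eq_fintype_card]

open Classical in
theorem IsAcyclic.exists_centroid [Fintype V] (hT : T.IsAcyclic) (w : V → ℕ)
    (c : T.ConnectedComponent) :
    ∃ r ∈ c.supp, ∀ v ∈ c.supp, v ≠ r →
      2 * ∑ x with (T.deleteIncidenceSet r).Reachable x v, w x ≤ c.weight w := by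
  obtain ⟨r, hr, hmin⟩ := Set.exists_min_image c.supp (fun y => ∑ x, w x * T.dist x y)
    c.supp.toFinite c.nonempty_supp
  refine ⟨r, hr, fun v hv hvr => ?_⟩
  obtain ⟨u, hru, hvu, -⟩ :=
    (c.reachable_of_mem_supp hv hr).exists_adj_reachable_deleteIncidenceSet hvr
  have hu : u ∈ c.supp := c.mem_supp_of_adj_mem_supp hr hru
  -- Moving from `r` to `u` shortens the distances from the branch of `v` by one and
  -- lengthens the others by at most one.
  have hstep : ∀ x, w x * T.dist x u +
      2 * (if (T.deleteIncidenceSet r).Reachable x v then w x else 0) ≤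
      w x * T.dist x r + (if x ∈ c.supp then w x else 0) := by
    intro x
    split_ifs with hxv hxc hxc
    · have := hT.dist_add_one_of_reachable_deleteIncidenceSet hru (hxv.trans hvu)
      nlinarith
    · exact absurd
        ((ConnectedComponent.sound (hxv.mono (deleteIncidenceSet_le _ _))).trans hv) hxc
    · have := hru.reachable.dist_triangle_right x
      rw [dist_eq_one_iff_adj.mpr hru] at this
      nlinarith
    · rw [dist_eq_zero_of_not_reachable fun hxu => hxc ((ConnectedComponent.sound hxu).trans hu)]
      simp
  have hsum := Finset.sum_le_sum fun x (_ : x ∈ Finset.univ) => hstep x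
  simp only [Finset.sum_add_distrib, ← Finset.mul_sum, ← Finset.sum_filter] at hsum
  have := hmin u hu
  unfold ConnectedComponent.weight
  omega

/-- A union of branches of `T` at `r`, i.e. of connected components of `T - r` inside the
component of `r`. -/
def IsBranchUnion (T : SimpleGraph V) (r : V) (A : Finset V) : Prop :=
  ∀ v ∈ A, v ≠ r ∧ T.Reachable v r ∧ ∀ z, T.Adj v z → z ≠ r → z ∈ A

theorem IsBranchUnion.notMem {A : Finset V} (hA : T.IsBranchUnion r A) : r ∉ A :=
  fun hr => (hA r hr).1 rfl

theorem IsBranchUnion.reflTransGen {A : Finset V} {D : V → V → Prop}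
    (hA : T.IsBranchUnion r A)
    (hD : ∀ v ∈ A, ∀ z, T.Adj v z → z = r ∨ z ∈ A → T.dist z r < T.dist v r → D v z)
    (hv : v ∈ A) : ReflTransGen D v r := by
  refine reflTransGen_of_descent (T.dist · r) (fun v hv hvr => ?_) hv
  obtain ⟨-, hvr', hclosed⟩ := hA v hv
  obtain ⟨z, hvz, hz⟩ := hvr'.exists_adj_dist_add_one hvr
  have hzA : z = r ∨ z ∈ A := or_iff_not_imp_left.mpr (hclosed z hvz)
  exact ⟨z, hD v hv z hvz hzA (by omega), by omega, hzA⟩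

open Classical in
theorem IsAcyclic.exists_isBranchUnion_split [Fintype V] (hT : T.IsAcyclic) (w : V → ℕ)
    (c : T.ConnectedComponent) :
    ∃ r, ∃ A B : Finset V, Disjoint A B ∧ T.IsBranchUnion r A ∧ T.IsBranchUnion r B ∧
      c.weight w ≤ 4 * (w r + ∑ x ∈ A, w x) ∧ c.weight w ≤ 4 * (w r + ∑ x ∈ B, w x) := by
  obtain ⟨r, hr, hcent⟩ := hT.exists_centroid w c
  let mk := (T.deleteIncidenceSet r).connectedComponentMk
  let S : Finset V := ({x | x ∈ c.supp} : Finset V).erase r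
  let ω K := ∑ x ∈ S with mk x = K, w x
  have hM : c.weight w = ∑ x ∈ S, w x + w r :=
    (Finset.sum_erase_add _ _ (by simpa using hr)).symm
  have hSω : ∑ K ∈ S.image mk, ω K = ∑ x ∈ S, w x :=
    Finset.sum_fiberwise_of_maps_to (fun x hx => Finset.mem_image_of_mem mk hx) w
  have hω : ∀ K ∈ S.image mk, 2 * ω K ≤ ∑ K ∈ S.image mk, ω K + w r := by
    intro K hK
    obtain ⟨v, hv, rfl⟩ := Finset.mem_image.mp hK
    simp only [S, Finset.mem_erase, Finset.mem_filter, Finset.mem_univ, true_and] at hv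
    rw [hSω, ← hM]
    refine le_trans ?_ (hcent v hv.2 hv.1)
    gcongr 2 * ?_
    refine Finset.sum_le_sum_of_subset fun x hx => ?_
    simp only [Finset.mem_filter, Finset.mem_univ, true_and] at hx ⊢
    exact ConnectedComponent.exact hx.2
  obtain ⟨t, hts, ht, ht'⟩ := Finset.exists_subset_le_four_mul_add_sum _ ω (w r) hω
  have hunion : ∀ τ : Finset _, T.IsBranchUnion r (S.filter (mk · ∈ τ)) := by
    intro τ v hv
    simp only [S, Finset.mem_filter, Finset.mem_erase, Finset.mem_univ, true_and] at hv
    refine ⟨hv.1.1, c.reachable_of_mem_supp hv.1.2 hr, fun z hvz hzr => ?_⟩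
    have : mk z = mk v :=
      ConnectedComponent.sound (deleteIncidenceSet_adj.mpr ⟨hvz.symm, hzr, hv.1.1⟩).reachable
    simp only [S, Finset.mem_filter, Finset.mem_erase, Finset.mem_univ, true_and, this]
    exact ⟨⟨hzr, c.mem_supp_of_adj_mem_supp hv.1.2 hvz⟩, hv.2⟩
  refine ⟨r, S.filter (mk · ∈ t), S.filter (mk · ∈ S.image mk \ t),
    Finset.disjoint_filter.mpr fun _ _ h h' => (Finset.mem_sdiff.mp h').2 h, hunion _, hunion _,
    ?_, ?_⟩
  · have hA : ∑ K ∈ t, ω K = _ := Finset.sum_fiberwise_eq_sum_filter S t mk w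
    omega
  · have hB : ∑ K ∈ S.image mk \ t, ω K = _ := Finset.sum_fiberwise_eq_sum_filter S _ mk w
    omega

end SimpleGraph

namespace MixedGraph

theorem card_connectedComponent_edgeGraph_le [Finite V] (G : MixedGraph V)
    (hconn : G.UG.Connected) : Nat.card G.edgeGraph.ConnectedComponent ≤ G.arcs.card + 1 := by
  classical
  let mk := G.edgeGraph.connectedComponentMk
  let H : SimpleGraph G.edgeGraph.ConnectedComponent :=
    fromRel fun C D => ∃ p ∈ G.arcs, mk p.1 = C ∧ mk p.2 = D
  have hstep : ∀ u v, G.UG.Adj u v → ReflTransGen H.Adj (mk u) (mk v) := by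
    rintro u v (huv | huv | huv)
    · rw [show mk u = mk v from ConnectedComponent.sound (Adj.reachable (G := G.edgeGraph) huv)]
    · by_cases h : mk u = mk v
      · rw [h]
      · exact .single ⟨h, Or.inl ⟨_, huv, rfl, rfl⟩⟩
    · by_cases h : mk u = mk v
      · rw [h]
      · exact .single ⟨h, Or.inr ⟨_, huv, rfl, rfl⟩⟩
  have hH : H.Connected := by
    have : Nonempty G.edgeGraph.ConnectedComponent := ⟨mk hconn.nonempty.some⟩
    refine ⟨fun C D => ?_⟩
    induction C using ConnectedComponent.ind with | h u =>
    induction D using ConnectedComponent.ind with | h v =>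
    exact (reachable_iff_reflTransGen _ _).mpr (ReflTransGen.lift' mk hstep _ _
      ((reachable_iff_reflTransGen _ _).mp (hconn.preconnected u v)))
  have hedges : H.edgeSet ⊆ ↑(G.arcs.image fun p => s(mk p.1, mk p.2)) := by
    rintro ⟨C, D⟩ ⟨-, ⟨p, hp, rfl, rfl⟩ | ⟨p, hp, rfl, rfl⟩⟩
    · exact Finset.mem_image_of_mem _ hp
    · exact Finset.mem_image.mpr ⟨p, hp, Sym2.eq_swap⟩
  calc Nat.card G.edgeGraph.ConnectedComponent ≤ Nat.card H.edgeSet + 1 :=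
        hH.card_vert_le_card_edgeSet_add_one
    _ ≤ G.arcs.card + 1 := by
      rw [Nat.card_coe_set_eq]
      gcongr
      exact (Set.ncard_le_ncard hedges (Finset.finite_toSet _)).trans
        ((Set.ncard_coe_finset _).trans_le Finset.card_image_le)

def downhill {α : Type*} [LT α] (G : MixedGraph V) (f : V → α) (u v : V) : Prop :=
  s(u, v) ∈ G.edges ∧ f v < f u

theorem orientsEdges_downhill {α : Type*} [LinearOrder α] (G : MixedGraph V) {f : V → α}
    (hf : Function.Injective f) : OrientsEdges (G.edges : Set (Sym2 V)) (G.downhill f) := by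
  refine ⟨fun u v h => h.1, fun u v huv => ?_⟩
  have hne : f u ≠ f v := hf.ne fun h => G.edges_not_diag _ huv (Sym2.mk_isDiag_iff.mpr h)
  rw [Finset.mem_coe] at huv
  simp only [downhill, huv, Sym2.eq_swap (a := v), true_and, not_lt]
  exact ⟨le_of_lt, fun h => lt_of_le_of_ne h hne.symm⟩

theorem exists_orientsEdges_reflTransGen [Fintype V] (G : MixedGraph V) {r : V}
    {A B : Finset V} (hAB : Disjoint A B) (hA : G.edgeGraph.IsBranchUnion r A)
    (hB : G.edgeGraph.IsBranchUnion r B) :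
    ∃ o, OrientsEdges (G.edges : Set (Sym2 V)) o ∧ (∀ v ∈ A, ReflTransGen (G.dig o) v r) ∧
      ∀ v ∈ B, ReflTransGen (G.dig o) r v := by
  classical
  set T := G.edgeGraph
  let g x : ℤ := if x ∈ A then T.dist x r else if x ∈ B then -T.dist x r else 0
  -- the second coordinate only breaks ties, so that every edge is oriented
  let f x := toLex (g x, Fintype.equivFin V x)
  have hf : Function.Injective f := fun x y h =>
    (Fintype.equivFin V).injective (Prod.ext_iff.mp (toLex.injective h)).2
  have hgA : ∀ z, z = r ∨ z ∈ A → g z = T.dist z r := by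
    rintro z (rfl | hz)
    · simp [g, hA.notMem, hB.notMem]
    · simp [g, hz]
  have hgB : ∀ z, z = r ∨ z ∈ B → g z = -T.dist z r := by
    rintro z (rfl | hz)
    · simp [g, hA.notMem, hB.notMem]
    · simp [g, hz, Finset.disjoint_right.mp hAB hz]
  refine ⟨G.downhill f, G.orientsEdges_downhill hf, fun v hv => ?_, fun v hv => ?_⟩
  · refine hA.reflTransGen (fun v hv z hvz hz hlt => Or.inr ⟨hvz, ?_⟩) hv
    refine Prod.Lex.toLex_lt_toLex.mpr (Or.inl ?_)
    rw [hgA z hz, hgA v (Or.inr hv)]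
    omega
  · refine reflTransGen_swap.mp (hB.reflTransGen (fun v hv z hvz hz hlt => ?_) hv)
    refine Or.inr ⟨hvz.symm, Prod.Lex.toLex_lt_toLex.mpr (Or.inl ?_)⟩
    rw [hgB z hz, hgB v (Or.inr hv)]
    omega

theorem exists_orientsEdges_sq_le [Fintype V] [DecidableEq V] (G : MixedGraph V)
    (hT : G.edgeGraph.IsAcyclic) (w : V → ℕ) (c : G.edgeGraph.ConnectedComponent)
    (hc : 6 ≤ c.weight w) :
    ∃ o, OrientsEdges (G.edges : Set (Sym2 V)) o ∧ c.weight w ^ 2 ≤ 49 * Rw (G.dig o) w := by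
  obtain ⟨r, A, B, hAB, hA, hB, hMA, hMB⟩ := hT.exists_isBranchUnion_split w c
  obtain ⟨o, ho, hAr, hrB⟩ := G.exists_orientsEdges_reflTransGen hAB hA hB
  have hR := mul_le_Rw_add_of_reflTransGen w hA.notMem hB.notMem hAB hAr hrB
  have := sq_add_le_of_le_four_mul hc hMA hMB (Nat.le_add_right (w r) _)
  exact ⟨o, ho, by nlinarith⟩

end MixedGraph

/-- For a mixed graph with connected underlying graph whose undirected edges form a
forest, with `k = |A| ≥ 1`, admitting an orientation of positive value, there is an
orientation `D` with `196 k² R(D, w) ≥ (∑_v w(v))²`. -/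
theorem stmt11 {V : Type*} [Fintype V] [DecidableEq V] (G : MixedGraph V)
    (hconn : G.UG.Connected) (hforest : G.edgeGraph.IsAcyclic)
    (hk : 1 ≤ G.arcs.card) (w : V → ℕ)
    (h1 : ∃ o, OrientsEdges (G.edges : Set (Sym2 V)) o ∧ 1 ≤ Rw (G.dig o) w) :
    ∃ o, OrientsEdges (G.edges : Set (Sym2 V)) o ∧
      (∑ v, w v) ^ 2 ≤ 196 * G.arcs.card ^ 2 * Rw (G.dig o) w := by
  obtain ⟨o₁, ho₁, hR₁⟩ := h1
  set k := G.arcs.card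
  by_cases hsmall : ∑ v, w v ≤ 14 * k
  · refine ⟨o₁, ho₁, ?_⟩
    calc (∑ v, w v) ^ 2 ≤ (14 * k) ^ 2 := by gcongr
      _ ≤ 196 * k ^ 2 * Rw (G.dig o₁) w := by nlinarith
  have := hconn.nonempty
  obtain ⟨c, hc⟩ := G.edgeGraph.exists_sum_le_card_mul_weight w
  set M := c.weight w
  have hWM : ∑ v, w v ≤ (k + 1) * M :=
    hc.trans (Nat.mul_le_mul_right M (G.card_connectedComponent_edgeGraph_le hconn))
  have hM : 6 ≤ M := by
    by_contra! hM
    nlinarith [Nat.mul_le_mul_left (k + 1) (Nat.le_of_lt_succ hM)]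
  obtain ⟨o, ho, hR⟩ := G.exists_orientsEdges_sq_le hforest w c hM
  refine ⟨o, ho, ?_⟩
  calc (∑ v, w v) ^ 2 ≤ (2 * k * M) ^ 2 := by gcongr; nlinarith
    _ = 4 * k ^ 2 * M ^ 2 := by ring
    _ ≤ 196 * k ^ 2 * Rw (G.dig o) w := by nlinarith
end

section
/- Let ε > 0 be a real number, let G = (V, E, A) be a mixed graph on a finite vertex set V whose underlying graph UG(G) is connected and whose undirected edge set E forms a forest, let k = |A| ≥ 1, and let w : V → ℕ. Let D₀ be an orientation of G such that R(D₀,w) ≥ R(D,w) − (ε/(196·k²))·(∑_{v∈V} w(v))² holds (as an inequality of real numbers) for every orientation D of G. Then D₀ is (1−ε)-optimal for (G,w), i.e. R(D₀,w) ≥ (1−ε)·R(D,w) for every orientation D of G. -/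
open Finset

variable {V : Type*}

/-!
An additive error `δ (∑ w)²` becomes a relative error `ε` as soon as some orientation has
`R ≥ (∑ w)² / (196 k²)`. When `∑ w ≤ 14 k` the additive error is at most `ε` and `R` is an
integer, so nothing more is needed. Otherwise, since the `k` arcs meet every component of the
undirected edges, some component `T` has weight `W ≥ (∑ w) / (2k)`. Take a breadth-first
spanning tree of `T`. Either a vertex carries weight at least `W / 7` and all tree edges point
to it, or a deepest vertex `v` whose subtree carries at least `3W / 7` has children whose
subtrees together carry between `W / 7` and `4W / 7`: orient those subtrees towards `v` and all
other tree edges away from `v`. Every pair between the two sides is then reachable, so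
`R ≥ W² / 49`. The remaining edges may be oriented arbitrarily, since adding arcs never
decreases `R`.
-/

namespace SimpleGraph

variable {F : SimpleGraph V} {r x y z : V}

lemma Reachable.exists_adj_dist_add_one_s12 (hr : F.Reachable x r) (hx : x ≠ r) :
    ∃ y, F.Adj x y ∧ F.dist y r + 1 = F.dist x r := by
  obtain ⟨p, -, hp⟩ := hr.exists_path_of_dist
  obtain ⟨y, hxy, q, rfl⟩ := Walk.exists_eq_cons_of_ne hx p
  have h₁ : F.dist y r ≤ q.length := dist_le q
  have h₂ := hxy.reachable.dist_triangle_left r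
  rw [dist_eq_one_iff_adj.mpr hxy] at h₂
  rw [Walk.length_cons] at hp
  exact ⟨y, hxy, by omega⟩

open Classical in
/-- The parent of `x` in a breadth-first spanning tree of the component of `r`. -/
noncomputable def parent (F : SimpleGraph V) (r x : V) : V :=
  if h : F.Reachable x r ∧ x ≠ r then (h.1.exists_adj_dist_add_one_s12 h.2).choose else x

def IsParent (F : SimpleGraph V) (r x y : V) : Prop :=
  F.Reachable x r ∧ x ≠ r ∧ y = F.parent r x

def InSubtree (F : SimpleGraph V) (r : V) : V → V → Prop :=
  Relation.ReflTransGen (F.IsParent r)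

lemma isParent_parent (hr : F.Reachable x r) (hx : x ≠ r) : F.IsParent r x (F.parent r x) :=
  ⟨hr, hx, rfl⟩

namespace IsParent

lemma adj (h : F.IsParent r x y) : F.Adj x y := by
  obtain ⟨hr, hx, rfl⟩ := h
  rw [parent, dif_pos ⟨hr, hx⟩]
  exact (hr.exists_adj_dist_add_one_s12 hx).choose_spec.1

lemma dist_add_one (h : F.IsParent r x y) : F.dist y r + 1 = F.dist x r := by
  obtain ⟨hr, hx, rfl⟩ := h
  rw [parent, dif_pos ⟨hr, hx⟩]
  exact (hr.exists_adj_dist_add_one_s12 hx).choose_spec.2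

lemma reachable (h : F.IsParent r x y) : F.Reachable y r :=
  h.adj.symm.reachable.trans h.1

lemma unique (h : F.IsParent r x y) (h' : F.IsParent r x z) : y = z :=
  h.2.2.trans h'.2.2.symm

end IsParent

namespace InSubtree

lemma dist_le (h : F.InSubtree r x y) : F.dist y r ≤ F.dist x r := by
  induction h with
  | refl => rfl
  | tail _ hp ih => have := hp.dist_add_one; omega

lemma reachable (h : F.InSubtree r x y) : F.Reachable x y := by
  induction h with
  | refl => rfl
  | tail _ hp ih => exact ih.trans hp.adj.reachable

lemma total (hy : F.InSubtree r x y) (hz : F.InSubtree r x z) :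
    F.InSubtree r y z ∨ F.InSubtree r z y := by
  induction hy using Relation.ReflTransGen.head_induction_on generalizing z with
  | refl => exact Or.inl hz
  | head hxx' hx'y ih =>
    rcases hz.cases_head with rfl | ⟨x'', hxx'', hx''z⟩
    · exact Or.inr (.head hxx' hx'y)
    · exact ih (hxx'.unique hxx'' ▸ hx''z)

end InSubtree

lemma Reachable.inSubtree_root {x : V} (h : F.Reachable x r) : F.InSubtree r x r := by
  by_cases hx : x = r
  · exact hx ▸ .refl
  have hp := isParent_parent h hx
  exact .head hp (Reachable.inSubtree_root hp.reachable)
termination_by F.dist x r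
decreasing_by have := hp.dist_add_one; omega

def treeOrient (F : SimpleGraph V) (r : V) (up : Set V) (x y : V) : Prop :=
  (F.IsParent r x y ∧ x ∈ up) ∨ (F.IsParent r y x ∧ y ∉ up)

namespace treeOrient

variable {up : Set V}

lemma adj (h : F.treeOrient r up x y) : F.Adj x y := by
  rcases h with ⟨h, -⟩ | ⟨h, -⟩
  exacts [h.adj, h.adj.symm]

lemma asymm (h : F.treeOrient r up x y) : ¬ F.treeOrient r up y x := by
  rcases h with ⟨hxy, hx⟩ | ⟨hyx, hy⟩ <;> rintro (⟨hyx', hy'⟩ | ⟨hxy', hx'⟩)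
  · have := hxy.dist_add_one; have := hyx'.dist_add_one; omega
  · exact hx' hx
  · exact hy hy'
  · have := hxy'.dist_add_one; have := hyx.dist_add_one; omega

end treeOrient

lemma InSubtree.reflTransGen_treeOrient {up : Set V} (h : F.InSubtree r x y)
    (hup : ∀ z, F.InSubtree r x z → F.InSubtree r z y → z ≠ y → z ∈ up) :
    Relation.ReflTransGen (F.treeOrient r up) x y := by
  induction h using Relation.ReflTransGen.head_induction_on with
  | refl => exact .refl
  | @head a c hac hcy ih =>
    have hne : a ≠ y := by
      rintro rfl; have := hac.dist_add_one; have := InSubtree.dist_le hcy; omega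
    exact .head (Or.inl ⟨hac, hup a .refl (.head hac hcy) hne⟩)
      (ih fun z h₁ h₂ h₃ => hup z (.head hac h₁) h₂ h₃)

lemma reflTransGen_treeOrient_of_notMem {X : Set V} {v b : V}
    (hX : ∀ z z', F.IsParent r z z' → z' ∈ X → z ∈ X)
    (hv : F.Reachable v r) (hb : F.Reachable b r) (hbX : b ∉ X) :
    Relation.ReflTransGen (F.treeOrient r (X ∪ {z | F.InSubtree r v z})) v b := by
  by_cases hvb : F.InSubtree r v b
  · exact hvb.reflTransGen_treeOrient fun z hz _ _ => Or.inr hz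
  have hbr : b ≠ r := by rintro rfl; exact hvb hv.inSubtree_root
  have hp := isParent_parent hb hbr
  exact (reflTransGen_treeOrient_of_notMem hX hv hp.reachable fun h => hbX (hX _ _ hp h)).tail
    (Or.inr ⟨hp, by rintro (h | h); exacts [hbX h, hvb h]⟩)
termination_by F.dist b r
decreasing_by have := hp.dist_add_one; omega

section Finite

variable [Fintype V]

open Classical in
noncomputable def subtree (F : SimpleGraph V) (r v : V) : Finset V :=
  univ.filter (F.InSubtree r · v)

open Classical in
noncomputable def children (F : SimpleGraph V) (r v : V) : Finset V :=
  univ.filter (F.IsParent r · v)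

@[simp] lemma mem_subtree : x ∈ F.subtree r y ↔ F.InSubtree r x y := by
  simp [subtree]

@[simp] lemma mem_children : x ∈ F.children r y ↔ F.IsParent r x y := by
  simp [children]

lemma subtree_eq_insert_biUnion [DecidableEq V] (v : V) :
    F.subtree r v = insert v ((F.children r v).biUnion (F.subtree r)) := by
  ext u
  simp only [mem_insert, mem_biUnion, mem_subtree, mem_children]
  constructor
  · intro h
    rcases h.cases_tail with rfl | ⟨c, huc, hcv⟩
    · exact Or.inl rfl
    · exact Or.inr ⟨c, hcv, huc⟩
  · rintro (rfl | ⟨c, hcv, huc⟩)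
    exacts [.refl, huc.tail hcv]

lemma notMem_biUnion_subtree_children [DecidableEq V] (v : V) :
    v ∉ (F.children r v).biUnion (F.subtree r) := by
  simp only [mem_biUnion, mem_children, mem_subtree, not_exists, not_and]
  intro c hcv hvc
  have := hcv.dist_add_one
  have := InSubtree.dist_le hvc
  omega

lemma pairwiseDisjoint_subtree_children [DecidableEq V] (v : V) :
    (F.children r v : Set V).PairwiseDisjoint (F.subtree r) := by
  have hsib : ∀ {c c'}, F.IsParent r c v → F.IsParent r c' v → F.InSubtree r c c' → c = c' := by
    intro c c' hc hc' h
    rcases h.cases_head with h | ⟨d, hcd, hdc'⟩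
    · exact h
    · have := hc'.dist_add_one
      have := InSubtree.dist_le (hc.unique hcd ▸ hdc' : F.InSubtree r v c')
      omega
  intro c hc c' hc' hne
  rw [Function.onFun, Finset.disjoint_left]
  intro u hu hu'
  simp only [mem_coe, mem_children, mem_subtree] at hc hc' hu hu'
  rcases InSubtree.total hu hu' with h | h
  exacts [hne (hsib hc hc' h), hne (hsib hc' hc h).symm]

lemma sum_subtree [DecidableEq V] {M : Type*} [AddCommMonoid M] (f : V → M) (v : V) :
    ∑ u ∈ F.subtree r v, f u = f v + ∑ c ∈ F.children r v, ∑ u ∈ F.subtree r c, f u := by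
  rw [subtree_eq_insert_biUnion v, sum_insert (notMem_biUnion_subtree_children v),
    sum_biUnion (pairwiseDisjoint_subtree_children v)]

lemma exists_le_sum_subtree_of_children_lt {M : Type*} [AddCommMonoid M] [LinearOrder M]
    (f : V → M) {t : M} (ht : t ≤ ∑ u ∈ F.subtree r r, f u) :
    ∃ v, F.Reachable v r ∧ t ≤ ∑ u ∈ F.subtree r v, f u ∧
      ∀ c ∈ F.children r v, ∑ u ∈ F.subtree r c, f u < t := by
  classical
  obtain ⟨v, hv, hmax⟩ :=
    (univ.filter fun v => F.Reachable v r ∧ t ≤ ∑ u ∈ F.subtree r v, f u).exists_max_image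
      (F.dist · r) ⟨r, by simpa using ht⟩
  simp only [mem_filter, mem_univ, true_and, and_imp] at hv hmax
  refine ⟨v, hv.1, hv.2, fun c hc => ?_⟩
  rw [mem_children] at hc
  by_contra! h
  have := hmax c (hc.1) h
  have := hc.dist_add_one
  omega

lemma reflTransGen_treeOrient_of_mem_biUnion [DecidableEq V] {v a b : V} {P : Finset V}
    (hP : P ⊆ F.children r v) (hv : F.Reachable v r) (ha : a ∈ P.biUnion (F.subtree r))
    (hb : F.Reachable b r) (hb' : b ∉ P.biUnion (F.subtree r)) :
    Relation.ReflTransGen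
      (F.treeOrient r (↑(P.biUnion (F.subtree r)) ∪ {z | F.InSubtree r v z})) a b := by
  have hdown := reflTransGen_treeOrient_of_notMem (X := ↑(P.biUnion (F.subtree r)))
    (fun z z' hzz' hz' => by
      simp only [coe_biUnion, mem_coe, mem_subtree, Set.mem_iUnion] at hz' ⊢
      obtain ⟨c, hc, h⟩ := hz'
      exact ⟨c, hc, .head hzz' h⟩) hv hb hb'
  refine .trans ?_ hdown
  simp only [mem_biUnion, mem_subtree] at ha
  obtain ⟨c, hcP, hac⟩ := ha
  have hcv : F.IsParent r c v := mem_children.mp (hP hcP)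
  refine InSubtree.reflTransGen_treeOrient (hac.tail hcv) fun z haz _ _ => ?_
  rcases InSubtree.total haz hac with hzc | hcz
  · exact Or.inl (mem_biUnion.mpr ⟨c, hcP, mem_subtree.mpr hzc⟩)
  · rcases hcz.cases_head with rfl | ⟨d, hcd, hdz⟩
    · exact Or.inl (mem_biUnion.mpr ⟨_, hcP, mem_subtree.mpr .refl⟩)
    · exact Or.inr (hcv.unique hcd ▸ hdz)

end Finite

end SimpleGraph

lemma exists_orientsEdges_of_asymm {E' : Set (Sym2 V)} (hE' : ∀ e ∈ E', ¬ e.IsDiag)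
    {p : V → V → Prop} (hpE : ∀ u v, p u v → s(u, v) ∈ E') (hp : ∀ u v, p u v → ¬ p v u) :
    ∃ o, OrientsEdges E' o ∧ ∀ u v, p u v → o u v := by
  refine ⟨fun u v => s(u, v) ∈ E' ∧ (p u v ∨ ¬ p v u ∧ WellOrderingRel u v),
    ⟨fun u v h => h.1, fun u v huv => ?_⟩, fun u v h => ⟨hpE u v h, Or.inl h⟩⟩
  have hvu : s(v, u) ∈ E' := Sym2.eq_swap ▸ huv
  have hne : u ≠ v := fun h => hE' _ huv (by simp [h])
  have := hp u v
  have := hp v u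
  have : WellOrderingRel u v → ¬ WellOrderingRel v u := fun h h' => asymm h h'
  rcases trichotomous_of WellOrderingRel u v with h | h | h <;> tauto

section Rw

variable [Fintype V] [DecidableEq V]

lemma Rw_mono {A B : V → V → Prop} (h : ∀ u v, A u v → B u v) (w : V → ℕ) :
    Rw A w ≤ Rw B w := by
  unfold Rw kappa
  gcongr with p
  split_ifs with hA hB
  exacts [le_rfl, absurd (Relation.ReflTransGen.mono h _ _ hA) hB, zero_le_one, le_rfl]

lemma le_Rw_of_reflTransGen (D : V → V → Prop) (w : V → ℕ) (v : V) {A B : Finset V}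
    (hAB : Disjoint A B) (hreach : ∀ a ∈ A, ∀ b ∈ B, Relation.ReflTransGen D a b) :
    2 * (w v).choose 2 + (∑ a ∈ A, w a) * ∑ b ∈ B, w b ≤ Rw D w := by
  unfold Rw
  gcongr ?_ + ?_
  · exact Nat.mul_le_mul_left 2
      (single_le_sum (f := fun v => (w v).choose 2) (fun _ _ => Nat.zero_le _) (mem_univ v))
  · rw [sum_mul_sum, ← sum_product']
    calc ∑ p ∈ A ×ˢ B, w p.1 * w p.2
        = ∑ p ∈ A ×ˢ B, w p.1 * w p.2 * kappa D p.1 p.2 := by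
          refine sum_congr rfl fun p hp => ?_
          rw [mem_product] at hp
          rw [kappa, if_pos (hreach _ hp.1 _ hp.2), mul_one]
      _ ≤ _ := by
          refine sum_le_sum_of_subset fun p hp => ?_
          rw [mem_product] at hp
          exact mem_offDiag.mpr ⟨mem_univ _, mem_univ _,
            fun h => Finset.disjoint_left.mp hAB hp.1 (h ▸ hp.2)⟩

end Rw

lemma Finset.exists_subset_le_sum_le_add {ι : Type*} {s : Finset ι} {f : ι → ℕ} {a b : ℕ}
    (hf : ∀ i ∈ s, f i ≤ b) (ha : a ≤ ∑ i ∈ s, f i) :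
    ∃ t ⊆ s, a ≤ ∑ i ∈ t, f i ∧ ∑ i ∈ t, f i ≤ a + b := by
  classical
  induction s using Finset.induction_on with
  | empty => exact ⟨∅, subset_rfl, ha, by simp⟩
  | insert i s hi ih =>
    by_cases hs : a ≤ ∑ j ∈ s, f j
    · obtain ⟨t, hts, ht⟩ := ih (fun j hj => hf j (mem_insert_of_mem hj)) hs
      exact ⟨t, hts.trans (subset_insert _ _), ht⟩
    · refine ⟨insert i s, subset_rfl, ha, ?_⟩
      rw [sum_insert hi]
      have := hf i (mem_insert_self i s)
      omega

namespace SimpleGraph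

variable [Fintype V] [DecidableEq V] {F : SimpleGraph V}

open Classical in
lemma sq_sum_le_Rw_treeOrient_of_le_mul {r₀ r : V} (w : V → ℕ) (hr : F.Reachable r r₀)
    (h2 : 2 ≤ ∑ v ∈ univ.filter (F.Reachable · r₀), w v)
    (h7 : ∑ v ∈ univ.filter (F.Reachable · r₀), w v ≤ 7 * w r) :
    (∑ v ∈ univ.filter (F.Reachable · r₀), w v) ^ 2 ≤ 49 * Rw (F.treeOrient r Set.univ) w := by
  set S := univ.filter (F.Reachable · r₀)
  have hrS : r ∈ S := by simpa [S] using hr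
  have hR := le_Rw_of_reflTransGen (F.treeOrient r Set.univ) w r (A := S.erase r) (B := {r})
    (by simp) fun a ha b hb => by
      rw [mem_singleton] at hb
      subst hb
      have haS : F.Reachable a r₀ := by simpa [S] using mem_of_mem_erase ha
      exact (haS.trans hr.symm).inSubtree_root.reflTransGen_treeOrient fun _ _ _ _ => trivial
  rw [sum_singleton, Nat.choose_two_right, Nat.mul_div_cancel' (Nat.even_mul_pred_self _).two_dvd]
    at hR
  have hsplit := add_sum_erase S w hrS
  obtain ⟨m, hm⟩ : ∃ m, w r = m + 1 := ⟨w r - 1, by omega⟩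
  rw [hm, Nat.add_sub_cancel] at hR
  rw [← hsplit, hm] at h2 h7 ⊢
  nlinarith

open Classical in
lemma exists_sq_sum_le_Rw_treeOrient_of_mul_lt {r₀ : V} (w : V → ℕ)
    (hlight : ∀ v, F.Reachable v r₀ → 7 * w v < ∑ u ∈ univ.filter (F.Reachable · r₀), w u) :
    ∃ up, (∑ v ∈ univ.filter (F.Reachable · r₀), w v) ^ 2 ≤ 49 * Rw (F.treeOrient r₀ up) w := by
  set S := univ.filter (F.Reachable · r₀)
  set W := ∑ v ∈ S, w v
  have hS : F.subtree r₀ r₀ = S := by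
    ext v
    simpa [S] using ⟨InSubtree.reachable, Reachable.inSubtree_root⟩
  obtain ⟨v, hv, hvW, hc⟩ := F.exists_le_sum_subtree_of_children_lt (fun u => 7 * w u)
    (t := 3 * W) (by rw [hS, ← mul_sum]; omega)
  have hCh : W ≤ ∑ c ∈ F.children r₀ v, ∑ u ∈ F.subtree r₀ c, 7 * w u := by
    have := hlight v hv
    rw [sum_subtree] at hvW
    omega
  obtain ⟨P, hP, hPlo, hPhi⟩ := exists_subset_le_sum_le_add (fun c hc' => (hc c hc').le) hCh
  set A := P.biUnion (F.subtree r₀)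
  have hA : ∑ u ∈ A, 7 * w u = ∑ c ∈ P, ∑ u ∈ F.subtree r₀ c, 7 * w u :=
    sum_biUnion ((pairwiseDisjoint_subtree_children v).subset (by exact_mod_cast hP))
  rw [← hA, ← mul_sum] at hPlo hPhi
  have hAS : A ⊆ S := fun a ha => by
    obtain ⟨c, hcP, hac⟩ := mem_biUnion.mp ha
    simpa [S] using (mem_subtree.mp hac).reachable.trans (mem_children.mp (hP hcP)).1
  refine ⟨↑A ∪ {z | F.InSubtree r₀ v z}, ?_⟩
  have hR := le_Rw_of_reflTransGen _ w v (disjoint_sdiff (s := A) (t := S)) fun a ha b hb => by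
    have hb' := mem_sdiff.mp hb
    exact reflTransGen_treeOrient_of_mem_biUnion hP hv ha (by simpa [S] using hb'.1) hb'.2
  have hsplit : ∑ u ∈ S \ A, w u + ∑ u ∈ A, w u = W := sum_sdiff hAS
  calc W ^ 2 ≤ 49 * ((∑ a ∈ A, w a) * ∑ b ∈ S \ A, w b) := by nlinarith
    _ ≤ 49 * Rw _ w := Nat.mul_le_mul_left 49 ((Nat.le_add_left _ _).trans hR)

open Classical in
lemma exists_sq_sum_le_Rw_treeOrient (w : V → ℕ) (r₀ : V)
    (h2 : 2 ≤ ∑ v ∈ univ.filter (F.Reachable · r₀), w v) :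
    ∃ r up, (∑ v ∈ univ.filter (F.Reachable · r₀), w v) ^ 2 ≤ 49 * Rw (F.treeOrient r up) w := by
  by_cases h : ∃ r, F.Reachable r r₀ ∧ ∑ v ∈ univ.filter (F.Reachable · r₀), w v ≤ 7 * w r
  · obtain ⟨r, hr, h7⟩ := h
    exact ⟨r, _, sq_sum_le_Rw_treeOrient_of_le_mul w hr h2 h7⟩
  · push Not at h
    exact ⟨r₀, exists_sq_sum_le_Rw_treeOrient_of_mul_lt w h⟩

end SimpleGraph

namespace MixedGraph

variable [Fintype V] [DecidableEq V] (G : MixedGraph V)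

lemma exists_orientsEdges_Rw_le (w : V → ℕ) {p : V → V → Prop}
    (hpE : ∀ u v, p u v → G.edgeGraph.Adj u v) (hp : ∀ u v, p u v → ¬ p v u) :
    ∃ o, OrientsEdges (G.edges : Set (Sym2 V)) o ∧ Rw p w ≤ Rw (G.dig o) w := by
  obtain ⟨o, ho, hpo⟩ := exists_orientsEdges_of_asymm (E' := G.edges) G.edges_not_diag hpE hp
  exact ⟨o, ho, Rw_mono (fun u v h => Or.inr (hpo u v h)) w⟩

lemma exists_reachable_mem_arc_ends (hconn : G.UG.Connected) {a : V × V} (ha : a ∈ G.arcs)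
    (v : V) : ∃ u ∈ G.arcs.image Prod.fst ∪ G.arcs.image Prod.snd, G.edgeGraph.Reachable v u := by
  by_cases hva : G.edgeGraph.Reachable v a.1
  · exact ⟨a.1, mem_union_left _ (mem_image_of_mem _ ha), hva⟩
  obtain ⟨p⟩ := hconn.preconnected v a.1
  obtain ⟨d, -, hd₁, hd₂⟩ :=
    p.exists_boundary_dart {x | G.edgeGraph.Reachable v x} (SimpleGraph.Reachable.refl v) hva
  refine ⟨d.fst, ?_, hd₁⟩
  rcases d.adj with hE | hA | hA
  · exact absurd (hd₁.trans (SimpleGraph.Adj.reachable (G := G.edgeGraph) hE)) hd₂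
  · exact mem_union_left _ (mem_image_of_mem Prod.fst hA)
  · exact mem_union_right _ (mem_image_of_mem Prod.snd hA)

open Classical in
lemma exists_sum_le_two_mul_card_mul_sum_reachable (hconn : G.UG.Connected)
    (hk : G.arcs.Nonempty) (w : V → ℕ) :
    ∃ u, ∑ v, w v ≤ 2 * G.arcs.card * ∑ v ∈ univ.filter (G.edgeGraph.Reachable · u), w v := by
  have hE : (G.arcs.image Prod.fst ∪ G.arcs.image Prod.snd).card ≤ 2 * G.arcs.card :=
    (card_union_le _ _).trans (by rw [two_mul]; exact add_le_add card_image_le card_image_le)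
  set E := G.arcs.image Prod.fst ∪ G.arcs.image Prod.snd
  obtain ⟨a, ha⟩ := hk
  have hcover : ∑ v, w v ≤ ∑ e ∈ E, ∑ v ∈ univ.filter (G.edgeGraph.Reachable · e), w v := by
    simp only [sum_filter]
    rw [sum_comm]
    refine sum_le_sum fun v _ => ?_
    obtain ⟨e, he, hve⟩ := G.exists_reachable_mem_arc_ends hconn ha v
    simpa [hve] using single_le_sum (f := fun e => if G.edgeGraph.Reachable v e then w v else 0)
      (fun _ _ => Nat.zero_le _) he
  obtain ⟨e, -, he⟩ := exists_le_of_sum_le ⟨a.1, mem_union_left _ (mem_image_of_mem _ ha)⟩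
    (f := fun _ => ∑ v, w v)
    (g := fun e => E.card * ∑ v ∈ univ.filter (G.edgeGraph.Reachable · e), w v)
    (by rw [sum_const, smul_eq_mul, ← mul_sum]; exact Nat.mul_le_mul_left _ hcover)
  exact ⟨e, he.trans (Nat.mul_le_mul_right _ hE)⟩

open Classical in
lemma exists_orientsEdges_sq_sum_le (hconn : G.UG.Connected) (hk : 1 ≤ G.arcs.card)
    (w : V → ℕ) (hW : 14 * G.arcs.card + 1 ≤ ∑ v, w v) :
    ∃ o, OrientsEdges (G.edges : Set (Sym2 V)) o ∧
      (∑ v, w v) ^ 2 ≤ 196 * G.arcs.card ^ 2 * Rw (G.dig o) w := by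
  obtain ⟨u, hu⟩ := G.exists_sum_le_two_mul_card_mul_sum_reachable hconn (card_pos.mp hk) w
  set k := G.arcs.card
  set Wu := ∑ v ∈ univ.filter (G.edgeGraph.Reachable · u), w v
  have h2 : 2 ≤ Wu := by nlinarith
  obtain ⟨r, up, hR⟩ := G.edgeGraph.exists_sq_sum_le_Rw_treeOrient w u h2
  obtain ⟨o, ho, hRo⟩ := G.exists_orientsEdges_Rw_le w (p := G.edgeGraph.treeOrient r up)
    (fun _ _ h => h.adj) fun _ _ h => h.asymm
  refine ⟨o, ho, ?_⟩
  calc (∑ v, w v) ^ 2 ≤ (2 * k * Wu) ^ 2 := Nat.pow_le_pow_left hu 2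
    _ = 4 * k ^ 2 * Wu ^ 2 := by ring
    _ ≤ 4 * k ^ 2 * (49 * Rw (G.dig o) w) := by
      gcongr; exact hR.trans (Nat.mul_le_mul_left 49 hRo)
    _ = 196 * k ^ 2 * Rw (G.dig o) w := by ring

end MixedGraph

lemma one_sub_mul_le_of_sub_le {x x₀ y δ ε : ℝ} (hε : 0 ≤ ε) (hx : 0 ≤ x) (hx₀ : 0 ≤ x₀)
    (hδ : δ ≤ ε * y) (hxδ : x - δ ≤ x₀) (hyδ : y - δ ≤ x₀) : (1 - ε) * x ≤ x₀ := by
  rcases le_total x y with hxy | hyx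
  · rcases le_total ε 1 with hε1 | hε1
    · nlinarith [mul_le_mul_of_nonneg_left hxy (sub_nonneg.2 hε1)]
    · nlinarith [mul_nonneg (sub_nonneg.2 hε1) hx]
  · nlinarith [mul_le_mul_of_nonneg_left hyx hε]

lemma one_sub_mul_natCast_le_of_sub_le {n : ℕ} {x₀ δ ε : ℝ} (hε : 0 ≤ ε) (hx₀ : 0 ≤ x₀)
    (hδ : δ ≤ ε) (h : n - δ ≤ x₀) : (1 - ε) * n ≤ x₀ := by
  rcases n.eq_zero_or_pos with rfl | hn
  · simpa using hx₀
  · have : (1 : ℝ) ≤ n := by exact_mod_cast hn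
    nlinarith

theorem stmt12_general {V : Type*} [Fintype V] [DecidableEq V] (ε : ℝ) (hε : 0 < ε)
    (G : MixedGraph V) (hconn : G.UG.Connected)
    (hk : 1 ≤ G.arcs.card) (w : V → ℕ)
    (o₀ : V → V → Prop)
    (hopt : ∀ o, OrientsEdges (G.edges : Set (Sym2 V)) o →
      (Rw (G.dig o) w : ℝ) - ε / (196 * (G.arcs.card : ℝ) ^ 2) * (∑ v, (w v : ℝ)) ^ 2
        ≤ (Rw (G.dig o₀) w : ℝ)) :
    ∀ o, OrientsEdges (G.edges : Set (Sym2 V)) o →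
      (1 - ε) * (Rw (G.dig o) w : ℝ) ≤ (Rw (G.dig o₀) w : ℝ) := by
  intro o ho
  have hK : (0 : ℝ) < 196 * (G.arcs.card : ℝ) ^ 2 := by
    have : (1 : ℝ) ≤ G.arcs.card := by exact_mod_cast hk
    positivity
  have hW : ∑ v, (w v : ℝ) = ((∑ v, w v : ℕ) : ℝ) := by push_cast; rfl
  rw [hW, div_mul_eq_mul_div] at hopt
  rcases le_or_gt (14 * G.arcs.card + 1) (∑ v, w v) with hbig | hsmall
  · obtain ⟨o', ho', hsq⟩ := G.exists_orientsEdges_sq_sum_le hconn hk w hbig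
    refine one_sub_mul_le_of_sub_le hε.le (Nat.cast_nonneg _) (Nat.cast_nonneg _) ?_
      (hopt o ho) (hopt o' ho')
    rw [div_le_iff₀ hK]
    have : ((∑ v, w v : ℕ) : ℝ) ^ 2 ≤ 196 * (G.arcs.card : ℝ) ^ 2 * Rw (G.dig o') w := by
      exact_mod_cast hsq
    nlinarith
  · refine one_sub_mul_natCast_le_of_sub_le hε.le (Nat.cast_nonneg _) ?_ (hopt o ho)
    rw [div_le_iff₀ hK]
    have : ((∑ v, w v : ℕ) : ℝ) ^ 2 ≤ 196 * (G.arcs.card : ℝ) ^ 2 := by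
      have hle : ∑ v, w v ≤ 14 * G.arcs.card := by omega
      exact_mod_cast (Nat.pow_le_pow_left hle 2).trans_eq (by ring)
    nlinarith

/-- If `D₀` is an orientation of `G` within additive error `(ε/(196 k²)) (∑ w)²`
of every orientation, then `D₀` is `(1 − ε)`-optimal, for any connected mixed graph
whose undirected edges form a forest and with `k = |A| ≥ 1`. -/
theorem stmt12 {V : Type*} [Fintype V] [DecidableEq V] (ε : ℝ) (hε : 0 < ε)
    (G : MixedGraph V) (hconn : G.UG.Connected) (hforest : G.edgeGraph.IsAcyclic)
    (hk : 1 ≤ G.arcs.card) (w : V → ℕ)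
    (o₀ : V → V → Prop) (ho₀ : OrientsEdges (G.edges : Set (Sym2 V)) o₀)
    (hopt : ∀ o, OrientsEdges (G.edges : Set (Sym2 V)) o →
      (Rw (G.dig o) w : ℝ) - ε / (196 * (G.arcs.card : ℝ) ^ 2) * (∑ v, (w v : ℝ)) ^ 2
        ≤ (Rw (G.dig o₀) w : ℝ)) :
    ∀ o, OrientsEdges (G.edges : Set (Sym2 V)) o →
      (1 - ε) * (Rw (G.dig o) w : ℝ) ≤ (Rw (G.dig o₀) w : ℝ) :=
  stmt12_general ε hε G hconn hk w o₀ hopt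
end

section
/- Let G = (V, E, A) be a mixed graph on a finite vertex set with weight function w : V → ℕ, let T₁, …, T_q be the undirected components of G, and for each i ∈ {1,…,q} let 𝒯_i be an optimal replacement set for ((G,w), T_i). Then there exists an orientation D of G that is optimal for (G,w) (i.e. R(D,w) ≥ R(D',w) for every orientation D' of G) and such that for each i ∈ {1,…,q}, the orientation of T_i inherited from D (the digraph on V(T_i) orienting each edge of T_i as in D) belongs to 𝒯_i. -/
/-!
Start from any optimal orientation and fix the undirected components one at a time.
Replacing the orientation of a component `T` by a suitable member of its optimal
replacement set does not decrease `R`, so optimality survives, and it changes no edge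
outside `T`, so the components already fixed keep their inherited orientations.
-/

open Finset

variable {V : Type*}

namespace MixedGraph

variable {G : MixedGraph V}

lemma mem_supp_iff_of_mem_edges (c : G.edgeGraph.ConnectedComponent) {u v : V}
    (h : s(u, v) ∈ G.edges) : u ∈ c.supp ↔ v ∈ c.supp := by
  simp only [SimpleGraph.ConnectedComponent.mem_supp_iff,
    SimpleGraph.ConnectedComponent.connectedComponentMk_eq_of_adj (G := G.edgeGraph) h]

lemma notMem_supp_of_ne {c c' : G.edgeGraph.ConnectedComponent} (hne : c' ≠ c) {u : V}
    (hu : u ∈ c'.supp) : u ∉ c.supp := fun hc =>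
  hne (((c'.mem_supp_iff u).1 hu).symm.trans ((c.mem_supp_iff u).1 hc))

lemma mem_compEdges_of_mem_supp {c : G.edgeGraph.ConnectedComponent} {u v : V}
    (he : s(u, v) ∈ G.edges) (hu : u ∈ c.supp) : s(u, v) ∈ G.compEdges c := by
  refine ⟨he, fun x hx => ?_⟩
  rcases Sym2.mem_iff.1 hx with rfl | rfl
  · exact hu
  · exact (mem_supp_iff_of_mem_edges c he).1 hu

def IsOptimalOrientation [Fintype V] [DecidableEq V] (G : MixedGraph V) (w : V → ℕ)
    (o : V → V → Prop) : Prop :=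
  OrientsEdges (G.edges : Set (Sym2 V)) o ∧
    ∀ o', OrientsEdges (G.edges : Set (Sym2 V)) o' → Rw (G.dig o') w ≤ Rw (G.dig o) w

end MixedGraph

open MixedGraph

lemma exists_orientsEdges {E' : Set (Sym2 V)} (hE' : ∀ e ∈ E', ¬ e.IsDiag) :
    ∃ o, OrientsEdges E' o := by
  let f := embeddingToCardinal (α := V)
  refine ⟨fun u v => s(u, v) ∈ E' ∧ f u < f v, fun u v h => h.1, fun u v he => ?_⟩
  have hne : f u ≠ f v := fun h => hE' _ he (Sym2.mk_isDiag_iff.2 (f.injective h))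
  have he' : s(v, u) ∈ E' := Sym2.eq_swap (a := u) ▸ he
  simp only [he, he', true_and, not_lt]
  exact ⟨le_of_lt, fun h => lt_of_le_of_ne h hne⟩

lemma OrientsEdges.mem_supp {G : MixedGraph V} {c : G.edgeGraph.ConnectedComponent}
    {oT : V → V → Prop} (hoT : OrientsEdges (G.compEdges c) oT) {u v : V} (h : oT u v) :
    u ∈ c.supp ∧ v ∈ c.supp :=
  ⟨(hoT.1 u v h).2 u (Sym2.mem_mk_left u v), (hoT.1 u v h).2 v (Sym2.mem_mk_right u v)⟩

section Replace

variable {G : MixedGraph V} {c : G.edgeGraph.ConnectedComponent} {o oT : V → V → Prop}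

lemma replaceO_iff_of_mem_supp {u v : V}
    (hu : u ∈ c.supp) (hv : v ∈ c.supp) : replaceO G c o oT u v ↔ oT u v := by
  simp [replaceO, hu, hv]

lemma replaceO_iff_of_notMem_supp (hoT : OrientsEdges (G.compEdges c) oT) {u v : V}
    (h : u ∉ c.supp ∨ v ∉ c.supp) : replaceO G c o oT u v ↔ o u v := by
  refine ⟨?_, fun huv => Or.inl ⟨huv, h⟩⟩
  rintro (⟨huv, _⟩ | huv)
  · exact huv
  · have := hoT.mem_supp huv
    tauto

lemma orientsEdges_replaceO (ho : OrientsEdges (G.edges : Set (Sym2 V)) o)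
    (hoT : OrientsEdges (G.compEdges c) oT) :
    OrientsEdges (G.edges : Set (Sym2 V)) (replaceO G c o oT) := by
  refine ⟨?_, fun u v (he : s(u, v) ∈ G.edges) => ?_⟩
  · rintro u v (⟨h, _⟩ | h)
    exacts [ho.1 u v h, (hoT.1 u v h).1]
  by_cases hu : u ∈ c.supp
  · have hv := (mem_supp_iff_of_mem_edges c he).1 hu
    rw [replaceO_iff_of_mem_supp hu hv, replaceO_iff_of_mem_supp hv hu]
    exact hoT.2 u v (mem_compEdges_of_mem_supp he hu)
  · rw [replaceO_iff_of_notMem_supp hoT (Or.inl hu),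
      replaceO_iff_of_notMem_supp hoT (Or.inr hu)]
    exact ho.2 u v he

lemma inheritO_replaceO_self (hoT : OrientsEdges (G.compEdges c) oT) :
    inheritO G c (replaceO G c o oT) = oT := by
  funext u v
  apply propext
  refine ⟨fun ⟨h, hu, hv⟩ => (replaceO_iff_of_mem_supp hu hv).1 h, fun h => ?_⟩
  obtain ⟨hu, hv⟩ := hoT.mem_supp h
  exact ⟨Or.inr h, hu, hv⟩

lemma inheritO_replaceO_of_ne {c' : G.edgeGraph.ConnectedComponent} (hne : c' ≠ c)
    (hoT : OrientsEdges (G.compEdges c) oT) :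
    inheritO G c' (replaceO G c o oT) = inheritO G c' o := by
  funext u v
  apply propext
  refine and_congr_left fun ⟨hu, _⟩ => ?_
  exact replaceO_iff_of_notMem_supp hoT (Or.inl (notMem_supp_of_ne hne hu))

end Replace

section Optimal

variable [Fintype V] [DecidableEq V] {G : MixedGraph V} {w : V → ℕ}

lemma exists_isOptimalOrientation (G : MixedGraph V) (w : V → ℕ) :
    ∃ o, G.IsOptimalOrientation w o := by
  obtain ⟨o, ho, hmax⟩ := Set.exists_max_image {o | OrientsEdges (G.edges : Set (Sym2 V)) o}
    (fun o => Rw (G.dig o) w) (Set.toFinite _) (exists_orientsEdges G.edges_not_diag)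
  exact ⟨o, ho, hmax⟩

lemma IsOptReplacementSet.exists_isOptimalOrientation_inheritO_mem
    {c : G.edgeGraph.ConnectedComponent} {𝒯 : Set (V → V → Prop)}
    (h𝒯 : IsOptReplacementSet G w c 𝒯) {o : V → V → Prop} (ho : G.IsOptimalOrientation w o) :
    ∃ o', G.IsOptimalOrientation w o' ∧ inheritO G c o' ∈ 𝒯 ∧
      ∀ c' ≠ c, inheritO G c' o' = inheritO G c' o := by
  obtain ⟨oT, hoT𝒯, hle⟩ := h𝒯.2 o ho.1
  have hoT := h𝒯.1 oT hoT𝒯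
  refine ⟨replaceO G c o oT, ⟨orientsEdges_replaceO ho.1 hoT, fun o' ho' =>
    (ho.2 o' ho').trans hle⟩, ?_, fun c' hne => inheritO_replaceO_of_ne hne hoT⟩
  rwa [inheritO_replaceO_self hoT]

end Optimal

/-- Given an optimal replacement set `𝒯 c` for every undirected component `c` of a
mixed graph `(G, w)`, there is an optimal orientation of `G` whose inherited
orientation on each undirected component `c` belongs to `𝒯 c`. -/
theorem stmt13 {V : Type*} [Fintype V] [DecidableEq V] (G : MixedGraph V) (w : V → ℕ)
    (𝒯 : ∀ _ : G.edgeGraph.ConnectedComponent, Set (V → V → Prop))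
    (h𝒯 : ∀ c, IsOptReplacementSet G w c (𝒯 c)) :
    ∃ o, OrientsEdges (G.edges : Set (Sym2 V)) o ∧
      (∀ o', OrientsEdges (G.edges : Set (Sym2 V)) o' →
        Rw (G.dig o') w ≤ Rw (G.dig o) w) ∧
      ∀ c : G.edgeGraph.ConnectedComponent, inheritO G c o ∈ 𝒯 c := by
  classical
  have : Fintype G.edgeGraph.ConnectedComponent := Fintype.ofFinite _
  suffices ∀ s : Finset G.edgeGraph.ConnectedComponent,
      ∃ o, G.IsOptimalOrientation w o ∧ ∀ c ∈ s, inheritO G c o ∈ 𝒯 c by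
    obtain ⟨o, ho, hs⟩ := this Finset.univ
    exact ⟨o, ho.1, ho.2, fun c => hs c (Finset.mem_univ c)⟩
  intro s
  induction s using Finset.induction_on with
  | empty =>
    obtain ⟨o, ho⟩ := exists_isOptimalOrientation G w
    exact ⟨o, ho, by simp⟩
  | insert c s hc ih =>
    obtain ⟨o, ho, hs⟩ := ih
    obtain ⟨o', ho', hc𝒯, hother⟩ := (h𝒯 c).exists_isOptimalOrientation_inheritO_mem ho
    refine ⟨o', ho', Finset.forall_mem_insert _ _ _ |>.2 ⟨hc𝒯, fun c' hc' => ?_⟩⟩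
    rw [hother c' (ne_of_mem_of_not_mem hc' hc)]
    exact hs c' hc'
end
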